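/- arXiv:math/0601767 — 9 statements merged into one kernel-verified Lean document; each statement's English description precedes it below -/
import Mathlib

section
/- For every generic set X of n ≥ 2 points in ℝ², the number span₂(X) of edges of the rectangle graph G_r(X) satisfies span₂(X) ≤ ⌊n²/4 + n − 2⌋. -/
open scoped Classical

/-- A finite planar point set is generic if no two distinct points share a coordinate. -/
def Generic (X : Finset (ℝ × ℝ)) : Prop :=
  ∀ p ∈ X, ∀ q ∈ X, p ≠ q → p.1 ≠ q.1 ∧ p.2 ≠ q.2

/-- `p` and `q` span an empty rectangle w.r.t. `X`: no point of `X` lies in the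
open interior of the axis-aligned rectangle spanned by `p` and `q`. -/
def SpansEmptyRect (X : Finset (ℝ × ℝ)) (p q : ℝ × ℝ) : Prop :=
  ∀ z ∈ X, ¬ (min p.1 q.1 < z.1 ∧ z.1 < max p.1 q.1 ∧
              min p.2 q.2 < z.2 ∧ z.2 < max p.2 q.2)

/-- Number of edges of the rectangle graph `G_r(X)`: the number of 2-element
subsets of `X` whose two points span an empty rectangle. -/
noncomputable def span2 (X : Finset (ℝ × ℝ)) : ℕ :=
  ((X.powersetCard 2).filter
    (fun A => ∀ p ∈ A, ∀ q ∈ A, p ≠ q → SpansEmptyRect X p q)).card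

namespace Span2Proof

/-- The set of neighbors of `p` in the rectangle graph on `X`. -/
noncomputable def nbr (X : Finset (ℝ × ℝ)) (p : ℝ × ℝ) : Finset (ℝ × ℝ) :=
  X.filter fun q => q ≠ p ∧ SpansEmptyRect X p q

lemma mem_nbr {X : Finset (ℝ × ℝ)} {p q : ℝ × ℝ} :
    q ∈ nbr X p ↔ q ∈ X ∧ q ≠ p ∧ SpansEmptyRect X p q := by
  simp [nbr]

lemma nbr_subset (X : Finset (ℝ × ℝ)) (p : ℝ × ℝ) : nbr X p ⊆ X :=
  Finset.filter_subset _ _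

lemma ser_symm {X : Finset (ℝ × ℝ)} {p q : ℝ × ℝ}
    (h : SpansEmptyRect X p q) : SpansEmptyRect X q p := by
  intro z hz hc
  exact h z hz
    (by rwa [min_comm q.1 p.1, max_comm q.1 p.1, min_comm q.2 p.2, max_comm q.2 p.2] at hc)

lemma ser_mono {X Y : Finset (ℝ × ℝ)} (hYX : Y ⊆ X) {p q : ℝ × ℝ}
    (h : SpansEmptyRect X p q) : SpansEmptyRect Y p q :=
  fun z hz => h z (hYX hz)

lemma ne_of_fst_lt {p q : ℝ × ℝ} (h : p.1 < q.1) : p ≠ q := by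
  intro he; subst he; exact lt_irrefl _ h

/-- If `z` (strictly left of the topmost point `t`) is adjacent to `t`, then every
point of `X` strictly between them in `x`-coordinate lies strictly below `z`. -/
lemma adjtop_left {X : Finset (ℝ × ℝ)} {t z k : ℝ × ℝ}
    (htop : ∀ p ∈ X, p ≠ t → p.2 < t.2)
    (hz : z ∈ X) (hzx : z.1 < t.1) (hser : SpansEmptyRect X t z)
    (hk : k ∈ X) (hkt : k ≠ t) (hk1 : z.1 < k.1) (hk2 : k.1 < t.1)
    (hky : k.2 ≠ z.2) : k.2 < z.2 := by
  have hz2 : z.2 < t.2 := htop z hz (ne_of_fst_lt hzx)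
  have hkt2 : k.2 < t.2 := htop k hk hkt
  have h := hser k hk
  rw [min_eq_right hzx.le, max_eq_left hzx.le, min_eq_right hz2.le, max_eq_left hz2.le] at h
  push_neg at h
  rcases lt_or_gt_of_ne hky with h' | h'
  · exact h'
  · exact absurd hkt2 (not_lt.mpr (h hk1 hk2 h'))

/-- Mirror image of `adjtop_left`. -/
lemma adjtop_right {X : Finset (ℝ × ℝ)} {t z k : ℝ × ℝ}
    (htop : ∀ p ∈ X, p ≠ t → p.2 < t.2)
    (hz : z ∈ X) (hzx : t.1 < z.1) (hser : SpansEmptyRect X t z)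
    (hk : k ∈ X) (hkt : k ≠ t) (hk1 : t.1 < k.1) (hk2 : k.1 < z.1)
    (hky : k.2 ≠ z.2) : k.2 < z.2 := by
  have hz2 : z.2 < t.2 := htop z hz (ne_of_fst_lt hzx).symm
  have hkt2 : k.2 < t.2 := htop k hk hkt
  have h := hser k hk
  rw [min_eq_left hzx.le, max_eq_right hzx.le, min_eq_right hz2.le, max_eq_left hz2.le] at h
  push_neg at h
  rcases lt_or_gt_of_ne hky with h' | h'
  · exact h'
  · exact absurd hkt2 (not_lt.mpr (h hk1 hk2 h'))

section Key

variable {X : Finset (ℝ × ℝ)} {t v z z' : ℝ × ℝ}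

/-- Two common neighbors of `t` (topmost) and `v` (right `x`-neighbor of `t`) which are
both strictly to the right of `v` are impossible. -/
lemma pairRR (hgen : Generic X)
    (htop : ∀ p ∈ X, p ≠ t → p.2 < t.2) (ht : t ∈ X) (hv : v ∈ X) (hvx : t.1 < v.1)
    (hz : z ∈ X) (hz' : z' ∈ X) (h1 : v.1 < z.1) (h2 : z.1 < z'.1)
    (hzt : SpansEmptyRect X t z) (hz't : SpansEmptyRect X t z')
    (hvz' : SpansEmptyRect X v z') : False := by
  have hv2z : v.2 < z.2 :=
    adjtop_right htop hz (hvx.trans h1) hzt hv (ne_of_fst_lt hvx).symm hvx h1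
      ((hgen v hv z hz (ne_of_fst_lt h1)).2)
  have hz2z' : z.2 < z'.2 :=
    adjtop_right htop hz' ((hvx.trans h1).trans h2) hz't hz
      (ne_of_fst_lt (hvx.trans h1)).symm (hvx.trans h1) h2
      ((hgen z hz z' hz' (ne_of_fst_lt h2)).2)
  have hvz'2 : v.2 < z'.2 := hv2z.trans hz2z'
  have h := hvz' z hz
  rw [min_eq_left (h1.trans h2).le, max_eq_right (h1.trans h2).le,
      min_eq_left hvz'2.le, max_eq_right hvz'2.le] at h
  exact h ⟨h1, h2, hv2z, hz2z'⟩

/-- Two common neighbors of `t` and `v` (right neighbor) to the left of `t` are impossible. -/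
lemma pairLL (hgen : Generic X)
    (htop : ∀ p ∈ X, p ≠ t → p.2 < t.2) (ht : t ∈ X) (hv : v ∈ X) (hvx : t.1 < v.1)
    (H : ∀ w ∈ X, w ≠ t → w.1 < t.1 → SpansEmptyRect X t w → v.2 < w.2)
    (hz : z ∈ X) (hz' : z' ∈ X) (h1 : z.1 < z'.1) (h2 : z'.1 < t.1)
    (hzt : SpansEmptyRect X t z) (hz't : SpansEmptyRect X t z')
    (hvz : SpansEmptyRect X v z) : False := by
  have hzx : z.1 < t.1 := h1.trans h2
  have hv2z : v.2 < z.2 := H z hz (ne_of_fst_lt hzx) hzx hzt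
  have hv2z' : v.2 < z'.2 := H z' hz' (ne_of_fst_lt h2) h2 hz't
  have hz'z : z'.2 < z.2 :=
    adjtop_left htop hz hzx hzt hz' (ne_of_fst_lt h2) h1 h2
      ((hgen z' hz' z hz (ne_of_fst_lt h1).symm).2)
  have h := hvz z' hz'
  have hzv1 : z.1 < v.1 := hzx.trans hvx
  rw [min_eq_right hzv1.le, max_eq_left hzv1.le, min_eq_left hv2z.le, max_eq_right hv2z.le] at h
  exact h ⟨h1, h2.trans hvx, hv2z', hz'z⟩

/-- Mirror: two common neighbors of `t` and `v` (left neighbor) left of `v`. -/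
lemma pairLL' (hgen : Generic X)
    (htop : ∀ p ∈ X, p ≠ t → p.2 < t.2) (ht : t ∈ X) (hv : v ∈ X) (hvx : v.1 < t.1)
    (hz : z ∈ X) (hz' : z' ∈ X) (h1 : z.1 < z'.1) (h2 : z'.1 < v.1)
    (hzt : SpansEmptyRect X t z) (hz't : SpansEmptyRect X t z')
    (hvz : SpansEmptyRect X v z) : False := by
  have hzx : z.1 < t.1 := (h1.trans h2).trans hvx
  have hz'x : z'.1 < t.1 := h2.trans hvx
  have hz'z : z'.2 < z.2 :=
    adjtop_left htop hz hzx hzt hz' (ne_of_fst_lt hz'x) h1 hz'x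
      ((hgen z' hz' z hz (ne_of_fst_lt h1).symm).2)
  have hv2z : v.2 < z.2 :=
    adjtop_left htop hz hzx hzt hv (ne_of_fst_lt hvx) (h1.trans h2) hvx
      ((hgen v hv z hz (ne_of_fst_lt (h1.trans h2)).symm).2)
  have hv2z' : v.2 < z'.2 :=
    adjtop_left htop hz' hz'x hz't hv (ne_of_fst_lt hvx) h2 hvx
      ((hgen v hv z' hz' (ne_of_fst_lt h2).symm).2)
  have h := hvz z' hz'
  have hzv1 : z.1 < v.1 := h1.trans h2
  rw [min_eq_right hzv1.le, max_eq_left hzv1.le, min_eq_left hv2z.le, max_eq_right hv2z.le] at h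
  exact h ⟨h1, h2, hv2z', hz'z⟩

/-- Mirror: two common neighbors of `t` and `v` (left neighbor) right of `t`. -/
lemma pairRR' (hgen : Generic X)
    (htop : ∀ p ∈ X, p ≠ t → p.2 < t.2) (ht : t ∈ X) (hv : v ∈ X) (hvx : v.1 < t.1)
    (H : ∀ w ∈ X, w ≠ t → t.1 < w.1 → SpansEmptyRect X t w → v.2 < w.2)
    (hz : z ∈ X) (hz' : z' ∈ X) (h1 : t.1 < z.1) (h2 : z.1 < z'.1)
    (hzt : SpansEmptyRect X t z) (hz't : SpansEmptyRect X t z')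
    (hvz' : SpansEmptyRect X v z') : False := by
  have hv2z : v.2 < z.2 := H z hz (ne_of_fst_lt h1).symm h1 hzt
  have hv2z' : v.2 < z'.2 := H z' hz' (ne_of_fst_lt (h1.trans h2)).symm (h1.trans h2) hz't
  have hz2z' : z.2 < z'.2 :=
    adjtop_right htop hz' (h1.trans h2) hz't hz (ne_of_fst_lt h1).symm h1 h2
      ((hgen z hz z' hz' (ne_of_fst_lt h2)).2)
  have h := hvz' z hz
  have hvz1 : v.1 < z'.1 := hvx.trans (h1.trans h2)
  rw [min_eq_left hvz1.le, max_eq_right hvz1.le, min_eq_left hv2z'.le, max_eq_right hv2z'.le] at h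
  exact h ⟨hvx.trans h1, h2, hv2z, hz2z'⟩

/-- Key lemma, right version: `t` topmost, `v` its right `x`-neighbor, no point of `X`
adjacent to `t` on the left lies below `v`.  Then `t`, `v` have at most 2 common
neighbors. -/
lemma key_right (hgen : Generic X) (ht : t ∈ X)
    (htop : ∀ p ∈ X, p ≠ t → p.2 < t.2)
    (hv : v ∈ X) (hvx : t.1 < v.1)
    (hadjx : ∀ z ∈ X, ¬ (t.1 < z.1 ∧ z.1 < v.1))
    (H : ∀ w ∈ X, w ≠ t → w.1 < t.1 → SpansEmptyRect X t w → v.2 < w.2) :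
    ((nbr X t) ∩ (nbr X v)).card ≤ 2 := by
  by_contra hcon
  push_neg at hcon
  rw [Finset.two_lt_card_iff] at hcon
  obtain ⟨a, b, c, ha, hb, hc, hab, hac, hbc⟩ := hcon
  have unpack : ∀ w ∈ (nbr X t) ∩ (nbr X v),
      w ∈ X ∧ w ≠ t ∧ w ≠ v ∧ SpansEmptyRect X t w ∧ SpansEmptyRect X v w := by
    intro w hw
    rw [Finset.mem_inter, mem_nbr, mem_nbr] at hw
    exact ⟨hw.1.1, hw.1.2.1, hw.2.2.1, hw.1.2.2, hw.2.2.2⟩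
  have side : ∀ w ∈ (nbr X t) ∩ (nbr X v), w.1 < t.1 ∨ v.1 < w.1 := by
    intro w hw
    obtain ⟨hwX, hwt, hwv, _, _⟩ := unpack w hw
    rcases lt_or_gt_of_ne (hgen w hwX t ht hwt).1 with h | h
    · exact Or.inl h
    · right
      rcases lt_or_gt_of_ne (hgen w hwX v hv hwv).1 with h' | h'
      · exact absurd ⟨h, h'⟩ (hadjx w hwX)
      · exact h'
  have noLL : ∀ w w', w ∈ (nbr X t) ∩ (nbr X v) → w' ∈ (nbr X t) ∩ (nbr X v) →
      w ≠ w' → w.1 < t.1 → w'.1 < t.1 → False := by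
    intro w w' hw hw' hne hwl hw'l
    obtain ⟨hwX, _, _, hwt, hwv⟩ := unpack w hw
    obtain ⟨hw'X, _, _, hw't, hw'v⟩ := unpack w' hw'
    rcases lt_or_gt_of_ne (hgen w hwX w' hw'X hne).1 with h | h
    · exact pairLL hgen htop ht hv hvx H hwX hw'X h hw'l hwt hw't hwv
    · exact pairLL hgen htop ht hv hvx H hw'X hwX h hwl hw't hwt hw'v
  have noRR : ∀ w w', w ∈ (nbr X t) ∩ (nbr X v) → w' ∈ (nbr X t) ∩ (nbr X v) →
      w ≠ w' → v.1 < w.1 → v.1 < w'.1 → False := by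
    intro w w' hw hw' hne hwr hw'r
    obtain ⟨hwX, _, _, hwt, hwv⟩ := unpack w hw
    obtain ⟨hw'X, _, _, hw't, hw'v⟩ := unpack w' hw'
    rcases lt_or_gt_of_ne (hgen w hwX w' hw'X hne).1 with h | h
    · exact pairRR hgen htop ht hv hvx hwX hw'X hwr h hwt hw't hw'v
    · exact pairRR hgen htop ht hv hvx hw'X hwX hw'r h hw't hwt hwv
  rcases side a ha with sa | sa <;> rcases side b hb with sb | sb <;>
    rcases side c hc with sc | sc
  · exact noLL a b ha hb hab sa sb
  · exact noLL a b ha hb hab sa sb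
  · exact noLL a c ha hc hac sa sc
  · exact noRR b c hb hc hbc sb sc
  · exact noLL b c hb hc hbc sb sc
  · exact noRR a c ha hc hac sa sc
  · exact noRR a b ha hb hab sa sb
  · exact noRR a b ha hb hab sa sb

/-- Key lemma, left version. -/
lemma key_left (hgen : Generic X) (ht : t ∈ X)
    (htop : ∀ p ∈ X, p ≠ t → p.2 < t.2)
    (hv : v ∈ X) (hvx : v.1 < t.1)
    (hadjx : ∀ z ∈ X, ¬ (v.1 < z.1 ∧ z.1 < t.1))
    (H : ∀ w ∈ X, w ≠ t → t.1 < w.1 → SpansEmptyRect X t w → v.2 < w.2) :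
    ((nbr X t) ∩ (nbr X v)).card ≤ 2 := by
  by_contra hcon
  push_neg at hcon
  rw [Finset.two_lt_card_iff] at hcon
  obtain ⟨a, b, c, ha, hb, hc, hab, hac, hbc⟩ := hcon
  have unpack : ∀ w ∈ (nbr X t) ∩ (nbr X v),
      w ∈ X ∧ w ≠ t ∧ w ≠ v ∧ SpansEmptyRect X t w ∧ SpansEmptyRect X v w := by
    intro w hw
    rw [Finset.mem_inter, mem_nbr, mem_nbr] at hw
    exact ⟨hw.1.1, hw.1.2.1, hw.2.2.1, hw.1.2.2, hw.2.2.2⟩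
  have side : ∀ w ∈ (nbr X t) ∩ (nbr X v), w.1 < v.1 ∨ t.1 < w.1 := by
    intro w hw
    obtain ⟨hwX, hwt, hwv, _, _⟩ := unpack w hw
    rcases lt_or_gt_of_ne (hgen w hwX t ht hwt).1 with h | h
    · left
      rcases lt_or_gt_of_ne (hgen w hwX v hv hwv).1 with h' | h'
      · exact h'
      · exact absurd ⟨h', h⟩ (hadjx w hwX)
    · exact Or.inr h
  have noLL : ∀ w w', w ∈ (nbr X t) ∩ (nbr X v) → w' ∈ (nbr X t) ∩ (nbr X v) →
      w ≠ w' → w.1 < v.1 → w'.1 < v.1 → False := by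
    intro w w' hw hw' hne hwl hw'l
    obtain ⟨hwX, _, _, hwt, hwv⟩ := unpack w hw
    obtain ⟨hw'X, _, _, hw't, hw'v⟩ := unpack w' hw'
    rcases lt_or_gt_of_ne (hgen w hwX w' hw'X hne).1 with h | h
    · exact pairLL' hgen htop ht hv hvx hwX hw'X h hw'l hwt hw't hwv
    · exact pairLL' hgen htop ht hv hvx hw'X hwX h hwl hw't hwt hw'v
  have noRR : ∀ w w', w ∈ (nbr X t) ∩ (nbr X v) → w' ∈ (nbr X t) ∩ (nbr X v) →
      w ≠ w' → t.1 < w.1 → t.1 < w'.1 → False := by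
    intro w w' hw hw' hne hwr hw'r
    obtain ⟨hwX, _, _, hwt, hwv⟩ := unpack w hw
    obtain ⟨hw'X, _, _, hw't, hw'v⟩ := unpack w' hw'
    rcases lt_or_gt_of_ne (hgen w hwX w' hw'X hne).1 with h | h
    · exact pairRR' hgen htop ht hv hvx H hwX hw'X hwr h hwt hw't hw'v
    · exact pairRR' hgen htop ht hv hvx H hw'X hwX hw'r h hw't hwt hwv
  rcases side a ha with sa | sa <;> rcases side b hb with sb | sb <;>
    rcases side c hc with sc | sc
  · exact noLL a b ha hb hab sa sb
  · exact noLL a b ha hb hab sa sb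
  · exact noLL a c ha hc hac sa sc
  · exact noRR b c hb hc hbc sb sc
  · exact noLL b c hb hc hbc sb sc
  · exact noRR a c ha hc hac sa sc
  · exact noRR a b ha hb hab sa sb
  · exact noRR a b ha hb hab sa sb

end Key

/-- Main combinatorial lemma: there is an edge `{t, w}` whose endpoint degrees sum
to at most `|X| + 2`. -/
lemma MCL (X : Finset (ℝ × ℝ)) (hgen : Generic X) (h2 : 2 ≤ X.card) :
    ∃ t w, t ∈ X ∧ w ∈ X ∧ w ≠ t ∧ SpansEmptyRect X t w ∧
      (nbr X t).card + (nbr X w).card ≤ X.card + 2 := by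
  have hnon : X.Nonempty := Finset.card_pos.mp (by omega)
  obtain ⟨t, htX, htmax⟩ := X.exists_max_image Prod.snd hnon
  have htop : ∀ p ∈ X, p ≠ t → p.2 < t.2 := fun p hp hp' =>
    lt_of_le_of_ne (htmax p hp) ((hgen p hp t htX hp').2)
  obtain ⟨p0, hp0X, hp0t⟩ := Finset.exists_mem_ne (s := X) (by omega) t
  have wrap : ∀ w, w ∈ X → w ≠ t → SpansEmptyRect X t w →
      ((nbr X t) ∩ (nbr X w)).card ≤ 2 →
      ∃ t' w', t' ∈ X ∧ w' ∈ X ∧ w' ≠ t' ∧ SpansEmptyRect X t' w' ∧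
        (nbr X t').card + (nbr X w').card ≤ X.card + 2 := by
    intro w hwX hwt hser hcap
    refine ⟨t, w, htX, hwX, hwt, hser, ?_⟩
    have hcu : ((nbr X t) ∪ (nbr X w)).card ≤ X.card :=
      Finset.card_le_card (Finset.union_subset (nbr_subset _ _) (nbr_subset _ _))
    have hsum : (nbr X t).card + (nbr X w).card =
        ((nbr X t) ∪ (nbr X w)).card + ((nbr X t) ∩ (nbr X w)).card :=
      (Finset.card_union_add_card_inter _ _).symm
    rw [hsum]
    exact add_le_add hcu hcap
  by_cases hR : (X.filter fun z => t.1 < z.1).Nonempty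
  · obtain ⟨v, hvR, hvmin⟩ := Finset.exists_min_image _ Prod.fst hR
    have hvX : v ∈ X := (Finset.mem_filter.mp hvR).1
    have hvx : t.1 < v.1 := (Finset.mem_filter.mp hvR).2
    have hadjx : ∀ z ∈ X, ¬ (t.1 < z.1 ∧ z.1 < v.1) := by
      intro z hz hzc
      exact absurd (hvmin z (Finset.mem_filter.mpr ⟨hz, hzc.1⟩)) (not_le.mpr hzc.2)
    have hserv : SpansEmptyRect X t v := by
      intro z hz hc
      rw [min_eq_left hvx.le, max_eq_right hvx.le] at hc
      exact hadjx z hz ⟨hc.1, hc.2.1⟩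
    by_cases hL : (X.filter fun z => z.1 < t.1).Nonempty
    · obtain ⟨u, huL, humax⟩ := Finset.exists_max_image _ Prod.fst hL
      have huX : u ∈ X := (Finset.mem_filter.mp huL).1
      have hux : u.1 < t.1 := (Finset.mem_filter.mp huL).2
      have huv : u ≠ v := ne_of_fst_lt (hux.trans hvx)
      rcases lt_or_gt_of_ne ((hgen v hvX u huX huv.symm).2) with hcmp | hcmp
      · -- v.2 < u.2 : use the right neighbor v
        have H : ∀ w ∈ X, w ≠ t → w.1 < t.1 → SpansEmptyRect X t w → v.2 < w.2 := by
          intro w hwX hwt hwl hser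
          by_cases hwu : w = u
          · subst hwu; exact hcmp
          · have hwu1 : w.1 < u.1 :=
              lt_of_le_of_ne (humax w (Finset.mem_filter.mpr ⟨hwX, hwl⟩))
                ((hgen w hwX u huX hwu).1)
            have := adjtop_left htop hwX hwl hser huX (ne_of_fst_lt hux) hwu1 hux
              ((hgen u huX w hwX (Ne.symm hwu)).2)
            exact hcmp.trans this
        exact wrap v hvX (ne_of_fst_lt hvx).symm hserv
          (key_right hgen htX htop hvX hvx hadjx H)
      · -- u.2 < v.2 : use the left neighbor u
        have hadjxL : ∀ z ∈ X, ¬ (u.1 < z.1 ∧ z.1 < t.1) := by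
          intro z hz hzc
          exact absurd (humax z (Finset.mem_filter.mpr ⟨hz, hzc.2⟩)) (not_le.mpr hzc.1)
        have hseru : SpansEmptyRect X t u := by
          intro z hz hc
          rw [min_eq_right hux.le, max_eq_left hux.le] at hc
          exact hadjxL z hz ⟨hc.1, hc.2.1⟩
        have H' : ∀ w ∈ X, w ≠ t → t.1 < w.1 → SpansEmptyRect X t w → u.2 < w.2 := by
          intro w hwX hwt hwr hser
          by_cases hwv : w = v
          · subst hwv; exact hcmp
          · have hv1w : v.1 < w.1 := by
              rcases lt_or_gt_of_ne ((hgen w hwX v hvX hwv).1) with h | h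
              · exact absurd ⟨hwr, h⟩ (hadjx w hwX)
              · exact h
            have := adjtop_right htop hwX hwr hser hvX (ne_of_fst_lt hvx).symm hvx hv1w
              ((hgen v hvX w hwX (Ne.symm hwv)).2)
            exact hcmp.trans this
        exact wrap u huX (ne_of_fst_lt hux) hseru
          (key_left hgen htX htop huX hux hadjxL H')
    · -- no points to the left of t
      have H : ∀ w ∈ X, w ≠ t → w.1 < t.1 → SpansEmptyRect X t w → v.2 < w.2 := by
        intro w hwX _ hwl _
        exact absurd ⟨w, Finset.mem_filter.mpr ⟨hwX, hwl⟩⟩ hL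
      exact wrap v hvX (ne_of_fst_lt hvx).symm hserv
        (key_right hgen htX htop hvX hvx hadjx H)
  · -- no points to the right of t
    have hp0l : p0.1 < t.1 := by
      rcases lt_or_gt_of_ne ((hgen p0 hp0X t htX hp0t).1) with h | h
      · exact h
      · exact absurd ⟨p0, Finset.mem_filter.mpr ⟨hp0X, h⟩⟩ hR
    have hL : (X.filter fun z => z.1 < t.1).Nonempty :=
      ⟨p0, Finset.mem_filter.mpr ⟨hp0X, hp0l⟩⟩
    obtain ⟨u, huL, humax⟩ := Finset.exists_max_image _ Prod.fst hL
    have huX : u ∈ X := (Finset.mem_filter.mp huL).1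
    have hux : u.1 < t.1 := (Finset.mem_filter.mp huL).2
    have hadjxL : ∀ z ∈ X, ¬ (u.1 < z.1 ∧ z.1 < t.1) := by
      intro z hz hzc
      exact absurd (humax z (Finset.mem_filter.mpr ⟨hz, hzc.2⟩)) (not_le.mpr hzc.1)
    have hseru : SpansEmptyRect X t u := by
      intro z hz hc
      rw [min_eq_right hux.le, max_eq_left hux.le] at hc
      exact hadjxL z hz ⟨hc.1, hc.2.1⟩
    have H' : ∀ w ∈ X, w ≠ t → t.1 < w.1 → SpansEmptyRect X t w → u.2 < w.2 := by
      intro w hwX _ hwr _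
      exact absurd ⟨w, Finset.mem_filter.mpr ⟨hwX, hwr⟩⟩ hR
    exact wrap u huX (ne_of_fst_lt hux) hseru
      (key_left hgen htX htop huX hux hadjxL H')

/-- Removing the two endpoints of an edge. -/
lemma span2_removal (X : Finset (ℝ × ℝ)) (t w : ℝ × ℝ) (ht : t ∈ X) (hw : w ∈ X)
    (hne : w ≠ t) (hser : SpansEmptyRect X t w) :
    span2 X ≤ span2 ((X.erase t).erase w) + ((nbr X t).card + ((nbr X w).card - 1)) := by
  set X' := (X.erase t).erase w with hX'def
  have hX'sub : X' ⊆ X := (Finset.erase_subset _ _).trans (Finset.erase_subset _ _)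
  set S := (X.powersetCard 2).filter
    (fun A => ∀ p ∈ A, ∀ q ∈ A, p ≠ q → SpansEmptyRect X p q) with hSdef
  set S' := (X'.powersetCard 2).filter
    (fun A => ∀ p ∈ A, ∀ q ∈ A, p ≠ q → SpansEmptyRect X' p q) with hS'def
  have hspanX : span2 X = S.card := rfl
  have hspanX' : span2 X' = S'.card := rfl
  have hmemS : ∀ A, A ∈ S → A ⊆ X ∧ A.card = 2 ∧
      (∀ p ∈ A, ∀ q ∈ A, p ≠ q → SpansEmptyRect X p q) := by
    intro A hA
    rw [hSdef] at hA
    simp only [Finset.mem_filter, Finset.mem_powersetCard] at hA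
    exact ⟨hA.1.1, hA.1.2, hA.2⟩
  have hsplit : S ⊆ (S.filter fun A => t ∉ A ∧ w ∉ A) ∪
      ((S.filter fun A => t ∈ A) ∪ (S.filter fun A => w ∈ A ∧ t ∉ A)) := by
    intro A hA
    simp only [Finset.mem_union, Finset.mem_filter]
    by_cases h1 : t ∈ A
    · exact Or.inr (Or.inl ⟨hA, h1⟩)
    · by_cases h2 : w ∈ A
      · exact Or.inr (Or.inr ⟨hA, h2, h1⟩)
      · exact Or.inl ⟨hA, h1, h2⟩
  have hb0 : (S.filter fun A => t ∉ A ∧ w ∉ A).card ≤ S'.card := by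
    apply Finset.card_le_card
    intro A hA
    simp only [Finset.mem_filter] at hA
    obtain ⟨hAS, hAt, hAw⟩ := hA
    obtain ⟨hAX, hA2, hAP⟩ := hmemS A hAS
    rw [hS'def]
    simp only [Finset.mem_filter, Finset.mem_powersetCard]
    refine ⟨⟨?_, hA2⟩, ?_⟩
    · intro x hx
      refine Finset.mem_erase.mpr ⟨?_, Finset.mem_erase.mpr ⟨?_, hAX hx⟩⟩
      · intro h; exact hAw (h ▸ hx)
      · intro h; exact hAt (h ▸ hx)
    · intro p hp q hq hpq
      exact ser_mono hX'sub (hAP p hp q hq hpq)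
  have hbt : (S.filter fun A => t ∈ A).card ≤ (nbr X t).card := by
    have himg : (S.filter fun A => t ∈ A) ⊆
        (nbr X t).image (fun q => ({t, q} : Finset (ℝ × ℝ))) := by
      intro A hA
      simp only [Finset.mem_filter] at hA
      obtain ⟨hAS, htA⟩ := hA
      obtain ⟨hAX, hA2, hAP⟩ := hmemS A hAS
      obtain ⟨a, b, hab, rfl⟩ := Finset.card_eq_two.mp hA2
      simp only [Finset.mem_image]
      rcases Finset.mem_insert.mp htA with rfl | hb'
      · exact ⟨b, mem_nbr.mpr ⟨hAX (by simp), Ne.symm hab,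
          hAP t (by simp) b (by simp) hab⟩, rfl⟩
      · have hteq : t = b := Finset.mem_singleton.mp hb'
        subst hteq
        exact ⟨a, mem_nbr.mpr ⟨hAX (by simp), hab,
          hAP t (by simp) a (by simp) (Ne.symm hab)⟩, Finset.pair_comm t a⟩
    exact (Finset.card_le_card himg).trans Finset.card_image_le
  have htnbr : t ∈ nbr X w := mem_nbr.mpr ⟨ht, Ne.symm hne, ser_symm hser⟩
  have hbw : (S.filter fun A => w ∈ A ∧ t ∉ A).card ≤ (nbr X w).card - 1 := by
    have himg : (S.filter fun A => w ∈ A ∧ t ∉ A) ⊆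
        ((nbr X w).erase t).image (fun q => ({w, q} : Finset (ℝ × ℝ))) := by
      intro A hA
      simp only [Finset.mem_filter] at hA
      obtain ⟨hAS, hwA, htA⟩ := hA
      obtain ⟨hAX, hA2, hAP⟩ := hmemS A hAS
      obtain ⟨a, b, hab, rfl⟩ := Finset.card_eq_two.mp hA2
      simp only [Finset.mem_image]
      rcases Finset.mem_insert.mp hwA with rfl | hb'
      · refine ⟨b, Finset.mem_erase.mpr ⟨?_, mem_nbr.mpr ⟨hAX (by simp), Ne.symm hab,
          hAP w (by simp) b (by simp) hab⟩⟩, rfl⟩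
        intro h; exact htA (h ▸ (by simp : b ∈ ({w, b} : Finset (ℝ × ℝ))))
      · have hweq : w = b := Finset.mem_singleton.mp hb'
        subst hweq
        refine ⟨a, Finset.mem_erase.mpr ⟨?_, mem_nbr.mpr ⟨hAX (by simp), hab,
          hAP w (by simp) a (by simp) (Ne.symm hab)⟩⟩, Finset.pair_comm w a⟩
        intro h; exact htA (h ▸ (by simp : a ∈ ({a, w} : Finset (ℝ × ℝ))))
    calc (S.filter fun A => w ∈ A ∧ t ∉ A).card
        ≤ (((nbr X w).erase t).image (fun q => ({w, q} : Finset (ℝ × ℝ)))).card :=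
          Finset.card_le_card himg
      _ ≤ ((nbr X w).erase t).card := Finset.card_image_le
      _ = (nbr X w).card - 1 := Finset.card_erase_of_mem htnbr
  have hle := Finset.card_le_card hsplit
  have hu1 := Finset.card_union_le (S.filter fun A => t ∉ A ∧ w ∉ A)
    ((S.filter fun A => t ∈ A) ∪ (S.filter fun A => w ∈ A ∧ t ∉ A))
  have hu2 := Finset.card_union_le (S.filter fun A => t ∈ A)
    (S.filter fun A => w ∈ A ∧ t ∉ A)
  rw [hspanX, hspanX']
  omega

lemma main_aux : ∀ n : ℕ, ∀ X : Finset (ℝ × ℝ), X.card = n → Generic X → 2 ≤ n →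
    span2 X ≤ n ^ 2 / 4 + n - 2 := by
  intro n
  induction n using Nat.strong_induction_on with
  | _ n ih =>
    intro X hcard hgen hn
    by_cases hn3 : n < 4
    · -- base cases n = 2, 3
      have hb : span2 X ≤ (X.powersetCard 2).card := by
        have h0 : span2 X = ((X.powersetCard 2).filter
            (fun A => ∀ p ∈ A, ∀ q ∈ A, p ≠ q → SpansEmptyRect X p q)).card := rfl
        rw [h0]
        apply Finset.card_le_card
        intro A hA
        simp only [Finset.mem_filter] at hA
        exact hA.1
      rw [Finset.card_powersetCard, hcard] at hb
      interval_cases n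
      · simpa using hb
      · simpa using hb
    · -- inductive step, n ≥ 4
      obtain ⟨t, w, htX, hwX, hwt, hser, hdeg⟩ := MCL X hgen (by omega)
      set X' := (X.erase t).erase w with hX'def
      have hwX' : w ∈ X.erase t := Finset.mem_erase.mpr ⟨hwt, hwX⟩
      have hc1 : (X.erase t).card = n - 1 := by
        rw [Finset.card_erase_of_mem htX, hcard]
      have hc2 : X'.card = n - 2 := by
        rw [hX'def, Finset.card_erase_of_mem hwX', hc1]
        omega
      have hgen' : Generic X' := fun p hp q hq hpq =>
        hgen p (Finset.mem_of_mem_erase (Finset.mem_of_mem_erase hp))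
          q (Finset.mem_of_mem_erase (Finset.mem_of_mem_erase hq)) hpq
      have IH := ih (n - 2) (by omega) X' hc2 hgen' (by omega)
      have hrem : span2 X ≤ span2 X' + ((nbr X t).card + ((nbr X w).card - 1)) :=
        span2_removal X t w htX hwX hwt hser
      have h1 : 1 ≤ (nbr X w).card :=
        Finset.card_pos.mpr ⟨t, mem_nbr.mpr ⟨htX, Ne.symm hwt, ser_symm hser⟩⟩
      rw [hcard] at hdeg
      obtain ⟨m, rfl⟩ : ∃ m, n = m + 4 := ⟨n - 4, by omega⟩
      have e : m + 4 - 2 = m + 2 := by omega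
      rw [e] at IH
      have k2 : (m + 2) ^ 2 / 4 = m ^ 2 / 4 + (m + 1) := by
        have h : (m + 2) ^ 2 = m ^ 2 + 4 * (m + 1) := by ring
        rw [h, Nat.add_mul_div_left _ _ (by norm_num : 0 < 4)]
      rw [k2] at IH
      have k1 : (m + 4) ^ 2 / 4 = m ^ 2 / 4 + (2 * m + 4) := by
        have h : (m + 4) ^ 2 = m ^ 2 + 4 * (2 * m + 4) := by ring
        rw [h, Nat.add_mul_div_left _ _ (by norm_num : 0 < 4)]
      rw [k1]
      set K := m ^ 2 / 4 with hK
      omega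

end Span2Proof

theorem span2_le (X : Finset (ℝ × ℝ)) (n : ℕ) (hn : 2 ≤ n) (hcard : X.card = n)
    (hgen : Generic X) :
    span2 X ≤ n ^ 2 / 4 + n - 2 := by
  exact Span2Proof.main_aux n X hcard hgen hn
end

section
/- For every n ≥ 2 there exists a generic set X of n points in ℝ² with span₂(X) = ⌊n²/4 + n − 2⌋; hence the bound span₂(X) ≤ ⌊n²/4 + n − 2⌋ is best possible. -/
open scoped Classical

namespace Span2Tight

/-- y-coordinate of the `i`-th point. -/
noncomputable def g (n k i : ℕ) : ℝ :=
  if i < k then (k : ℝ) - 1 - i else (n : ℝ) + k - 1 - i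

lemma glt_left {n k i j : ℕ} (hj : j < k) (hij : i < j) : g n k j < g n k i := by
  rw [g, g, if_pos (hij.trans hj), if_pos hj]
  have : (i : ℝ) < j := by exact_mod_cast hij
  linarith

lemma glt_right {n k i j : ℕ} (hi : k ≤ i) (hij : i < j) : g n k j < g n k i := by
  rw [g, g, if_neg (by omega), if_neg (by omega)]
  have : (i : ℝ) < j := by exact_mod_cast hij
  linarith

lemma glt_cross {n k i j : ℕ} (hi : i < k) (hj : k ≤ j) (hjn : j < n) :
    g n k i < g n k j := by
  rw [g, g, if_pos hi, if_neg (by omega)]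
  have h1 : (0 : ℝ) ≤ i := by positivity
  have h2 : (j : ℝ) < n := by exact_mod_cast hjn
  linarith

lemma g_ne {n k i j : ℕ} (hjn : i < n) (hin : j < n) (hij : i ≠ j) :
    g n k i ≠ g n k j := by
  rcases hij.lt_or_gt with h | h
  · rcases lt_or_ge j k with hk | hk
    · exact (glt_left hk h).ne'
    · rcases lt_or_ge i k with hk2 | hk2
      · exact (glt_cross hk2 hk hin).ne
      · exact (glt_right hk2 h).ne'
  · rcases lt_or_ge i k with hk | hk
    · exact (glt_left hk h).ne
    · rcases lt_or_ge j k with hk2 | hk2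
      · exact (glt_cross hk2 hk hjn).ne'
      · exact (glt_right hk2 h).ne

/-- the `i`-th point. -/
noncomputable def f (n k : ℕ) (i : Fin n) : ℝ × ℝ := ((i : ℕ), g n k i)

lemma f_inj {n k : ℕ} : Function.Injective (f n k) := by
  intro a b h
  have : ((a : ℕ) : ℝ) = ((b : ℕ) : ℝ) := congrArg Prod.fst h
  exact Fin.ext (by exact_mod_cast this)

lemma spans_symm {X : Finset (ℝ × ℝ)} {p q : ℝ × ℝ} (h : SpansEmptyRect X p q) :
    SpansEmptyRect X q p := by
  intro z hz
  rw [min_comm q.1 p.1, max_comm q.1 p.1, min_comm q.2 p.2, max_comm q.2 p.2]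
  exact h z hz

section Main

variable {n k : ℕ}

/-- the point set -/
noncomputable def Xset (n k : ℕ) : Finset (ℝ × ℝ) := Finset.image (f n k) Finset.univ

lemma mem_Xset {p : ℝ × ℝ} : p ∈ Xset n k ↔ ∃ i, f n k i = p := by
  simp [Xset]

lemma hedge {i j : Fin n} (hij : (i : ℕ) < j)
    (hc : ((i : ℕ) < k ∧ k ≤ (j : ℕ)) ∨ (j : ℕ) = (i : ℕ) + 1) :
    SpansEmptyRect (Xset n k) (f n k i) (f n k j) := by
  intro z hz
  rintro ⟨h1, h2, h3, h4⟩
  obtain ⟨m, rfl⟩ := mem_Xset.mp hz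
  have hijR : ((i : ℕ) : ℝ) < ((j : ℕ) : ℝ) := by exact_mod_cast hij
  simp only [f] at h1 h2 h3 h4
  rw [min_eq_left hijR.le] at h1
  rw [max_eq_right hijR.le] at h2
  have hm1 : (i : ℕ) < (m : ℕ) := by exact_mod_cast h1
  have hm2 : (m : ℕ) < (j : ℕ) := by exact_mod_cast h2
  rcases hc with ⟨hik, hkj⟩ | hcons
  · have hgij : g n k i < g n k j := glt_cross hik hkj j.isLt
    rw [min_eq_left hgij.le] at h3
    rw [max_eq_right hgij.le] at h4
    rcases lt_or_ge (m : ℕ) k with hmk | hmk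
    · exact absurd h3 (not_lt.mpr (glt_left hmk hm1).le)
    · exact absurd h4 (not_lt.mpr (glt_right hmk hm2).le)
  · omega

lemma hnon {i j : Fin n} (hij : (i : ℕ) < j) (hss : (j : ℕ) < k ∨ k ≤ (i : ℕ))
    (hgap : (i : ℕ) + 2 ≤ j) :
    ¬ SpansEmptyRect (Xset n k) (f n k i) (f n k j) := by
  intro h
  have hsn : (i : ℕ) + 1 < n := by have := j.isLt; omega
  apply h (f n k ⟨(i : ℕ) + 1, hsn⟩) (mem_Xset.mpr ⟨_, rfl⟩)
  have hijR : ((i : ℕ) : ℝ) < ((j : ℕ) : ℝ) := by exact_mod_cast hij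
  simp only [f, Fin.val_mk]
  rw [min_eq_left hijR.le, max_eq_right hijR.le]
  have c1 : ((i : ℕ) : ℝ) < (((i : ℕ) + 1 : ℕ) : ℝ) := by exact_mod_cast Nat.lt_succ_self _
  have c2 : (((i : ℕ) + 1 : ℕ) : ℝ) < ((j : ℕ) : ℝ) := by exact_mod_cast (by omega : (i:ℕ)+1 < j)
  refine ⟨by exact_mod_cast c1, by exact_mod_cast c2, ?_⟩
  rcases hss with hss | hss
  · have hgji : g n k j < g n k i := glt_left hss hij
    rw [min_eq_right hgji.le, max_eq_left hgji.le]
    exact ⟨glt_left hss (by omega), glt_left (by omega : (i:ℕ)+1 < k) (Nat.lt_succ_self _)⟩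
  · have hgji : g n k j < g n k i := glt_right hss hij
    rw [min_eq_right hgji.le, max_eq_left hgji.le]
    exact ⟨glt_right (by omega : k ≤ (i:ℕ)+1) (by omega), glt_right hss (Nat.lt_succ_self _)⟩

end Main

end Span2Tight

open Span2Tight

theorem span2_bound_tight (n : ℕ) (hn : 2 ≤ n) :
    ∃ X : Finset (ℝ × ℝ), Generic X ∧ X.card = n ∧
      span2 X = n ^ 2 / 4 + n - 2 := by
  set k := (n + 1) / 2 with hkdef
  have hk1 : 1 ≤ k := by omega
  have hkn : k < n := by omega
  refine ⟨Xset n k, ?_, ?_, ?_⟩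
  · -- Generic
    rintro p hp q hq hpq
    obtain ⟨i, rfl⟩ := mem_Xset.mp hp
    obtain ⟨j, rfl⟩ := mem_Xset.mp hq
    have hij : i ≠ j := fun h => hpq (by rw [h])
    constructor
    · show ((i:ℕ):ℝ) ≠ ((j:ℕ):ℝ)
      exact_mod_cast fun h => hij (Fin.ext h)
    · exact g_ne i.isLt j.isLt (fun h => hij (Fin.ext h))
  · rw [Xset, Finset.card_image_of_injective _ f_inj, Finset.card_univ, Fintype.card_fin]
  · -- the count
    classical
    set E : Finset (Fin n × Fin n) := Finset.univ.filter
      (fun e => ((e.1 : ℕ) < k ∧ k ≤ (e.2 : ℕ)) ∨ (e.2 : ℕ) = (e.1 : ℕ) + 1) with hEdef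
    have hElt : ∀ e ∈ E, (e.1 : ℕ) < (e.2 : ℕ) := by
      intro e he
      have := (Finset.mem_filter.mp he).2
      omega
    have hfilter : ((Xset n k).powersetCard 2).filter
        (fun A => ∀ p ∈ A, ∀ q ∈ A, p ≠ q → SpansEmptyRect (Xset n k) p q)
        = E.image (fun e => ({f n k e.1, f n k e.2} : Finset (ℝ × ℝ))) := by
      ext A
      simp only [Finset.mem_filter, Finset.mem_powersetCard, Finset.mem_image]
      constructor
      · rintro ⟨⟨hsub, hcard⟩, hP⟩
        obtain ⟨p, q, hpq, rfl⟩ := Finset.card_eq_two.mp hcard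
        obtain ⟨i, rfl⟩ := mem_Xset.mp (hsub (Finset.mem_insert_self _ _))
        obtain ⟨j, rfl⟩ := mem_Xset.mp (hsub (Finset.mem_insert.mpr
          (Or.inr (Finset.mem_singleton_self _))))
        have hij : i ≠ j := fun h => hpq (by rw [h])
        have key : ∀ a b : Fin n, (a : ℕ) < (b : ℕ) →
            SpansEmptyRect (Xset n k) (f n k a) (f n k b) →
            ((a : ℕ) < k ∧ k ≤ (b : ℕ)) ∨ (b : ℕ) = (a : ℕ) + 1 := by
          intro a b hab hs
          by_contra hnc
          push_neg at hnc
          have hss : (b : ℕ) < k ∨ k ≤ (a : ℕ) := by omega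
          exact hnon hab hss (by omega) hs
        have hspq : SpansEmptyRect (Xset n k) (f n k i) (f n k j) :=
          hP _ (Finset.mem_insert_self _ _) _
            (Finset.mem_insert.mpr (Or.inr (Finset.mem_singleton_self _))) hpq
        have hvne : (i : ℕ) ≠ (j : ℕ) := fun h => hij (Fin.ext h)
        rcases hvne.lt_or_gt with hlt | hlt
        · exact ⟨(i, j), Finset.mem_filter.mpr ⟨Finset.mem_univ _, key i j hlt hspq⟩, rfl⟩
        · refine ⟨(j, i), Finset.mem_filter.mpr ⟨Finset.mem_univ _,
            key j i hlt (spans_symm hspq)⟩, ?_⟩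
          simp [Finset.pair_comm]
      · rintro ⟨⟨a, b⟩, hab, rfl⟩
        have hc := (Finset.mem_filter.mp hab).2
        have hlt : (a : ℕ) < (b : ℕ) := hElt _ hab
        have hne : f n k a ≠ f n k b := fun h =>
          absurd (congrArg Fin.val (f_inj h)) (by omega)
        refine ⟨⟨?_, ?_⟩, ?_⟩
        · intro x hx
          rcases Finset.mem_insert.mp hx with rfl | hx
          · exact mem_Xset.mpr ⟨_, rfl⟩
          · rw [Finset.mem_singleton.mp hx]; exact mem_Xset.mpr ⟨_, rfl⟩
        · rw [Finset.card_pair hne]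
        · intro p hp q hq hpqne
          rcases Finset.mem_insert.mp hp with rfl | hp <;>
            rcases Finset.mem_insert.mp hq with rfl | hq
          · exact absurd rfl hpqne
          · rw [Finset.mem_singleton.mp hq]; exact hedge hlt hc
          · rw [Finset.mem_singleton.mp hp]; exact spans_symm (hedge hlt hc)
          · rw [Finset.mem_singleton.mp hp, Finset.mem_singleton.mp hq] at hpqne
            exact absurd rfl hpqne
    have hinj : Set.InjOn (fun e : Fin n × Fin n =>
        ({f n k e.1, f n k e.2} : Finset (ℝ × ℝ))) E := by
      intro e he e' he' heq
      have l : (e.1 : ℕ) < e.2 := hElt _ he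
      have l' : (e'.1 : ℕ) < e'.2 := hElt _ he'
      simp only at heq
      have h1 : f n k e.1 ∈ ({f n k e'.1, f n k e'.2} : Finset (ℝ × ℝ)) := by
        rw [← heq]; exact Finset.mem_insert_self _ _
      have h2 : f n k e.2 ∈ ({f n k e'.1, f n k e'.2} : Finset (ℝ × ℝ)) := by
        rw [← heq]; exact Finset.mem_insert.mpr (Or.inr (Finset.mem_singleton_self _))
      have h1' : e.1 = e'.1 ∨ e.1 = e'.2 := by
        rcases Finset.mem_insert.mp h1 with h | h
        · exact Or.inl (f_inj h)
        · exact Or.inr (f_inj (Finset.mem_singleton.mp h))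
      have h2' : e.2 = e'.1 ∨ e.2 = e'.2 := by
        rcases Finset.mem_insert.mp h2 with h | h
        · exact Or.inl (f_inj h)
        · exact Or.inr (f_inj (Finset.mem_singleton.mp h))
      have v1 : (e.1 : ℕ) = e'.1 ∧ (e.2 : ℕ) = e'.2 := by
        rcases h1' with h | h <;> rcases h2' with h2 | h2 <;>
          first
            | exact ⟨congrArg Fin.val h, congrArg Fin.val h2⟩
            | (have := congrArg Fin.val h; have := congrArg Fin.val h2; omega)
      exact Prod.ext (Fin.ext v1.1) (Fin.ext v1.2)
    have hcount : E.card = k * (n - k) + n - 2 := by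
      rw [hEdef, Finset.filter_or]
      have cE1 : (Finset.univ.filter
          (fun e : Fin n × Fin n => (e.1 : ℕ) < k ∧ k ≤ (e.2 : ℕ))).card = k * (n - k) := by
        have hprod : (Finset.univ.filter
            (fun e : Fin n × Fin n => (e.1 : ℕ) < k ∧ k ≤ (e.2 : ℕ)))
            = (Finset.univ.filter (fun i : Fin n => (i : ℕ) < k)) ×ˢ
              (Finset.univ.filter (fun j : Fin n => k ≤ (j : ℕ))) := by
          ext e
          simp [Finset.mem_product, Finset.mem_filter]
        rw [hprod, Finset.card_product]
        have c1 : (Finset.univ.filter (fun i : Fin n => (i : ℕ) < k)).card = k := by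
          apply Finset.card_eq_of_bijective (fun a ha => (⟨a, by omega⟩ : Fin n))
          · intro i hi
            have := (Finset.mem_filter.mp hi).2
            exact ⟨(i : ℕ), this, Fin.ext rfl⟩
          · intro a ha
            exact Finset.mem_filter.mpr ⟨Finset.mem_univ _, ha⟩
          · intro a b ha hb hab
            exact congrArg Fin.val hab
        have c2 : (Finset.univ.filter (fun j : Fin n => k ≤ (j : ℕ))).card = n - k := by
          apply Finset.card_eq_of_bijective (fun a ha => (⟨k + a, by omega⟩ : Fin n))
          · intro j hj
            have := (Finset.mem_filter.mp hj).2
            exact ⟨(j : ℕ) - k, by omega, Fin.ext (by simp; omega)⟩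
          · intro a ha
            exact Finset.mem_filter.mpr ⟨Finset.mem_univ _, by simp⟩
          · intro a b ha hb hab
            have := congrArg Fin.val hab
            simpa using this
        rw [c1, c2]
      have cE2 : (Finset.univ.filter
          (fun e : Fin n × Fin n => (e.2 : ℕ) = (e.1 : ℕ) + 1)).card = n - 1 := by
        apply Finset.card_eq_of_bijective
          (fun a ha => ((⟨a, by omega⟩, ⟨a + 1, by omega⟩) : Fin n × Fin n))
        · intro e he
          have h := (Finset.mem_filter.mp he).2
          have := e.2.isLt
          exact ⟨(e.1 : ℕ), by omega, Prod.ext (Fin.ext rfl) (Fin.ext (by simp; omega))⟩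
        · intro a ha
          exact Finset.mem_filter.mpr ⟨Finset.mem_univ _, rfl⟩
        · intro a b ha hb hab
          exact congrArg (fun e : Fin n × Fin n => (e.1 : ℕ)) hab
      have cInter : ((Finset.univ.filter
            (fun e : Fin n × Fin n => (e.1 : ℕ) < k ∧ k ≤ (e.2 : ℕ))) ∩
          (Finset.univ.filter
            (fun e : Fin n × Fin n => (e.2 : ℕ) = (e.1 : ℕ) + 1))).card = 1 := by
        rw [← Finset.filter_and]
        have : (Finset.univ.filter (fun e : Fin n × Fin n =>
            ((e.1 : ℕ) < k ∧ k ≤ (e.2 : ℕ)) ∧ (e.2 : ℕ) = (e.1 : ℕ) + 1))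
            = {((⟨k - 1, by omega⟩ : Fin n), (⟨k, by omega⟩ : Fin n))} := by
          ext e
          simp only [Finset.mem_filter, Finset.mem_univ, true_and, Finset.mem_singleton,
            Prod.ext_iff, Fin.ext_iff]
          omega
        rw [this, Finset.card_singleton]
      have hu := Finset.card_union_add_card_inter
        (Finset.univ.filter (fun e : Fin n × Fin n => (e.1 : ℕ) < k ∧ k ≤ (e.2 : ℕ)))
        (Finset.univ.filter (fun e : Fin n × Fin n => (e.2 : ℕ) = (e.1 : ℕ) + 1))
      rw [cE1, cE2, cInter] at hu
      obtain ⟨K, hK⟩ : ∃ K, k * (n - k) = K := ⟨_, rfl⟩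
      rw [hK] at hu ⊢
      omega
    have harith : k * (n - k) + n - 2 = n ^ 2 / 4 + n - 2 := by
      suffices h : k * (n - k) = n ^ 2 / 4 by rw [h]
      rcases Nat.even_or_odd n with ⟨m, hm⟩ | ⟨m, hm⟩
      · have h4 : n ^ 2 = 4 * (m * m) := by subst hm; ring
        rw [h4, Nat.mul_div_cancel_left _ (by norm_num)]
        have hk : k = m := by omega
        have h2 : n - k = m := by omega
        rw [h2, hk]
      · have h4 : n ^ 2 = 1 + m * (m + 1) * 4 := by subst hm; ring
        rw [h4, Nat.add_mul_div_right _ _ (by norm_num : (0:ℕ) < 4)]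
        have hk : k = m + 1 := by omega
        have h2 : n - k = m := by omega
        rw [h2, hk]
        norm_num
        ring
    unfold span2
    rw [hfilter, Finset.card_image_of_injOn hinj, hcount, harith]
end

section
/- Let P₁, …, Pₙ be independent random points, each uniformly distributed on the unit square [0,1]². Then the expected number of pairs {i,j} with 1 ≤ i < j ≤ n such that Pᵢ and Pⱼ span an empty rectangle with respect to {P₁, …, Pₙ} equals Σ_{1 ≤ i < j ≤ n} 2/(j − i + 1), the expected number of comparisons of random quicksort on n elements. -/
open MeasureTheory
open scoped Classical

open Finset

noncomputable def harm (M : ℕ) : ℝ := ∑ k ∈ range M, 1 / (k + 1 : ℝ)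

lemma harm_succ (M : ℕ) : harm (M + 1) = harm M + 1 / (M + 1 : ℝ) := by
  simp [harm, Finset.sum_range_succ]

lemma alt_choose_real (M : ℕ) (hM : 1 ≤ M) :
    ∑ j ∈ range (M + 1), (-1 : ℝ) ^ j * (M.choose j : ℝ) = 0 := by
  have := Int.alternating_sum_range_choose (n := M)
  rw [if_neg (by omega)] at this
  have : ((∑ i ∈ range (M + 1), (-1 : ℤ) ^ i * (M.choose i : ℤ) : ℤ) : ℝ) = 0 := by
    rw [this]; simp
  push_cast at this
  convert this using 2

lemma alt_choose_shift (M : ℕ) :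
    ∑ j ∈ range (M + 1), (-1 : ℝ) ^ j * ((M + 1).choose (j + 1) : ℝ) = 1 := by
  have h := alt_choose_real (M + 1) (by omega)
  rw [Finset.sum_range_succ'] at h
  simp only [pow_succ, Nat.choose_zero_right] at h
  norm_num at h
  -- h : ∑ j ∈ range (M+1), (-1)^j * (-1) * choose = ... + 1 = 0
  have : ∑ j ∈ range (M + 1), (-1 : ℝ) ^ j * ((M + 1).choose (j + 1) : ℝ)
      = -(∑ i ∈ range (M + 1), (-1:ℝ) ^ i * (-1) * ((M+1).choose (i+1) : ℝ)) := by
    rw [← Finset.sum_neg_distrib]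
    apply Finset.sum_congr rfl
    intro j _; ring
  rw [this]
  linarith [h]

lemma T_eq_harm (M : ℕ) :
    ∑ j ∈ range M, (-1 : ℝ) ^ j * (M.choose (j + 1) : ℝ) / (j + 1 : ℝ) = harm M := by
  induction M with
  | zero => simp [harm]
  | succ M ih =>
    have pascal : ∀ j, ((M+1).choose (j+1) : ℝ) = (M.choose (j+1) : ℝ) + (M.choose j : ℝ) := by
      intro j
      rw [Nat.choose_succ_succ]
      push_cast; ring
    have split : ∑ j ∈ range (M+1), (-1:ℝ)^j * ((M+1).choose (j+1) : ℝ) / (j+1:ℝ)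
        = (∑ j ∈ range (M+1), (-1:ℝ)^j * (M.choose (j+1) : ℝ) / (j+1:ℝ))
        + ∑ j ∈ range (M+1), (-1:ℝ)^j * (M.choose j : ℝ) / (j+1:ℝ) := by
      rw [← Finset.sum_add_distrib]
      apply Finset.sum_congr rfl
      intro j _
      rw [pascal j]; ring
    have first : ∑ j ∈ range (M+1), (-1:ℝ)^j * (M.choose (j+1) : ℝ) / (j+1:ℝ)
        = ∑ j ∈ range M, (-1:ℝ)^j * (M.choose (j+1) : ℝ) / (j+1:ℝ) := by
      rw [Finset.sum_range_succ, Nat.choose_succ_self]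
      simp
    have key : ∀ j : ℕ, (M.choose j : ℝ) / (j+1:ℝ) = ((M+1).choose (j+1) : ℝ) / (M+1:ℝ) := by
      intro j
      have h := Nat.add_one_mul_choose_eq M j
      have : ((M+1) * M.choose j : ℝ) = ((M+1).choose (j+1) * (j+1) : ℝ) := by
        exact_mod_cast congrArg (Nat.cast : ℕ → ℝ) h
      have hj : (j:ℝ) + 1 ≠ 0 := by positivity
      have hM : (M:ℝ) + 1 ≠ 0 := by positivity
      field_simp
      nlinarith [this]
    have second : ∑ j ∈ range (M+1), (-1:ℝ)^j * (M.choose j : ℝ) / (j+1:ℝ)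
        = 1 / (M+1:ℝ) := by
      calc ∑ j ∈ range (M+1), (-1:ℝ)^j * (M.choose j : ℝ) / (j+1:ℝ)
          = ∑ j ∈ range (M+1), (-1:ℝ)^j * ((M+1).choose (j+1) : ℝ) / (M+1:ℝ) := by
            apply Finset.sum_congr rfl
            intro j _
            rw [mul_div_assoc, key j, mul_div_assoc]
        _ = (∑ j ∈ range (M+1), (-1:ℝ)^j * ((M+1).choose (j+1) : ℝ)) / (M+1:ℝ) := by
            rw [Finset.sum_div]
        _ = 1 / (M+1:ℝ) := by rw [alt_choose_shift]
    rw [split, first, ih, second, harm_succ]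

lemma choose_cast1 (N m : ℕ) :
    ((N:ℝ)+1) * (N.choose m : ℝ) = ((N+1).choose (m+1) : ℝ) * ((m:ℝ)+1) := by
  have h := Nat.add_one_mul_choose_eq N m
  exact_mod_cast congrArg (Nat.cast : ℕ → ℝ) h

lemma choose_cast2 (N m : ℕ) :
    ((N:ℝ)+1) * ((N:ℝ)+2) * (N.choose m : ℝ)
      = ((N+2).choose (m+2) : ℝ) * ((m:ℝ)+1) * ((m:ℝ)+2) := by
  have h1 := choose_cast1 N m
  have h2 := choose_cast1 (N+1) (m+1)
  push_cast at h2 ⊢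
  nlinarith [h1, h2]

lemma alt_choose_two_shift (N : ℕ) :
    ∑ m ∈ range (N+1), (-1:ℝ)^m * ((N+2).choose (m+2) : ℝ) = (N:ℝ)+1 := by
    have h := alt_choose_shift (N+1)
    rw [Finset.sum_range_succ'] at h
    push_cast at h
    have : ∑ m ∈ range (N+1), (-1:ℝ)^m * ((N+2).choose (m+2) : ℝ)
        = -∑ m ∈ range (N+1), (-1:ℝ)^(m+1) * (((N+1)+1).choose ((m+1)+1) : ℝ) := by
      rw [← Finset.sum_neg_distrib]
      apply Finset.sum_congr rfl
      intro m _
      show _ = -((-1:ℝ)^(m+1) * (((N+2)).choose ((m+2)) : ℝ))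
      rw [pow_succ]; ring
    rw [this]
    simp only [pow_succ] at h
    norm_num at h ⊢
    linarith [h]

lemma S2_sum (N : ℕ) :
    ∑ m ∈ range (N+1), (-1:ℝ)^m * (N.choose m : ℝ) / (((m:ℝ)+1) * ((m:ℝ)+2))
      = 1 / ((N:ℝ)+2) := by
  have hsum := alt_choose_two_shift N
  calc ∑ m ∈ range (N+1), (-1:ℝ)^m * (N.choose m : ℝ) / (((m:ℝ)+1) * ((m:ℝ)+2))
      = ∑ m ∈ range (N+1), (-1:ℝ)^m * ((N+2).choose (m+2) : ℝ) / (((N:ℝ)+1)*((N:ℝ)+2)) := by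
        apply Finset.sum_congr rfl
        intro m _
        have h := choose_cast2 N m
        have hm1 : (m:ℝ)+1 ≠ 0 := by positivity
        have hm2 : (m:ℝ)+2 ≠ 0 := by positivity
        have hN1 : (N:ℝ)+1 ≠ 0 := by positivity
        have hN2 : (N:ℝ)+2 ≠ 0 := by positivity
        rw [div_eq_div_iff (by positivity) (by positivity)]
        linear_combination ((-1:ℝ)^m) * h
    _ = (∑ m ∈ range (N+1), (-1:ℝ)^m * ((N+2).choose (m+2) : ℝ)) / (((N:ℝ)+1)*((N:ℝ)+2)) := by
        rw [Finset.sum_div]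
    _ = 1 / ((N:ℝ)+2) := by
        rw [hsum]
        have hN1 : (N:ℝ)+1 ≠ 0 := by positivity
        have hN2 : (N:ℝ)+2 ≠ 0 := by positivity
        field_simp

lemma S3_sum (N : ℕ) :
    ∑ m ∈ range (N+1), (-1:ℝ)^m * (N.choose m : ℝ) / (((m:ℝ)+1)^2)
      = harm (N+1) / ((N:ℝ)+1) := by
  calc ∑ m ∈ range (N+1), (-1:ℝ)^m * (N.choose m : ℝ) / (((m:ℝ)+1)^2)
      = ∑ m ∈ range (N+1), ((-1:ℝ)^m * ((N+1).choose (m+1) : ℝ) / ((m:ℝ)+1)) / ((N:ℝ)+1) := by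
        apply Finset.sum_congr rfl
        intro m _
        have h := choose_cast1 N m
        have hm1 : (m:ℝ)+1 ≠ 0 := by positivity
        have hN1 : (N:ℝ)+1 ≠ 0 := by positivity
        rw [div_div, div_eq_div_iff (by positivity) (by positivity)]
        linear_combination ((-1:ℝ)^m * ((m:ℝ)+1)) * h
    _ = (∑ m ∈ range (N+1), (-1:ℝ)^m * ((N+1).choose (m+1) : ℝ) / ((m:ℝ)+1)) / ((N:ℝ)+1) := by
        rw [Finset.sum_div]
    _ = harm (N+1) / ((N:ℝ)+1) := by
        have := T_eq_harm (N+1)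
        rw [← this]

lemma S4_aux (N : ℕ) :
    ∑ m ∈ range (N+1), (-1:ℝ)^m * ((N+2).choose (m+2) : ℝ) / ((m:ℝ)+2)
      = ((N:ℝ)+2) - harm (N+2) := by
  have h := T_eq_harm (N+2)
  rw [Finset.sum_range_succ'] at h
  push_cast at h
  norm_num at h
  have : ∑ m ∈ range (N+1), (-1:ℝ)^m * ((N+2).choose (m+2) : ℝ) / ((m:ℝ)+2)
      = -∑ m ∈ range (N+1), (-1:ℝ)^(m+1) * ((N+2).choose (m+2) : ℝ) / (((m:ℝ)+1)+1) := by
    rw [← Finset.sum_neg_distrib]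
    apply Finset.sum_congr rfl
    intro m _
    rw [pow_succ]; ring_nf
  rw [this]
  linarith [h]

lemma S4_sum (N : ℕ) :
    ∑ m ∈ range (N+1), (-1:ℝ)^m * (N.choose m : ℝ) / (((m:ℝ)+2)^2)
      = (harm (N+2) - 1) / (((N:ℝ)+1)*((N:ℝ)+2)) := by
  have hsum1 := alt_choose_two_shift N
  have hsum2 := S4_aux N
  calc ∑ m ∈ range (N+1), (-1:ℝ)^m * (N.choose m : ℝ) / (((m:ℝ)+2)^2)
      = ∑ m ∈ range (N+1), ((-1:ℝ)^m * ((N+2).choose (m+2) : ℝ)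
          - (-1:ℝ)^m * ((N+2).choose (m+2) : ℝ) / ((m:ℝ)+2)) / (((N:ℝ)+1)*((N:ℝ)+2)) := by
        apply Finset.sum_congr rfl
        intro m _
        have h := choose_cast2 N m
        have hm1 : (m:ℝ)+1 ≠ 0 := by positivity
        have hm2 : (m:ℝ)+2 ≠ 0 := by positivity
        have hN1 : (N:ℝ)+1 ≠ 0 := by positivity
        have hN2 : (N:ℝ)+2 ≠ 0 := by positivity
        have hC : (N.choose m : ℝ) = ((N+2).choose (m+2) : ℝ) * ((m:ℝ)+1) * ((m:ℝ)+2)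
            / (((N:ℝ)+1)*((N:ℝ)+2)) := by
          rw [eq_div_iff (by positivity)]
          linear_combination h
        rw [hC]
        field_simp
        ring
    _ = (((N:ℝ)+1) - (((N:ℝ)+2) - harm (N+2))) / (((N:ℝ)+1)*((N:ℝ)+2)) := by
        rw [← hsum1]
        conv_rhs => rw [← hsum2]
        rw [← Finset.sum_sub_distrib, Finset.sum_div]
    _ = (harm (N+2) - 1) / (((N:ℝ)+1)*((N:ℝ)+2)) := by ring_nf

lemma Q_closed (N : ℕ) :
    ∑ m ∈ range (N+1), (-1:ℝ)^m * (N.choose m : ℝ) * (2/(((m:ℝ)+1)*((m:ℝ)+2)))^2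
      = 4*(harm (N+1)/((N:ℝ)+1) - 2/((N:ℝ)+2) + (harm (N+2)-1)/(((N:ℝ)+1)*((N:ℝ)+2))) := by
  have split : ∀ m ∈ range (N+1), (-1:ℝ)^m * (N.choose m : ℝ) * (2/(((m:ℝ)+1)*((m:ℝ)+2)))^2
      = 4*((-1:ℝ)^m * (N.choose m : ℝ) / (((m:ℝ)+1)^2))
        - 8*((-1:ℝ)^m * (N.choose m : ℝ) / (((m:ℝ)+1)*((m:ℝ)+2)))
        + 4*((-1:ℝ)^m * (N.choose m : ℝ) / (((m:ℝ)+2)^2)) := by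
    intro m _
    have hm1 : (m:ℝ)+1 ≠ 0 := by positivity
    have hm2 : (m:ℝ)+2 ≠ 0 := by positivity
    field_simp
    ring
  rw [Finset.sum_congr rfl split]
  rw [Finset.sum_add_distrib, Finset.sum_sub_distrib, ← Finset.mul_sum, ← Finset.mul_sum,
      ← Finset.mul_sum, S2_sum, S3_sum, S4_sum]
  ring

lemma inner_harm (n : ℕ) :
    ∑ d ∈ range n, 2/((d:ℝ)+2) = 2*(harm (n+1) - 1) := by
  have h : harm (n+1) = (∑ d ∈ range n, 1/((d:ℝ)+1+1)) + 1/((0:ℕ)+1:ℝ) := by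
    rw [harm, Finset.sum_range_succ']
    push_cast
    apply congrArg₂ _ ?_ rfl
    apply Finset.sum_congr rfl
    intro d _
    norm_num
  rw [h, mul_sub, mul_add, Finset.mul_sum]
  norm_num
  apply Finset.sum_congr rfl
  intro d _
  rw [div_eq_mul_inv]
  norm_num
  ring_nf

lemma RHS_closed (n : ℕ) :
    ∑ j ∈ range n, ∑ d ∈ range j, 2/((d:ℝ)+2) = 2*(((n:ℝ)+1)*harm n - 2*n) := by
  induction n with
  | zero => simp [harm]
  | succ n ih =>
    rw [Finset.sum_range_succ, ih, inner_harm, harm_succ]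
    have hn : (n:ℝ)+1 ≠ 0 := by positivity
    push_cast
    field_simp
    ring

lemma gauss_sum (n : ℕ) : (∑ j ∈ range n, (j:ℝ)) * 2 = (n:ℝ) * ((n:ℝ) - 1) := by
  induction n with
  | zero => simp
  | succ n ih =>
    rw [Finset.sum_range_succ]
    push_cast
    push_cast at ih
    linarith

lemma main_identity (N : ℕ) :
    (∑ j ∈ range (N+2), (j:ℝ)) *
      (∑ m ∈ range (N+1), (-1:ℝ)^m * (N.choose m : ℝ) * (2/(((m:ℝ)+1)*((m:ℝ)+2)))^2)
    = ∑ j ∈ range (N+2), ∑ d ∈ range j, 2/((d:ℝ)+2) := by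
  rw [Q_closed, RHS_closed]
  have hg := gauss_sum (N+2)
  push_cast at hg
  have h1 := harm_succ (N+1)
  push_cast at h1
  have hN1 : (N:ℝ)+1 ≠ 0 := by positivity
  have hN2 : (N:ℝ)+2 ≠ 0 := by positivity
  have hs : (∑ j ∈ range (N+2), (j:ℝ)) = ((N:ℝ)+2)*((N:ℝ)+1)/2 := by linarith
  rw [hs, h1]
  push_cast
  field_simp
  ring

noncomputable def muI : Measure ℝ := volume.restrict (Set.Icc 0 1)
noncomputable def muSq : Measure (ℝ × ℝ) :=
  volume.restrict (Set.Icc (0:ℝ) 1 ×ˢ Set.Icc (0:ℝ) 1)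

lemma muSq_eq : muSq = muI.prod muI := by
  rw [muI, muSq, Measure.prod_restrict, ← Measure.volume_eq_prod]

instance : IsProbabilityMeasure muI := by
  constructor
  rw [muI, Measure.restrict_apply MeasurableSet.univ, Set.univ_inter, Real.volume_Icc]
  norm_num

instance : IsProbabilityMeasure muSq := by
  rw [muSq_eq]; infer_instance

noncomputable def phi (m : ℕ) : ℝ → ℝ := fun s => (s^(m+1) + (1-s)^(m+1)) / ((m:ℝ)+1)

lemma phi_continuous (m : ℕ) : Continuous (phi m) := by
  unfold phi; fun_prop

lemma integral_pow_sub_left (m : ℕ) (a : ℝ) :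
    ∫ t in (0:ℝ)..a, (a - t)^m = a^(m+1) / ((m:ℝ)+1) := by
  rw [intervalIntegral.integral_comp_sub_left (fun u => u^m) a]
  simp [integral_pow]

lemma abs_int (m : ℕ) {s : ℝ} (hs : s ∈ Set.Icc (0:ℝ) 1) :
    ∫ t, |s - t|^m ∂muI = phi m s := by
  obtain ⟨h0, h1⟩ := hs
  have hI : ∀ a b : ℝ, IntervalIntegrable (fun t => |s - t|^m) volume a b := by
    intro a b
    apply Continuous.intervalIntegrable
    fun_prop
  rw [muI, integral_Icc_eq_integral_Ioc, ← intervalIntegral.integral_of_le zero_le_one]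
  rw [← intervalIntegral.integral_add_adjacent_intervals (hI 0 s) (hI s 1)]
  have e1 : ∫ t in (0:ℝ)..s, |s - t|^m = s^(m+1) / ((m:ℝ)+1) := by
    rw [← integral_pow_sub_left m s]
    apply intervalIntegral.integral_congr
    intro t ht
    rw [Set.uIcc_of_le h0] at ht
    show |s - t|^m = (s - t)^m
    rw [abs_of_nonneg (by linarith [ht.2] : (0:ℝ) ≤ s - t)]
  have e2 : ∫ t in s..(1:ℝ), |s - t|^m = (1-s)^(m+1) / ((m:ℝ)+1) := by
    have : ∫ t in s..(1:ℝ), |s - t|^m = ∫ t in s..(1:ℝ), (t - s)^m := by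
      apply intervalIntegral.integral_congr
      intro t ht
      rw [Set.uIcc_of_le h1] at ht
      show |s - t|^m = (t - s)^m
      rw [abs_of_nonpos (by linarith [ht.1] : s - t ≤ 0), neg_sub]
    rw [this, intervalIntegral.integral_comp_sub_right (fun u => u^m) s]
    simp [integral_pow]
  rw [e1, e2, phi]
  ring

lemma phi_integral (m : ℕ) : ∫ s, phi m s ∂muI = 2 / (((m:ℝ)+1) * ((m:ℝ)+2)) := by
  rw [muI, integral_Icc_eq_integral_Ioc, ← intervalIntegral.integral_of_le zero_le_one]
  unfold phi
  rw [intervalIntegral.integral_div]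
  have e1 : ∫ s in (0:ℝ)..1, (s^(m+1) + (1-s)^(m+1))
      = (∫ s in (0:ℝ)..1, s^(m+1)) + ∫ s in (0:ℝ)..1, (1-s)^(m+1) := by
    apply intervalIntegral.integral_add <;>
      { apply Continuous.intervalIntegrable; fun_prop }
  have e2 : ∫ s in (0:ℝ)..1, (1-s)^(m+1) = 1 / ((m:ℝ)+2) := by
    have h := integral_pow_sub_left (m+1) 1
    norm_num at h
    rw [h]
    ring
  rw [e1, e2, integral_pow]
  push_cast
  have hm1 : (m:ℝ)+1 ≠ 0 := by positivity
  have hm2 : (m:ℝ)+2 ≠ 0 := by positivity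
  field_simp
  ring

lemma one_sub_pow_expand (N : ℕ) (t : ℝ) :
    (1 - t)^N = ∑ m ∈ Finset.range (N+1), (-1:ℝ)^m * (N.choose m : ℝ) * t^m := by
  have h := add_pow (-t) 1 N
  simp only [one_pow, mul_one] at h
  have : (1 - t : ℝ) = -t + 1 := by ring
  rw [this, h]
  apply Finset.sum_congr rfl
  intro m _
  rw [neg_pow]
  ring

def I2 : Set (ℝ × ℝ) := Set.Icc (0:ℝ) 1 ×ˢ Set.Icc (0:ℝ) 1

lemma I2_compact : IsCompact I2 := IsCompact.prod isCompact_Icc isCompact_Icc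

lemma I2_measurable : MeasurableSet I2 :=
  (measurableSet_Icc).prod (measurableSet_Icc)

noncomputable def gN (N : ℕ) (a b : ℝ × ℝ) : ℝ := (1 - |a.1 - b.1| * |a.2 - b.2|)^N

lemma inner_int (N : ℕ) {a : ℝ × ℝ} (ha : a ∈ I2) :
    ∫ b, gN N a b ∂muSq
      = ∑ m ∈ Finset.range (N+1),
          (-1:ℝ)^m * (N.choose m : ℝ) * (phi m a.1 * phi m a.2) := by
  have expand : ∀ b : ℝ × ℝ, gN N a b
      = ∑ m ∈ Finset.range (N+1),
          (-1:ℝ)^m * (N.choose m : ℝ) * (|a.1 - b.1|^m * |a.2 - b.2|^m) := by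
    intro b
    rw [gN, one_sub_pow_expand]
    apply Finset.sum_congr rfl
    intro m _
    rw [mul_pow]
  simp_rw [expand]
  rw [integral_finset_sum]
  · apply Finset.sum_congr rfl
    intro m _
    rw [integral_const_mul, muSq_eq,
        integral_prod_mul (fun t => |a.1 - t|^m) (fun t => |a.2 - t|^m),
        abs_int m ha.1, abs_int m ha.2]
  · intro m _
    apply Integrable.const_mul
    rw [muSq]
    apply ContinuousOn.integrableOn_compact I2_compact
    apply Continuous.continuousOn
    fun_prop

lemma outer_int (N : ℕ) :
    ∫ a, (∫ b, gN N a b ∂muSq) ∂muSq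
      = ∑ m ∈ Finset.range (N+1),
          (-1:ℝ)^m * (N.choose m : ℝ) * (2/(((m:ℝ)+1)*((m:ℝ)+2)))^2 := by
  have step1 : ∫ a, (∫ b, gN N a b ∂muSq) ∂muSq
      = ∫ a, (∑ m ∈ Finset.range (N+1),
          (-1:ℝ)^m * (N.choose m : ℝ) * (phi m a.1 * phi m a.2)) ∂muSq := by
    rw [muSq]
    apply setIntegral_congr_fun I2_measurable
    intro a ha
    exact inner_int N ha
  rw [step1, integral_finset_sum]
  · apply Finset.sum_congr rfl
    intro m _
    rw [integral_const_mul, muSq_eq,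
        integral_prod_mul (fun t => phi m t) (fun t => phi m t), phi_integral]
    ring
  · intro m _
    apply Integrable.const_mul
    rw [muSq]
    apply ContinuousOn.integrableOn_compact I2_compact
    apply Continuous.continuousOn
    exact ((phi_continuous m).comp continuous_fst).mul ((phi_continuous m).comp continuous_snd)

/-- `P i` and `P j` span an empty rectangle with respect to the points `P 1, …, P n`:
no point `P k` lies in the open interior of the axis-aligned rectangle spanned by
`P i` and `P j`. -/
def PSpansEmpty (n : ℕ) (P : Fin n → ℝ × ℝ) (i j : Fin n) : Prop :=
  ∀ k : Fin n, ¬ (min (P i).1 (P j).1 < (P k).1 ∧ (P k).1 < max (P i).1 (P j).1 ∧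
                  min (P i).2 (P j).2 < (P k).2 ∧ (P k).2 < max (P i).2 (P j).2)

def InRect (a b c : ℝ × ℝ) : Prop :=
  min a.1 b.1 < c.1 ∧ c.1 < max a.1 b.1 ∧ min a.2 b.2 < c.2 ∧ c.2 < max a.2 b.2

lemma not_inRect_left (a b : ℝ × ℝ) : ¬ InRect a b a := by
  rintro ⟨h1, h2, -⟩
  rcases le_total a.1 b.1 with h | h
  · rw [min_eq_left h] at h1; exact lt_irrefl _ h1
  · rw [max_eq_left h] at h2; exact lt_irrefl _ h2

lemma not_inRect_right (a b : ℝ × ℝ) : ¬ InRect a b b := by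
  rintro ⟨h1, h2, -⟩
  rcases le_total a.1 b.1 with h | h
  · rw [max_eq_right h] at h2; exact lt_irrefl _ h2
  · rw [min_eq_right h] at h1; exact lt_irrefl _ h1

def GSet (a b : ℝ × ℝ) : Set (ℝ × ℝ) := {c | ¬ InRect a b c}

lemma GSet_compl (a b : ℝ × ℝ) :
    (GSet a b)ᶜ = Set.Ioo (min a.1 b.1) (max a.1 b.1) ×ˢ Set.Ioo (min a.2 b.2) (max a.2 b.2) := by
  ext c
  simp only [Set.mem_compl_iff, GSet, Set.mem_setOf_eq, not_not, Set.mem_prod, Set.mem_Ioo, InRect]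
  tauto

lemma GSet_measurable (a b : ℝ × ℝ) : MeasurableSet (GSet a b) := by
  rw [← compl_compl (GSet a b), GSet_compl]
  exact (measurableSet_Ioo.prod measurableSet_Ioo).compl

lemma muSq_GSet {a b : ℝ × ℝ} (ha : a ∈ I2) (hb : b ∈ I2) :
    (muSq (GSet a b)).toReal = 1 - |a.1 - b.1| * |a.2 - b.2| := by
  have hU : (GSet a b)ᶜ ⊆ I2 := by
    rw [GSet_compl]
    rintro ⟨c1, c2⟩ ⟨hc1, hc2⟩
    obtain ⟨⟨ha1, ha1'⟩, ha2, ha2'⟩ := ha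
    obtain ⟨⟨hb1, hb1'⟩, hb2, hb2'⟩ := hb
    constructor
    · constructor
      · exact le_trans (le_min ha1 hb1) (le_of_lt hc1.1)
      · exact le_trans (le_of_lt hc1.2) (max_le ha1' hb1')
    · constructor
      · exact le_trans (le_min ha2 hb2) (le_of_lt hc2.1)
      · exact le_trans (le_of_lt hc2.2) (max_le ha2' hb2')
  have hI2 : muSq = volume.restrict I2 := rfl
  have hUvol : muSq ((GSet a b)ᶜ) = ENNReal.ofReal (|a.1 - b.1| * |a.2 - b.2|) := by
    rw [hI2]
    rw [Measure.restrict_apply (GSet_measurable a b).compl]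
    rw [Set.inter_eq_self_of_subset_left hU, GSet_compl, Measure.volume_eq_prod,
        Measure.prod_prod, Real.volume_Ioo, Real.volume_Ioo, max_sub_min_eq_abs,
        max_sub_min_eq_abs, ← ENNReal.ofReal_mul (abs_nonneg _), abs_sub_comm b.1 a.1,
        abs_sub_comm b.2 a.2]
  have hcompl := measure_compl (μ := muSq) (GSet_measurable a b).compl (measure_ne_top _ _)
  rw [compl_compl, measure_univ] at hcompl
  rw [hcompl, hUvol]
  have h1 : |a.1 - b.1| ≤ 1 := by
    obtain ⟨⟨ha1, ha1'⟩, -⟩ := ha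
    obtain ⟨⟨hb1, hb1'⟩, -⟩ := hb
    rw [abs_le]; constructor <;> linarith
  have h2 : |a.2 - b.2| ≤ 1 := by
    obtain ⟨-, ha2, ha2'⟩ := ha
    obtain ⟨-, hb2, hb2'⟩ := hb
    rw [abs_le]; constructor <;> linarith
  have hle : ENNReal.ofReal (|a.1 - b.1| * |a.2 - b.2|) ≤ 1 := by
    rw [← ENNReal.ofReal_one]
    apply ENNReal.ofReal_le_ofReal
    calc |a.1 - b.1| * |a.2 - b.2| ≤ 1 * 1 := by
          apply mul_le_mul h1 h2 (abs_nonneg _) zero_le_one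
      _ = 1 := by ring
  rw [ENNReal.toReal_sub_of_le hle (by norm_num), ENNReal.toReal_ofReal
        (by positivity), ENNReal.toReal_one]

lemma measurable_inRectSet :
    MeasurableSet {t : ((ℝ×ℝ) × (ℝ×ℝ)) × (ℝ×ℝ) | InRect t.1.1 t.1.2 t.2} := by
  unfold InRect
  refine MeasurableSet.inter ?_ (MeasurableSet.inter ?_ (MeasurableSet.inter ?_ ?_))
  · exact measurableSet_lt (f := fun t : ((ℝ×ℝ) × (ℝ×ℝ)) × (ℝ×ℝ) => min t.1.1.1 t.1.2.1)
      (g := fun t => t.2.1) (by fun_prop) (by fun_prop)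
  · exact measurableSet_lt (f := fun t : ((ℝ×ℝ) × (ℝ×ℝ)) × (ℝ×ℝ) => t.2.1)
      (g := fun t => max t.1.1.1 t.1.2.1) (by fun_prop) (by fun_prop)
  · exact measurableSet_lt (f := fun t : ((ℝ×ℝ) × (ℝ×ℝ)) × (ℝ×ℝ) => min t.1.1.2 t.1.2.2)
      (g := fun t => t.2.2) (by fun_prop) (by fun_prop)
  · exact measurableSet_lt (f := fun t : ((ℝ×ℝ) × (ℝ×ℝ)) × (ℝ×ℝ) => t.2.2)
      (g := fun t => max t.1.1.2 t.1.2.2) (by fun_prop) (by fun_prop)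

lemma pair_prob (n : ℕ) (i j : Fin n) (hij : i ≠ j) :
    ∫ P : Fin n → ℝ × ℝ, (if PSpansEmpty n P i j then (1:ℝ) else 0)
        ∂(Measure.pi fun _ : Fin n => muSq)
      = ∫ a, (∫ b, gN (n-2) a b ∂muSq) ∂muSq := by
  classical
  set p : Fin n → Prop := fun k => k = i ∨ k = j with hp
  let e1 := MeasurableEquiv.piEquivPiSubtypeProd (fun _ : Fin n => ℝ × ℝ) p
  have h1 := measurePreserving_piEquivPiSubtypeProd (fun _ : Fin n => muSq) p
  set ii : Subtype p := ⟨i, Or.inl rfl⟩ with hii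
  set jj : Subtype p := ⟨j, Or.inr rfl⟩ with hjj
  -- rewrite the integrand through e1
  have key : ∀ x : Subtype p → ℝ × ℝ, ∀ y : {k // ¬ p k} → ℝ × ℝ,
      PSpansEmpty n (e1.symm (x, y)) i j ↔ ∀ k : {k // ¬ p k}, y k ∈ GSet (x ii) (x jj) := by
    intro x y
    have happ : ∀ k : Fin n, (e1.symm (x, y)) k = if h : p k then x ⟨k, h⟩ else y ⟨k, h⟩ := by
      intro k; rfl
    have hPi : (e1.symm (x, y)) i = x ii := by
      rw [happ i, dif_pos (Or.inl rfl : p i)]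
    have hPj : (e1.symm (x, y)) j = x jj := by
      rw [happ j, dif_pos (Or.inr rfl : p j)]
    constructor
    · intro h k
      have := h k.val
      rw [happ k.val, dif_neg k.prop, hPi, hPj] at this
      exact this
    · intro h k
      rw [hPi, hPj]
      by_cases hk : p k
      · rcases hk with hk | hk
        · subst hk
          rw [show (e1.symm (x, y)) k = x ii from hPi]
          exact not_inRect_left _ _
        · subst hk
          rw [show (e1.symm (x, y)) k = x jj from hPj]
          exact not_inRect_right _ _
      · rw [happ k, dif_neg hk]
        exact h ⟨k, hk⟩
  -- the integrand on the product side, as an indicator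
  set T : ((Subtype p → ℝ × ℝ) × ({k // ¬ p k} → ℝ × ℝ)) → ℝ :=
    fun w => if (∀ k : {k // ¬ p k}, w.2 k ∈ GSet (w.1 ii) (w.1 jj)) then 1 else 0 with hT
  have step1 : ∫ P : Fin n → ℝ × ℝ, (if PSpansEmpty n P i j then (1:ℝ) else 0)
        ∂(Measure.pi fun _ : Fin n => muSq)
      = ∫ w, T w ∂((Measure.pi fun _ : Subtype p => muSq).prod
          (Measure.pi fun _ : {k // ¬ p k} => muSq)) := by
    rw [← h1.integral_comp']
    apply integral_congr_ae
    filter_upwards with P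
    show (if PSpansEmpty n P i j then (1:ℝ) else 0) = T (e1 P)
    have : e1 P = ((e1 P).1, (e1 P).2) := rfl
    rw [hT]
    simp only
    congr 1
    rw [← key (e1 P).1 (e1 P).2]
    rw [show e1.symm ((e1 P).1, (e1 P).2) = P by simp [e1]]
  -- measurability / integrability of T
  have hTSmeas : MeasurableSet {w : (Subtype p → ℝ × ℝ) × ({k // ¬ p k} → ℝ × ℝ) |
      ∀ k : {k // ¬ p k}, w.2 k ∈ GSet (w.1 ii) (w.1 jj)} := by
    have heq : {w : (Subtype p → ℝ × ℝ) × ({k // ¬ p k} → ℝ × ℝ) |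
        ∀ k : {k // ¬ p k}, w.2 k ∈ GSet (w.1 ii) (w.1 jj)}
      = ⋂ k : {k // ¬ p k}, (fun w : (Subtype p → ℝ × ℝ) × ({k // ¬ p k} → ℝ × ℝ) =>
          ((w.1 ii, w.1 jj), w.2 k)) ⁻¹' {t : ((ℝ×ℝ) × (ℝ×ℝ)) × (ℝ×ℝ) | InRect t.1.1 t.1.2 t.2}ᶜ := by
      ext w
      simp only [Set.mem_setOf_eq, Set.mem_iInter, Set.mem_preimage, Set.mem_compl_iff]
      rfl
    rw [heq]
    apply MeasurableSet.iInter
    intro k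
    apply MeasurableSet.preimage measurable_inRectSet.compl
    apply Measurable.prodMk
    · apply Measurable.prodMk
      · exact (measurable_pi_apply ii).comp measurable_fst
      · exact (measurable_pi_apply jj).comp measurable_fst
    · exact (measurable_pi_apply k).comp measurable_snd
  have hTind : T = Set.indicator {w : (Subtype p → ℝ × ℝ) × ({k // ¬ p k} → ℝ × ℝ) |
      ∀ k : {k // ¬ p k}, w.2 k ∈ GSet (w.1 ii) (w.1 jj)} (fun _ => (1:ℝ)) := by
    funext w
    rw [hT, Set.indicator_apply]
    simp only [Set.mem_setOf_eq]
  have hTint : Integrable T ((Measure.pi fun _ : Subtype p => muSq).prod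
      (Measure.pi fun _ : {k // ¬ p k} => muSq)) := by
    rw [hTind, integrable_indicator_iff hTSmeas]
    exact integrableOn_const (measure_lt_top _ _).ne
  rw [step1, integral_prod _ hTint]
  -- inner integral
  have card_pair : Fintype.card {k : Fin n // p k} = 2 := by
    rw [Fintype.card_subtype]
    have : Finset.univ.filter p = {i, j} := by
      ext k
      simp [hp, Finset.mem_insert]
    rw [this, Finset.card_insert_of_notMem (by simp [hij]), Finset.card_singleton]
  have card_rest : Fintype.card {k : Fin n // ¬ p k} = n - 2 := by
    rw [Fintype.card_subtype_compl, card_pair, Fintype.card_fin]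
  have inner : ∀ x : Subtype p → ℝ × ℝ,
      ∫ y, T (x, y) ∂(Measure.pi fun _ : {k // ¬ p k} => muSq)
        = ((muSq (GSet (x ii) (x jj))).toReal)^(n-2) := by
    intro x
    have hset : ∀ y : {k // ¬ p k} → ℝ × ℝ,
        (∀ k : {k // ¬ p k}, y k ∈ GSet (x ii) (x jj))
          ↔ y ∈ Set.pi Set.univ (fun _ => GSet (x ii) (x jj)) := by
      intro y
      rw [Set.mem_univ_pi]
    have : (fun y => T (x, y)) = Set.indicator
        (Set.pi Set.univ (fun _ : {k // ¬ p k} => GSet (x ii) (x jj))) (fun _ => (1:ℝ)) := by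
      funext y
      rw [hT, Set.indicator_apply]
      simp only [Set.mem_setOf_eq, hset y]
    rw [this]
    have hG := GSet_measurable (x ii) (x jj)
    rw [show (fun _ : {k // ¬ p k} → ℝ × ℝ => (1:ℝ)) = (1 : ({k // ¬ p k} → ℝ × ℝ) → ℝ) from rfl]
    rw [integral_indicator_one (MeasurableSet.univ_pi fun _ => hG)]
    rw [Measure.real, Measure.pi_pi]
    rw [Finset.prod_const, ← ENNReal.toReal_pow, Finset.card_univ, card_rest]
  simp_rw [inner]
  -- build the equivalence Fin 2 ≃ Subtype p
  have hji : ¬ ((jj : Subtype p).val = i) := fun h => hij h.symm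
  let e2 : Fin 2 ≃ Subtype p :=
    { toFun := ![ii, jj]
      invFun := fun k => if k.val = i then 0 else 1
      left_inv := by
        intro t
        fin_cases t
        · show (if (ii : Subtype p).val = i then (0 : Fin 2) else 1) = 0
          rw [if_pos rfl]
        · show (if (jj : Subtype p).val = i then (0 : Fin 2) else 1) = 1
          rw [if_neg hji]
      right_inv := by
        intro k
        rcases k.prop with h | h
        · show ![ii, jj] (if k.val = i then (0 : Fin 2) else 1) = k
          rw [if_pos h]
          exact Subtype.ext h.symm
        · show ![ii, jj] (if k.val = i then (0 : Fin 2) else 1) = k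
          rw [if_neg (by rw [h]; exact fun hh => hij hh.symm)]
          exact Subtype.ext h.symm }
  have h2 := measurePreserving_piCongrLeft (fun _ : Subtype p => muSq) e2
  have h3 := measurePreserving_piFinTwo (fun _ : Fin 2 => muSq)
  have outer1 : (∫ x, ((muSq (GSet (x ii) (x jj))).toReal)^(n-2)
        ∂(Measure.pi fun _ : Subtype p => muSq))
      = ∫ z : (ℝ×ℝ) × (ℝ×ℝ), ((muSq (GSet z.1 z.2)).toReal)^(n-2) ∂(muSq.prod muSq) := by
    rw [← h2.integral_comp', ← h3.integral_comp']
    apply integral_congr_ae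
    filter_upwards with w
    have h0 : (MeasurableEquiv.piCongrLeft (fun _ : Subtype p => ℝ × ℝ) e2 w) ii = w 0 := by
      rw [show ii = e2 0 from rfl, MeasurableEquiv.coe_piCongrLeft,
          Equiv.piCongrLeft_apply_apply]
    have h1' : (MeasurableEquiv.piCongrLeft (fun _ : Subtype p => ℝ × ℝ) e2 w) jj = w 1 := by
      rw [show jj = e2 1 from rfl, MeasurableEquiv.coe_piCongrLeft,
          Equiv.piCongrLeft_apply_apply]
    rw [h0, h1']
    rfl
  rw [outer1]
  have prodrestrict : muSq.prod muSq = (volume.prod volume).restrict (I2 ×ˢ I2) := by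
    rw [show muSq = volume.restrict I2 from rfl, Measure.prod_restrict]
  have outer2 : ∫ z : (ℝ×ℝ) × (ℝ×ℝ), ((muSq (GSet z.1 z.2)).toReal)^(n-2) ∂(muSq.prod muSq)
      = ∫ z : (ℝ×ℝ) × (ℝ×ℝ), gN (n-2) z.1 z.2 ∂(muSq.prod muSq) := by
    rw [prodrestrict]
    apply setIntegral_congr_fun (I2_measurable.prod I2_measurable)
    intro z hz
    show ((muSq (GSet z.1 z.2)).toReal)^(n-2) = gN (n-2) z.1 z.2
    rw [muSq_GSet hz.1 hz.2]
    rfl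
  rw [outer2]
  have hgint : Integrable (fun z : (ℝ×ℝ)×(ℝ×ℝ) => gN (n-2) z.1 z.2) (muSq.prod muSq) := by
    rw [prodrestrict]
    apply ContinuousOn.integrableOn_compact (I2_compact.prod I2_compact)
    apply Continuous.continuousOn
    unfold gN
    fun_prop
  rw [integral_prod _ hgint]

lemma measurableSet_span (n : ℕ) (i j : Fin n) :
    MeasurableSet {P : Fin n → ℝ × ℝ | PSpansEmpty n P i j} := by
  have heq : {P : Fin n → ℝ × ℝ | PSpansEmpty n P i j}
      = ⋂ k : Fin n, (fun P : Fin n → ℝ × ℝ => ((P i, P j), P k)) ⁻¹'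
          {t : ((ℝ×ℝ) × (ℝ×ℝ)) × (ℝ×ℝ) | InRect t.1.1 t.1.2 t.2}ᶜ := by
    ext P
    simp only [Set.mem_setOf_eq, Set.mem_iInter, Set.mem_preimage, Set.mem_compl_iff]
    rfl
  rw [heq]
  refine MeasurableSet.iInter fun k => MeasurableSet.preimage measurable_inRectSet.compl ?_
  exact (Measurable.prodMk ((measurable_pi_apply i).prodMk (measurable_pi_apply j))
    (measurable_pi_apply k))

lemma inner_reflect (b : ℕ) :
    ∑ a ∈ Finset.range b, 2/(((b - a + 1 : ℕ)):ℝ) = ∑ d ∈ Finset.range b, 2/((d:ℝ)+2) := by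
  rw [← Finset.sum_range_reflect (fun a => 2/(((b - a + 1 : ℕ)):ℝ)) b]
  apply Finset.sum_congr rfl
  intro j hj
  rw [Finset.mem_range] at hj
  have : b - (b - 1 - j) + 1 = j + 2 := by omega
  rw [this]
  push_cast
  ring_nf

lemma ite_range_sum (n b : ℕ) (hb : b ≤ n) (g : ℕ → ℝ) :
    ∑ a ∈ Finset.range n, (if a < b then g a else 0) = ∑ a ∈ Finset.range b, g a := by
  rw [← Finset.sum_filter]
  congr 1
  ext a
  simp only [Finset.mem_filter, Finset.mem_range]
  omega

lemma count_identity (n : ℕ) :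
    (∑ a ∈ Finset.range n, ∑ b ∈ Finset.range n,
        if a < b then (∑ m ∈ Finset.range (n-2+1),
          (-1:ℝ)^m * ((n-2).choose m : ℝ) * (2/(((m:ℝ)+1)*((m:ℝ)+2)))^2) else 0)
    = ∑ a ∈ Finset.range n, ∑ b ∈ Finset.range n,
        if a < b then 2/(((b - a + 1 : ℕ)):ℝ) else 0 := by
  match n with
  | 0 => simp
  | 1 =>
    simp
  | (N+2) =>
    have hL : (∑ a ∈ Finset.range (N+2), ∑ b ∈ Finset.range (N+2),
        if a < b then (∑ m ∈ Finset.range (N+2-2+1),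
          (-1:ℝ)^m * ((N+2-2).choose m : ℝ) * (2/(((m:ℝ)+1)*((m:ℝ)+2)))^2) else 0)
        = ∑ b ∈ Finset.range (N+2), ∑ a ∈ Finset.range (N+2),
        if a < b then (∑ m ∈ Finset.range (N+2-2+1),
          (-1:ℝ)^m * ((N+2-2).choose m : ℝ) * (2/(((m:ℝ)+1)*((m:ℝ)+2)))^2) else 0 :=
      Finset.sum_comm
    have hR : (∑ a ∈ Finset.range (N+2), ∑ b ∈ Finset.range (N+2),
        if a < b then 2/(((b - a + 1 : ℕ)):ℝ) else 0)
        = ∑ b ∈ Finset.range (N+2), ∑ a ∈ Finset.range (N+2),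
        if a < b then 2/(((b - a + 1 : ℕ)):ℝ) else 0 :=
      Finset.sum_comm
    rw [hL, hR]
    have lhs : ∀ b ∈ Finset.range (N+2),
        (∑ a ∈ Finset.range (N+2), if a < b then (∑ m ∈ Finset.range (N+2-2+1),
          (-1:ℝ)^m * ((N+2-2).choose m : ℝ) * (2/(((m:ℝ)+1)*((m:ℝ)+2)))^2) else 0)
        = (b:ℝ) * (∑ m ∈ Finset.range (N+1),
          (-1:ℝ)^m * ((N).choose m : ℝ) * (2/(((m:ℝ)+1)*((m:ℝ)+2)))^2) := by
      intro b hb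
      rw [Finset.mem_range] at hb
      rw [ite_range_sum _ _ (le_of_lt hb), Finset.sum_const, Finset.card_range,
          nsmul_eq_mul]
      norm_num
    have rhs : ∀ b ∈ Finset.range (N+2),
        (∑ a ∈ Finset.range (N+2), if a < b then 2/(((b - a + 1 : ℕ)):ℝ) else 0)
        = ∑ d ∈ Finset.range b, 2/((d:ℝ)+2) := by
      intro b hb
      rw [Finset.mem_range] at hb
      rw [ite_range_sum _ _ (le_of_lt hb), inner_reflect]
    rw [Finset.sum_congr rfl lhs, Finset.sum_congr rfl rhs, ← Finset.sum_mul]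
    exact main_identity N

/-- For `n` independent uniform random points in the unit square, the expected number
of pairs `i < j` spanning an empty rectangle equals `∑_{i<j} 2/(j-i+1)`, the expected
number of comparisons of random quicksort. -/
theorem expected_span2_eq_quicksort (n : ℕ) :
    (∫ P : Fin n → ℝ × ℝ,
        ((Finset.univ.filter (fun ij : Fin n × Fin n =>
            ij.1 < ij.2 ∧ PSpansEmpty n P ij.1 ij.2)).card : ℝ)
      ∂ (Measure.pi fun _ : Fin n =>
          volume.restrict (Set.Icc (0:ℝ) 1 ×ˢ Set.Icc (0:ℝ) 1)))
    = ∑ ij ∈ Finset.univ.filter (fun ij : Fin n × Fin n => ij.1 < ij.2),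
        2 / ((ij.2.val - ij.1.val + 1 : ℕ) : ℝ) := by
  have hmu : (Measure.pi fun _ : Fin n =>
      volume.restrict (Set.Icc (0:ℝ) 1 ×ˢ Set.Icc (0:ℝ) 1))
      = Measure.pi fun _ : Fin n => muSq := rfl
  rw [hmu]
  have hcard : (fun P : Fin n → ℝ × ℝ =>
      ((Finset.univ.filter (fun ij : Fin n × Fin n =>
          ij.1 < ij.2 ∧ PSpansEmpty n P ij.1 ij.2)).card : ℝ))
      = fun P => ∑ ij : Fin n × Fin n,
          (if ij.1 < ij.2 ∧ PSpansEmpty n P ij.1 ij.2 then (1:ℝ) else 0) := by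
    funext P
    rw [Finset.card_filter]
    push_cast
    apply Finset.sum_congr rfl
    intro ij _
    split_ifs <;> simp
  rw [hcard]
  have hint : ∀ ij ∈ (Finset.univ : Finset (Fin n × Fin n)),
      Integrable (fun P : Fin n → ℝ×ℝ =>
        if ij.1 < ij.2 ∧ PSpansEmpty n P ij.1 ij.2 then (1:ℝ) else 0)
        (Measure.pi fun _ : Fin n => muSq) := by
    intro ij _
    by_cases h : ij.1 < ij.2
    · have heq : (fun P : Fin n → ℝ×ℝ =>
          if ij.1 < ij.2 ∧ PSpansEmpty n P ij.1 ij.2 then (1:ℝ) else 0)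
          = Set.indicator {P : Fin n → ℝ×ℝ | PSpansEmpty n P ij.1 ij.2} (fun _ => (1:ℝ)) := by
        funext P
        rw [Set.indicator_apply]
        simp [h, Set.mem_setOf_eq]
      rw [heq, integrable_indicator_iff (measurableSet_span n ij.1 ij.2)]
      exact integrableOn_const (measure_lt_top _ _).ne
    · have heq : (fun P : Fin n → ℝ×ℝ =>
          if ij.1 < ij.2 ∧ PSpansEmpty n P ij.1 ij.2 then (1:ℝ) else 0) = fun _ => 0 := by
        funext P; simp [h]
      rw [heq]
      exact integrable_zero _ _ _
  rw [integral_finset_sum _ hint]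
  have hpair : ∀ ij ∈ (Finset.univ : Finset (Fin n × Fin n)),
      (∫ P, (if ij.1 < ij.2 ∧ PSpansEmpty n P ij.1 ij.2 then (1:ℝ) else 0)
        ∂(Measure.pi fun _ : Fin n => muSq))
      = if ij.1 < ij.2 then (∑ m ∈ Finset.range (n-2+1),
          (-1:ℝ)^m * ((n-2).choose m : ℝ) * (2/(((m:ℝ)+1)*((m:ℝ)+2)))^2) else 0 := by
    intro ij _
    by_cases h : ij.1 < ij.2
    · rw [if_pos h]
      have heq : (fun P : Fin n → ℝ×ℝ =>
          if ij.1 < ij.2 ∧ PSpansEmpty n P ij.1 ij.2 then (1:ℝ) else 0)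
          = fun P => if PSpansEmpty n P ij.1 ij.2 then (1:ℝ) else 0 := by
        funext P; simp [h]
      rw [heq, pair_prob n ij.1 ij.2 (Fin.ne_of_lt h), outer_int]
    · rw [if_neg h]
      have heq : (fun P : Fin n → ℝ×ℝ =>
          if ij.1 < ij.2 ∧ PSpansEmpty n P ij.1 ij.2 then (1:ℝ) else 0) = fun _ => (0:ℝ) := by
        funext P; simp [h]
      rw [heq, integral_zero]
  rw [Finset.sum_congr rfl hpair, Finset.sum_filter]
  rw [Fintype.sum_prod_type, Fintype.sum_prod_type]
  simp_rw [Fin.lt_def]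
  have convert2 : ∀ G : ℕ → ℕ → ℝ, (∑ i : Fin n, ∑ j : Fin n, G i.val j.val)
      = ∑ a ∈ Finset.range n, ∑ b ∈ Finset.range n, G a b := by
    intro G
    rw [Fin.sum_univ_eq_sum_range (fun a => ∑ j : Fin n, G a j.val) n]
    apply Finset.sum_congr rfl
    intro a _
    rw [Fin.sum_univ_eq_sum_range (fun b => G a b) n]
  rw [convert2 (fun a b => if a < b then (∑ m ∈ Finset.range (n-2+1),
        (-1:ℝ)^m * ((n-2).choose m : ℝ) * (2/(((m:ℝ)+1)*((m:ℝ)+2)))^2) else 0),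
      convert2 (fun a b => if a < b then 2/(((b - a + 1 : ℕ)):ℝ) else 0)]
  exact count_identity n
end

section
/- For every m ≥ 1 there exists a generic set Y of 8m points in ℝ³ whose box graph G_b(Y) has at least 28·m² edges (so box graphs on n points can have (7/16)·n² edges). -/
open scoped Classical

/-- A finite set in ℝ³ is generic if no two distinct points agree in any coordinate. -/
def Generic3 (Y : Finset (Fin 3 → ℝ)) : Prop :=
  ∀ p ∈ Y, ∀ q ∈ Y, p ≠ q → ∀ i, p i ≠ q i

/-- `p` and `q` span an empty box w.r.t. `Y`: no point of `Y` lies in the open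
interior of the axis-aligned box spanned by `p` and `q`. -/
def SpansEmptyBox (Y : Finset (Fin 3 → ℝ)) (p q : Fin 3 → ℝ) : Prop :=
  ∀ z ∈ Y, ¬ (∀ i, min (p i) (q i) < z i ∧ z i < max (p i) (q i))

/-- Number of edges of the box graph `G_b(Y)`: the number of 2-element subsets of `Y`
whose two points span an empty box. -/
noncomputable def boxEdgeCount (Y : Finset (Fin 3 → ℝ)) : ℕ :=
  ((Y.powersetCard 2).filter
    (fun A => ∀ p ∈ A, ∀ q ∈ A, p ≠ q → SpansEmptyBox Y p q)).card

/-- the eight cluster centers -/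
def ctr : Fin 8 → Fin 3 → ℤ :=
  ![![109,91,-89], ![111,89,-91], ![89,111,-109], ![91,109,-111],
    ![-91,-109,111], ![-89,-111,109], ![-111,-89,91], ![-109,-91,89]]

lemma ctr_sep : ∀ a b : Fin 8, a ≠ b → ∀ i,
    ctr a i + 2 ≤ ctr b i ∨ ctr b i + 2 ≤ ctr a i := by decide

lemma ctr_pair : ∀ a b : Fin 8, a ≠ b → ∃ i, ctr a i + 2 ≤ ctr b i := by decide

lemma ctr_trip : ∀ a b c : Fin 8, c ≠ a → c ≠ b → ∃ i,
    (ctr c i + 2 ≤ ctr a i ∧ ctr c i + 2 ≤ ctr b i) ∨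
    (ctr a i + 2 ≤ ctr c i ∧ ctr b i + 2 ≤ ctr c i) := by decide

section Construction

variable (m : ℕ)

/-- the point of cluster `c` with index `j` -/
noncomputable def pt (x : Fin 8 × Fin m) : Fin 3 → ℝ :=
  fun i => (ctr x.1 i : ℝ) + ((x.2 : ℕ) : ℝ) / m

variable {m}

lemma off_nonneg (j : Fin m) : (0:ℝ) ≤ ((j : ℕ) : ℝ) / m := by positivity

lemma off_lt_one (hm : 1 ≤ m) (j : Fin m) : ((j : ℕ) : ℝ) / m < 1 := by
  rw [div_lt_one (by exact_mod_cast hm)]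
  exact_mod_cast j.isLt

lemma pt_lt (hm : 1 ≤ m) {a b : Fin 8} (i : Fin 3) (h : ctr a i + 2 ≤ ctr b i)
    (j j' : Fin m) : pt m (a, j) i < pt m (b, j') i := by
  have h' : (ctr a i : ℝ) + 2 ≤ (ctr b i : ℝ) := by exact_mod_cast h
  have h1 := off_lt_one hm j
  have h2 := off_nonneg (m := m) j'
  simp only [pt]
  linarith

lemma pt_injective (hm : 1 ≤ m) : Function.Injective (pt m) := by
  intro ⟨a, j⟩ ⟨b, j'⟩ h
  have h0 := congrFun h 0
  by_cases hab : a = b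
  · subst hab
    have hm0 : (m:ℝ) ≠ 0 := by positivity
    have h1 : ((j : ℕ) : ℝ) / m = ((j' : ℕ) : ℝ) / m := by
      simpa [pt] using h0
    field_simp at h1
    have h3 : (j : ℕ) = (j' : ℕ) := by exact_mod_cast h1
    exact Prod.ext_iff.mpr ⟨rfl, Fin.ext h3⟩
  · rcases ctr_sep a b hab 0 with hs | hs
    · exact absurd h0 (ne_of_lt (pt_lt hm 0 hs j j'))
    · exact absurd h0.symm (ne_of_lt (pt_lt hm 0 hs j' j))

lemma pt_coord_ne (hm : 1 ≤ m) {a b : Fin 8} {j j' : Fin m}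
    (h : (a, j) ≠ (b, j')) (i : Fin 3) : pt m (a, j) i ≠ pt m (b, j') i := by
  by_cases hab : a = b
  · subst hab
    have hjj : j ≠ j' := by
      intro hj; exact h (by rw [hj])
    have hm0 : (m:ℝ) ≠ 0 := by positivity
    simp only [pt]
    intro hcontra
    have h1 : ((j : ℕ) : ℝ) / m = ((j' : ℕ) : ℝ) / m := by linarith
    field_simp at h1
    have h3 : (j : ℕ) = (j' : ℕ) := by exact_mod_cast h1
    exact hjj (Fin.ext h3)
  · rcases ctr_sep a b hab i with hs | hs
    · exact ne_of_lt (pt_lt hm i hs j j')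
    · exact (ne_of_lt (pt_lt hm i hs j' j)).symm

/-- the point set -/
noncomputable def Yset (m : ℕ) : Finset (Fin 3 → ℝ) :=
  Finset.image (pt m) Finset.univ

lemma mem_Yset (x : Fin 8 × Fin m) : pt m x ∈ Yset m :=
  Finset.mem_image_of_mem _ (Finset.mem_univ x)

lemma pt_le_pt (hm : 1 ≤ m) (a : Fin 8) {j j' : Fin m} (h : (j : ℕ) ≤ (j' : ℕ))
    (i : Fin 3) : pt m (a, j) i ≤ pt m (a, j') i := by
  have hm0 : (0:ℝ) < (m:ℝ) := by exact_mod_cast hm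
  have h' : ((j : ℕ) : ℝ) ≤ ((j' : ℕ) : ℝ) := by exact_mod_cast h
  have h2 := div_le_div_of_nonneg_right h' hm0.le
  simp only [pt]
  linarith

/-- Key lemma: any two points in different clusters span an empty box. -/
lemma cross_empty (hm : 1 ≤ m) {c c' : Fin 8} (hcc : c ≠ c') (j j' : Fin m) :
    SpansEmptyBox (Yset m) (pt m (c, j)) (pt m (c', j')) := by
  intro z hz hbox
  simp only [Yset, Finset.mem_image, Finset.mem_univ, true_and] at hz
  obtain ⟨⟨c'', j''⟩, rfl⟩ := hz
  set p := pt m (c, j) with hp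
  set q := pt m (c', j') with hq
  by_cases h1 : c'' = c
  · subst h1
    obtain ⟨i₀, hi₀⟩ := ctr_pair c'' c' hcc
    obtain ⟨i₁, hi₁⟩ := ctr_pair c' c'' (Ne.symm hcc)
    rcases le_or_gt (j'' : ℕ) (j : ℕ) with hj | hj
    · have hpq : p i₀ < q i₀ := pt_lt hm i₀ hi₀ j j'
      have hzp : pt m (c'', j'') i₀ ≤ p i₀ := pt_le_pt hm c'' hj i₀
      have := (hbox i₀).1
      rw [min_eq_left hpq.le] at this
      linarith
    · have hqp : q i₁ < p i₁ := pt_lt hm i₁ hi₁ j' j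
      have hzp : p i₁ ≤ pt m (c'', j'') i₁ := pt_le_pt hm c'' hj.le i₁
      have := (hbox i₁).2
      rw [max_eq_left hqp.le] at this
      linarith
  · by_cases h2 : c'' = c'
    · subst h2
      obtain ⟨i₀, hi₀⟩ := ctr_pair c'' c (fun h => h1 h)
      obtain ⟨i₁, hi₁⟩ := ctr_pair c c'' (fun h => h1 h.symm)
      rcases le_or_gt (j'' : ℕ) (j' : ℕ) with hj | hj
      · have hpq : q i₀ < p i₀ := pt_lt hm i₀ hi₀ j' j
        have hzq : pt m (c'', j'') i₀ ≤ q i₀ := pt_le_pt hm c'' hj i₀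
        have := (hbox i₀).1
        rw [min_eq_right hpq.le] at this
        linarith
      · have hqp : p i₁ < q i₁ := pt_lt hm i₁ hi₁ j j'
        have hzq : q i₁ ≤ pt m (c'', j'') i₁ := pt_le_pt hm c'' hj.le i₁
        have := (hbox i₁).2
        rw [max_eq_right hqp.le] at this
        linarith
    · obtain ⟨i, hi⟩ := ctr_trip c c' c'' h1 h2
      rcases hi with ⟨ha, hb⟩ | ⟨ha, hb⟩
      · have h3 : pt m (c'', j'') i < p i := pt_lt hm i ha j'' j
        have h4 : pt m (c'', j'') i < q i := pt_lt hm i hb j'' j'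
        have := (hbox i).1
        rcases min_cases (p i) (q i) with ⟨he, _⟩ | ⟨he, _⟩ <;> rw [he] at this <;> linarith
      · have h3 : p i < pt m (c'', j'') i := pt_lt hm i ha j j''
        have h4 : q i < pt m (c'', j'') i := pt_lt hm i hb j' j''
        have := (hbox i).2
        rcases max_cases (p i) (q i) with ⟨he, _⟩ | ⟨he, _⟩ <;> rw [he] at this <;> linarith

lemma spans_symm {Y : Finset (Fin 3 → ℝ)} {p q : Fin 3 → ℝ}
    (h : SpansEmptyBox Y p q) : SpansEmptyBox Y q p := by
  intro z hz hbox
  exact h z hz (fun i => by rw [min_comm (p i), max_comm (p i)]; exact hbox i)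

end Construction

theorem boxGraph_edges_lower (m : ℕ) (hm : 1 ≤ m) :
    ∃ Y : Finset (Fin 3 → ℝ), Generic3 Y ∧ Y.card = 8 * m ∧
      28 * m ^ 2 ≤ boxEdgeCount Y := by
  refine ⟨Yset m, ?_, ?_, ?_⟩
  · -- generic
    intro p hp q hq hpq i
    simp only [Yset, Finset.mem_image, Finset.mem_univ, true_and] at hp hq
    obtain ⟨⟨a, j⟩, rfl⟩ := hp
    obtain ⟨⟨b, j'⟩, rfl⟩ := hq
    exact pt_coord_ne hm (fun h => hpq (by rw [h])) i
  · -- cardinality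
    rw [Yset, Finset.card_image_of_injective _ (pt_injective hm), Finset.card_univ]
    simp [mul_comm]
  · -- edge count
    rw [boxEdgeCount]
    have hscard : ((Finset.univ.filter (fun cc : Fin 8 × Fin 8 => cc.1 < cc.2)) ×ˢ
        (Finset.univ : Finset (Fin m × Fin m))).card = 28 * m ^ 2 := by
      rw [Finset.card_product]
      have h1 : (Finset.univ.filter (fun cc : Fin 8 × Fin 8 => cc.1 < cc.2)).card = 28 := by
        decide
      have h2 : (Finset.univ : Finset (Fin m × Fin m)).card = m * m := by
        simp [Finset.card_univ]
      rw [h1, h2]; ring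
    rw [← hscard]
    apply Finset.card_le_card_of_injOn
      (fun x => ({pt m (x.1.1, x.2.1), pt m (x.1.2, x.2.2)} : Finset (Fin 3 → ℝ)))
    · -- maps into the filtered set
      rintro ⟨⟨c, c'⟩, ⟨j, j'⟩⟩ hx
      simp only [Finset.mem_coe, Finset.mem_product, Finset.mem_filter, Finset.mem_univ, true_and,
        and_true] at hx
      have hcc : c ≠ c' := ne_of_lt hx
      have hne : pt m (c, j) ≠ pt m (c', j') := by
        intro h
        exact hcc (congrArg Prod.fst (pt_injective hm h))
      simp only [Finset.mem_coe, Finset.mem_filter, Finset.mem_powersetCard]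
      refine ⟨⟨?_, ?_⟩, ?_⟩
      · intro x hx
        simp only [Finset.mem_insert, Finset.mem_singleton] at hx
        rcases hx with rfl | rfl <;> exact mem_Yset _
      · exact Finset.card_pair hne
      · intro p hp q hq hpq
        simp only [Finset.mem_insert, Finset.mem_singleton] at hp hq
        rcases hp with rfl | rfl <;> rcases hq with rfl | rfl
        · exact absurd rfl hpq
        · exact cross_empty hm hcc j j'
        · exact spans_symm (cross_empty hm hcc j j')
        · exact absurd rfl hpq
    · -- injective on the source
      rintro ⟨⟨c₁, c₁'⟩, ⟨j₁, j₁'⟩⟩ hx ⟨⟨c₂, c₂'⟩, ⟨j₂, j₂'⟩⟩ hy h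
      simp only [Finset.mem_coe, Finset.mem_product, Finset.mem_filter,
        Finset.mem_univ, true_and, and_true] at hx hy
      have h' : ({pt m (c₁, j₁), pt m (c₁', j₁')} : Finset (Fin 3 → ℝ)) =
          ({pt m (c₂, j₂), pt m (c₂', j₂')} : Finset (Fin 3 → ℝ)) := h
      have hmem : pt m (c₁, j₁) ∈ ({pt m (c₂, j₂), pt m (c₂', j₂')} : Finset (Fin 3 → ℝ)) := by
        rw [← h']; exact Finset.mem_insert_self _ _
      have hmem' : pt m (c₁', j₁') ∈ ({pt m (c₂, j₂), pt m (c₂', j₂')} : Finset (Fin 3 → ℝ)) := by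
        rw [← h']
        exact Finset.mem_insert_of_mem (Finset.mem_singleton_self _)
      simp only [Finset.mem_insert, Finset.mem_singleton] at hmem hmem'
      rcases hmem with h1 | h1 <;> rcases hmem' with h2 | h2
      · -- p₁ = p₂ and q₁ = p₂ : contradiction
        exfalso
        have e1 := pt_injective hm h1
        have e2 := pt_injective hm h2
        have a1 : c₁ = c₂ := congrArg Prod.fst e1
        have a2 : c₁' = c₂ := congrArg Prod.fst e2
        exact ne_of_lt hx (a1.trans a2.symm)
      · -- p₁ = p₂ and q₁ = q₂
        have e1 := pt_injective hm h1
        have e2 := pt_injective hm h2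
        simp only [Prod.mk.injEq] at e1 e2
        simp only [Prod.mk.injEq]
        exact ⟨⟨e1.1, e2.1⟩, e1.2, e2.2⟩
      · -- crossing: contradiction with strict orders
        exfalso
        have e1 := pt_injective hm h1
        have e2 := pt_injective hm h2
        have a1 : c₁ = c₂' := congrArg Prod.fst e1
        have a2 : c₁' = c₂ := congrArg Prod.fst e2
        have : c₁ < c₁ := lt_trans (a1 ▸ (a2 ▸ hx : c₁ < c₂) : c₁ < c₂)
          (a1 ▸ hy : c₂ < c₁)
        exact lt_irrefl _ this
      · -- q₁ = q₂ and both equal q₂' : contradiction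
        exfalso
        have e1 := pt_injective hm h1
        have e2 := pt_injective hm h2
        have a1 : c₁ = c₂' := congrArg Prod.fst e1
        have a2 : c₁' = c₂' := congrArg Prod.fst e2
        exact ne_of_lt hx (a1.trans a2.symm)
end

section
/- A finite simple graph G = (V,E) admits a realizer of the form {π₁, π₂, π̄₁, π̄₂} if and only if there exist a generic finite set X ⊂ ℝ² and a bijection φ : V → X such that for every edge {u,v} ∈ E the points φ(u) and φ(v) span an empty rectangle with respect to X; in particular, every rectangle graph G_r(X) of a generic point set X admits such a realizer. -/
open scoped Classical

/-- `G` has a realizer of the form `{π₁, π₂, π̄₁, π̄₂}`: two linear orders on the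
vertices (encoded by injective real-valued functions) such that for every edge
`{u,v}` and every other vertex `w`, `w` lies above both `u` and `v` in one of the
four orders `π₁, π₂, π̄₁, π̄₂`. -/
def HasDoubleReversibleRealizer {V : Type*} (G : SimpleGraph V) : Prop :=
  ∃ π₁ π₂ : V → ℝ, Function.Injective π₁ ∧ Function.Injective π₂ ∧
    ∀ u v, G.Adj u v → ∀ w, w ≠ u → w ≠ v →
      (π₁ u < π₁ w ∧ π₁ v < π₁ w) ∨ (π₂ u < π₂ w ∧ π₂ v < π₂ w) ∨
      (π₁ w < π₁ u ∧ π₁ w < π₁ v) ∨ (π₂ w < π₂ u ∧ π₂ w < π₂ v)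


lemma aux_between {a b c : ℝ} (hca : c ≠ a) (hcb : c ≠ b)
    (h1 : ¬(a < c ∧ b < c)) (h2 : ¬(c < a ∧ c < b)) :
    min a b < c ∧ c < max a b := by
  rcases hca.lt_or_gt with h | h
  · have hb : b < c := lt_of_le_of_ne (not_lt.mp (fun hb => h2 ⟨h, hb⟩)) hcb.symm
    exact ⟨lt_of_le_of_lt (min_le_right a b) hb, lt_of_lt_of_le h (le_max_left a b)⟩
  · have hb : c < b := lt_of_le_of_ne (not_lt.mp (fun hb => h1 ⟨h, hb⟩)) hcb
    exact ⟨lt_of_le_of_lt (min_le_left a b) h, lt_of_lt_of_le hb (le_max_right a b)⟩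

theorem doubleReversibleRealizer_iff_rectangleGraph
    {V : Type*} [Fintype V] (G : SimpleGraph V) :
    HasDoubleReversibleRealizer G ↔
      ∃ (X : Finset (ℝ × ℝ)) (φ : V → ℝ × ℝ),
        Generic X ∧ Function.Injective φ ∧ (∀ v, φ v ∈ X) ∧
        (∀ x ∈ X, ∃ v, φ v = x) ∧
        ∀ u v, G.Adj u v → SpansEmptyRect X (φ u) (φ v) := by
  constructor
  · rintro ⟨π₁, π₂, h1, h2, hR⟩
    refine ⟨Finset.univ.image (fun v => (π₁ v, π₂ v)), fun v => (π₁ v, π₂ v),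
      ?_, ?_, fun v => Finset.mem_image_of_mem _ (Finset.mem_univ v), ?_, ?_⟩
    · rintro p hp q hq hne
      simp only [Finset.mem_image] at hp hq
      obtain ⟨a, -, rfl⟩ := hp
      obtain ⟨b, -, rfl⟩ := hq
      have hab : a ≠ b := fun h => hne (by rw [h])
      exact ⟨fun h => hab (h1 h), fun h => hab (h2 h)⟩
    · intro a b h
      exact h1 (congrArg Prod.fst h)
    · intro x hx
      simp only [Finset.mem_image] at hx
      obtain ⟨v, -, rfl⟩ := hx
      exact ⟨v, rfl⟩
    · intro u v huv z hz hcon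
      simp only [Finset.mem_image] at hz
      obtain ⟨w, -, rfl⟩ := hz
      obtain ⟨hc1, hc2, hc3, hc4⟩ := hcon
      simp only at hc1 hc2 hc3 hc4
      have hwu : w ≠ u := by
        rintro rfl
        exact absurd ((lt_max_iff.mp hc2).resolve_left (lt_irrefl _))
          (not_lt.mpr ((min_lt_iff.mp hc1).resolve_left (lt_irrefl _)).le)
      have hwv : w ≠ v := by
        rintro rfl
        exact absurd ((lt_max_iff.mp hc2).resolve_right (lt_irrefl _))
          (not_lt.mpr ((min_lt_iff.mp hc1).resolve_right (lt_irrefl _)).le)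
      rcases hR u v huv w hwu hwv with ⟨ha, hb⟩ | ⟨ha, hb⟩ | ⟨ha, hb⟩ | ⟨ha, hb⟩
      · exact absurd hc2 (not_lt.mpr (max_lt ha hb).le)
      · exact absurd hc4 (not_lt.mpr (max_lt ha hb).le)
      · exact absurd hc1 (not_lt.mpr (lt_min ha hb).le)
      · exact absurd hc3 (not_lt.mpr (lt_min ha hb).le)
  · rintro ⟨X, φ, hgen, hinj, hmem, -, hE⟩
    refine ⟨fun v => (φ v).1, fun v => (φ v).2, ?_, ?_, ?_⟩
    · intro a b h
      by_contra hne
      exact (hgen _ (hmem a) _ (hmem b) (fun e => hne (hinj e))).1 h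
    · intro a b h
      by_contra hne
      exact (hgen _ (hmem a) _ (hmem b) (fun e => hne (hinj e))).2 h
    · intro u v huv w hwu hwv
      have h1 := hgen _ (hmem w) _ (hmem u) (fun e => hwu (hinj e))
      have h2 := hgen _ (hmem w) _ (hmem v) (fun e => hwv (hinj e))
      have hz := hE u v huv (φ w) (hmem w)
      by_contra hcon
      simp only [not_or] at hcon
      obtain ⟨hA, hB, hC, hD⟩ := hcon
      obtain ⟨p1, p2⟩ := aux_between h1.1 h2.1 hA hC
      obtain ⟨q1, q2⟩ := aux_between h1.2 h2.2 hB hD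
      exact hz ⟨p1, p2, q1, q2⟩
end

section
/- Every finite simple graph G on n ≥ 2 vertices that admits a realizer of the form {π₁, π₂, π̄₁, π̄₂} has at most ⌊n²/4 + n − 2⌋ edges. -/
open scoped Classical

namespace ERproof

variable {V : Type*}

def Btw (f : V → ℝ) (x y z : V) : Prop :=
  (f x < f z ∧ f z < f y) ∨ (f y < f z ∧ f z < f x)

lemma btw_comm {f : V → ℝ} {x y z : V} : Btw f x y z ↔ Btw f y x z := or_comm

lemma btw_neg {g : V → ℝ} {x y z : V} :
    Btw (fun a => -(g a)) x y z ↔ Btw g x y z := by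
  unfold Btw
  simp only [neg_lt_neg_iff]
  tauto

def Sees (f g : V → ℝ) (S : Finset V) (x y : V) : Prop :=
  ∀ z ∈ S, ¬(Btw f x y z ∧ Btw g x y z)

lemma sees_comm {f g : V → ℝ} {S : Finset V} {x y : V} (h : Sees f g S x y) :
    Sees f g S y x := fun z hz hc => h z hz ⟨btw_comm.mpr hc.1, btw_comm.mpr hc.2⟩

lemma sees_neg {f g : V → ℝ} {S : Finset V} {x y : V} :
    Sees f (fun a => -(g a)) S x y ↔ Sees f g S x y := by
  unfold Sees
  constructor <;> intro h z hz hc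
  · exact h z hz ⟨hc.1, btw_neg.mpr hc.2⟩
  · exact h z hz ⟨hc.1, btw_neg.mp hc.2⟩

lemma sees_mono {f g : V → ℝ} {S S' : Finset V} {x y : V} (hsub : S' ⊆ S)
    (h : Sees f g S x y) : Sees f g S' x y := fun z hz => h z (hsub hz)

noncomputable def EP (f g : V → ℝ) (S : Finset V) : Finset (V × V) :=
  (S ×ˢ S).filter (fun p => f p.1 < f p.2 ∧ Sees f g S p.1 p.2)

lemma base_bound (f g : V → ℝ) (S : Finset V) :
    2 * (EP f g S).card ≤ S.card * S.card - S.card := by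
  classical
  have h1 : EP f g S ⊆ S.offDiag := by
    intro p hp
    simp only [EP, Finset.mem_filter, Finset.mem_product] at hp
    refine Finset.mem_offDiag.2 ⟨hp.1.1, hp.1.2, ?_⟩
    intro h
    exact absurd hp.2.1 (by rw [h]; exact lt_irrefl _)
  have h2 : (EP f g S).image Prod.swap ⊆ S.offDiag := by
    intro p hp
    obtain ⟨q, hq, rfl⟩ := Finset.mem_image.1 hp
    have := h1 hq
    simp only [Finset.mem_offDiag] at this ⊢
    exact ⟨this.2.1, this.1, fun h => this.2.2 h.symm⟩
  have hdisj : Disjoint (EP f g S) ((EP f g S).image Prod.swap) := by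
    rw [Finset.disjoint_left]
    intro p hp hp'
    obtain ⟨q, hq, hqe⟩ := Finset.mem_image.1 hp'
    simp only [EP, Finset.mem_filter, Finset.mem_product] at hp hq
    have h1 : f p.1 < f p.2 := hp.2.1
    have h2 : f q.1 < f q.2 := hq.2.1
    rw [← hqe] at h1
    simp only [Prod.fst_swap, Prod.snd_swap] at h1
    exact absurd h2 (not_lt.2 (le_of_lt h1))
  have hcard : ((EP f g S).image Prod.swap).card = (EP f g S).card :=
    Finset.card_image_of_injective _ Prod.swap_injective
  have hle : (EP f g S).card + ((EP f g S).image Prod.swap).card ≤ S.offDiag.card := by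
    rw [← Finset.card_union_of_disjoint hdisj]
    exact Finset.card_le_card (Finset.union_subset h1 h2)
  rw [Finset.offDiag_card] at hle
  omega


/-- Key lemma, descent case: the max-gap consecutive pair has at most 2 common neighbors. -/
lemma key (f g : V → ℝ) (hf : Function.Injective f) (hg : Function.Injective g)
    (S : Finset V) (u v : V) (hu : u ∈ S) (hv : v ∈ S) (hfuv : f u < f v)
    (hcons : ∀ w ∈ S, ¬(f u < f w ∧ f w < f v))
    (hmax : ∀ a ∈ S, ∀ b ∈ S, f a < f b → (∀ w ∈ S, ¬(f a < f w ∧ f w < f b)) →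
      |g b - g a| ≤ |g v - g u|)
    (hdesc : g v < g u) :
    (S.filter (fun w => w ≠ u ∧ w ≠ v ∧ Sees f g S w u ∧ Sees f g S w v)).card ≤ 2 := by
  classical
  set C := S.filter (fun w => w ≠ u ∧ w ≠ v ∧ Sees f g S w u ∧ Sees f g S w v) with hC
  have hgap : |g v - g u| = g u - g v := by
    rw [abs_sub_comm]; exact abs_of_pos (by linarith)
  have hmem : ∀ w ∈ C, w ∈ S ∧ w ≠ u ∧ w ≠ v ∧ Sees f g S w u ∧ Sees f g S w v := by
    intro w hw
    simp only [hC, Finset.mem_filter] at hw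
    tauto
  -- every common neighbor is strictly left of u or strictly right of v
  have hside : ∀ w ∈ C, f w < f u ∨ f v < f w := by
    intro w hw
    obtain ⟨hwS, hwu, hwv, _, _⟩ := hmem w hw
    rcases lt_trichotomy (f w) (f u) with h | h | h
    · exact Or.inl h
    · exact absurd (hf h) hwu
    rcases lt_trichotomy (f w) (f v) with h' | h' | h'
    · exact absurd ⟨h, h'⟩ (hcons w hwS)
    · exact absurd (hf h') hwv
    · exact Or.inr h'
  -- every common neighbor has g-value strictly between g v and g u
  have hval : ∀ w ∈ C, g v < g w ∧ g w < g u := by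
    intro w hw
    obtain ⟨hwS, hwu, hwv, hadju, hadjv⟩ := hmem w hw
    have hgwu : g w ≠ g u := fun h => hwu (hg h)
    have hgwv : g w ≠ g v := fun h => hwv (hg h)
    rcases hside w hw with hL | hR
    · constructor
      · -- rule out g w < g v (left, low) via the jump argument
        by_contra hlt
        push_neg at hlt
        have hgw : g w < g v := lt_of_le_of_ne hlt hgwv
        set L := S.filter (fun z => f w ≤ f z ∧ f z < f u ∧ g z < g u) with hLdef
        have hwL : w ∈ L := Finset.mem_filter.2 ⟨hwS, le_refl _, hL, by linarith⟩
        obtain ⟨z₁, hz₁L, hz₁max⟩ := Finset.exists_max_image L f ⟨w, hwL⟩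
        have hz₁ := Finset.mem_filter.1 hz₁L
        have hz₁S := hz₁.1
        have hfwz₁ := hz₁.2.1
        have hz₁u := hz₁.2.2.1
        have hgz₁ := hz₁.2.2.2
        set U := S.filter (fun z => f z₁ < f z) with hUdef
        have huU : u ∈ U := Finset.mem_filter.2 ⟨hu, hz₁u⟩
        obtain ⟨z₂, hz₂U, hz₂min⟩ := Finset.exists_min_image U f ⟨u, huU⟩
        have hz₂' := Finset.mem_filter.1 hz₂U
        obtain ⟨hz₂S, hz₁₂⟩ := hz₂'
        have hcons₂ : ∀ z ∈ S, ¬(f z₁ < f z ∧ f z < f z₂) := by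
          rintro z hz ⟨h1, h2⟩
          exact absurd (hz₂min z (Finset.mem_filter.2 ⟨hz, h1⟩)) (not_le.2 h2)
        have hgz₁w : g z₁ ≤ g w := by
          rcases eq_or_ne z₁ w with rfl | hne
          · exact le_refl _
          · have hfwz : f w < f z₁ := lt_of_le_of_ne hfwz₁ (fun h => hne (hf h.symm))
            have hnb : ¬ Btw g w u z₁ := fun hb => hadju z₁ hz₁S ⟨Or.inl ⟨hfwz, hz₁u⟩, hb⟩
            by_contra hgt
            push_neg at hgt
            exact hnb (Or.inl ⟨hgt, hgz₁⟩)
        have hgz₂u : g u ≤ g z₂ := by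
          rcases eq_or_ne z₂ u with rfl | hne
          · exact le_refl _
          · have h2u : f z₂ ≤ f u := hz₂min u huU
            have h2u' : f z₂ < f u := lt_of_le_of_ne h2u (fun h => hne (hf h))
            have hz₂nL : z₂ ∉ L := fun hmm => absurd (hz₁max z₂ hmm) (not_le.2 hz₁₂)
            have hnot : ¬(f w ≤ f z₂ ∧ f z₂ < f u ∧ g z₂ < g u) := fun hh =>
              hz₂nL (Finset.mem_filter.2 ⟨hz₂S, hh⟩)
            push_neg at hnot
            exact hnot (le_trans hfwz₁ (le_of_lt hz₁₂)) h2u'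
        have hmm := hmax z₁ hz₁S z₂ hz₂S hz₁₂ hcons₂
        rw [hgap] at hmm
        have : g z₂ - g z₁ ≤ g u - g v := le_trans (le_abs_self _) hmm
        linarith
      · -- rule out g u < g w (left, high): witness u against Sees w v
        by_contra hgt
        push_neg at hgt
        have hgw : g u < g w := lt_of_le_of_ne hgt (Ne.symm hgwu)
        exact hadjv u hu ⟨Or.inl ⟨hL, hfuv⟩, Or.inr ⟨hdesc, hgw⟩⟩
    · constructor
      · -- rule out g w < g v (right, low): witness v against Sees w u
        by_contra hlt
        push_neg at hlt
        have hgw : g w < g v := lt_of_le_of_ne hlt hgwv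
        exact hadju v hv ⟨Or.inr ⟨hfuv, hR⟩, Or.inl ⟨hgw, hdesc⟩⟩
      · -- rule out g u < g w (right, high) via the jump argument
        by_contra hgt
        push_neg at hgt
        have hgw : g u < g w := lt_of_le_of_ne hgt (Ne.symm hgwu)
        set L := S.filter (fun z => f v < f z ∧ f z ≤ f w ∧ g v < g z) with hLdef
        have hwL : w ∈ L := Finset.mem_filter.2 ⟨hwS, hR, le_refl _, by linarith⟩
        obtain ⟨z₁, hz₁L, hz₁min⟩ := Finset.exists_min_image L f ⟨w, hwL⟩
        have hz₁ := Finset.mem_filter.1 hz₁L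
        have hz₁S := hz₁.1
        have hvz₁ := hz₁.2.1
        have hz₁w := hz₁.2.2.1
        have hgz₁ := hz₁.2.2.2
        set D := S.filter (fun z => f z < f z₁) with hDdef
        have hvD : v ∈ D := Finset.mem_filter.2 ⟨hv, hvz₁⟩
        obtain ⟨z₂, hz₂D, hz₂max⟩ := Finset.exists_max_image D f ⟨v, hvD⟩
        have hz₂' := Finset.mem_filter.1 hz₂D
        obtain ⟨hz₂S, hz₂₁⟩ := hz₂'
        have hcons₂ : ∀ z ∈ S, ¬(f z₂ < f z ∧ f z < f z₁) := by
          rintro z hz ⟨h1, h2⟩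
          exact absurd (hz₂max z (Finset.mem_filter.2 ⟨hz, h2⟩)) (not_le.2 h1)
        have hgz₂v : g z₂ ≤ g v := by
          rcases eq_or_ne z₂ v with rfl | hne
          · exact le_refl _
          · have h2v : f v ≤ f z₂ := hz₂max v hvD
            have h2v' : f v < f z₂ := lt_of_le_of_ne h2v (fun h => hne (hf h.symm))
            have hz₂nL : z₂ ∉ L := fun hmm => absurd (hz₁min z₂ hmm) (not_le.2 hz₂₁)
            have hnot : ¬(f v < f z₂ ∧ f z₂ ≤ f w ∧ g v < g z₂) := fun hh =>
              hz₂nL (Finset.mem_filter.2 ⟨hz₂S, hh⟩)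
            push_neg at hnot
            exact hnot h2v' (le_trans (le_of_lt hz₂₁) hz₁w)
        have hgz₁w : g w ≤ g z₁ := by
          rcases eq_or_ne z₁ w with rfl | hne
          · exact le_refl _
          · have hfz : f z₁ < f w := lt_of_le_of_ne hz₁w (fun h => hne (hf h))
            have hnb : ¬ Btw g w v z₁ := fun hb => hadjv z₁ hz₁S ⟨Or.inr ⟨hvz₁, hfz⟩, hb⟩
            by_contra hgt'
            push_neg at hgt'
            exact hnb (Or.inr ⟨hgz₁, hgt'⟩)
        have hmm := hmax z₂ hz₂S z₁ hz₁S hz₂₁ hcons₂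
        rw [hgap] at hmm
        have : g z₁ - g z₂ ≤ g u - g v := le_trans (le_abs_self _) hmm
        linarith
  -- at most one common neighbor on each side
  have hleft : ∀ w₁ ∈ C, ∀ w₂ ∈ C, f w₁ < f w₂ → f w₂ < f u → False := by
    intro w₁ h₁ w₂ h₂ h12 h2u
    obtain ⟨h₁S, _, _, hadju₁, hadjv₁⟩ := hmem w₁ h₁
    obtain ⟨h₂S, _, _, _, _⟩ := hmem w₂ h₂
    obtain ⟨hv₂a, hv₂b⟩ := hval w₂ h₂
    have hne : w₁ ≠ w₂ := fun h => absurd h12 (by rw [h]; exact lt_irrefl _)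
    rcases lt_trichotomy (g w₁) (g w₂) with h | h | h
    · exact hadju₁ w₂ h₂S ⟨Or.inl ⟨h12, h2u⟩, Or.inl ⟨h, hv₂b⟩⟩
    · exact hne (hg h)
    · exact hadjv₁ w₂ h₂S ⟨Or.inl ⟨h12, lt_trans h2u hfuv⟩, Or.inr ⟨hv₂a, h⟩⟩
  have hright : ∀ w₁ ∈ C, ∀ w₂ ∈ C, f w₁ < f w₂ → f v < f w₁ → False := by
    intro w₁ h₁ w₂ h₂ h12 hv1
    obtain ⟨h₁S, _, _, _, _⟩ := hmem w₁ h₁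
    obtain ⟨h₂S, _, _, hadju₂, hadjv₂⟩ := hmem w₂ h₂
    obtain ⟨hv₁a, hv₁b⟩ := hval w₁ h₁
    have hne : w₁ ≠ w₂ := fun h => absurd h12 (by rw [h]; exact lt_irrefl _)
    rcases lt_trichotomy (g w₁) (g w₂) with h | h | h
    · exact hadjv₂ w₁ h₁S ⟨Or.inr ⟨hv1, h12⟩, Or.inr ⟨hv₁a, h⟩⟩
    · exact hne (hg h)
    · exact hadju₂ w₁ h₁S ⟨Or.inr ⟨lt_trans hfuv hv1, h12⟩, Or.inl ⟨h, hv₁b⟩⟩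
  -- conclude: the side function is injective on C
  have hinj : Set.InjOn (fun w => decide (f w < f u)) C := by
    intro w₁ h₁' w₂ h₂' h
    have h₁ : w₁ ∈ C := h₁'
    have h₂ : w₂ ∈ C := h₂'
    simp only [decide_eq_decide] at h
    by_contra hne
    have hfne : f w₁ ≠ f w₂ := fun hh => hne (hf hh)
    rcases hside w₁ h₁ with hL₁ | hR₁
    · have hL₂ : f w₂ < f u := h.mp hL₁
      rcases lt_or_gt_of_ne hfne with h12 | h21
      · exact hleft w₁ h₁ w₂ h₂ h12 hL₂
      · exact hleft w₂ h₂ w₁ h₁ h21 hL₁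
    · have hR₁' : ¬ f w₁ < f u := not_lt.2 (le_of_lt (lt_trans hfuv hR₁))
      have hR₂' : ¬ f w₂ < f u := fun hh => hR₁' (h.mpr hh)
      have hR₂ : f v < f w₂ := (hside w₂ h₂).resolve_left hR₂'
      rcases lt_or_gt_of_ne hfne with h12 | h21
      · exact hright w₁ h₁ w₂ h₂ h12 hR₁
      · exact hright w₂ h₂ w₁ h₁ h21 hR₂
  calc C.card ≤ (Finset.univ : Finset Bool).card :=
        Finset.card_le_card_of_injOn _ (fun a _ => Finset.mem_univ _) hinj
    _ = 2 := by simp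


/-- The common-neighbor bound without the descent assumption. -/
lemma key2 (f g : V → ℝ) (hf : Function.Injective f) (hg : Function.Injective g)
    (S : Finset V) (u v : V) (hu : u ∈ S) (hv : v ∈ S) (hfuv : f u < f v)
    (hcons : ∀ w ∈ S, ¬(f u < f w ∧ f w < f v))
    (hmax : ∀ a ∈ S, ∀ b ∈ S, f a < f b → (∀ w ∈ S, ¬(f a < f w ∧ f w < f b)) →
      |g b - g a| ≤ |g v - g u|) :
    (S.filter (fun w => w ≠ u ∧ w ≠ v ∧ Sees f g S w u ∧ Sees f g S w v)).card ≤ 2 := by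
  classical
  rcases lt_trichotomy (g v) (g u) with h | h | h
  · exact key f g hf hg S u v hu hv hfuv hcons hmax h
  · exact absurd (hg h) (fun hh => absurd hfuv (by rw [hh]; exact lt_irrefl _))
  · -- ascent: negate g
    have hg' : Function.Injective (fun a => -(g a)) := fun a b hab => hg (neg_injective hab)
    have habs : ∀ x y : V, |(-(g x)) - (-(g y))| = |g x - g y| := by
      intro x y
      rw [show -(g x) - -(g y) = g y - g x by ring, abs_sub_comm]
    have hmax' : ∀ a ∈ S, ∀ b ∈ S, f a < f b → (∀ w ∈ S, ¬(f a < f w ∧ f w < f b)) →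
        |(-(g b)) - (-(g a))| ≤ |(-(g v)) - (-(g u))| := by
      intro a ha b hb hab hc
      rw [habs, habs]
      exact hmax a ha b hb hab hc
    have hkey := key f (fun a => -(g a)) hf hg' S u v hu hv hfuv hcons hmax' (by simpa using h)
    have heq : S.filter (fun w => w ≠ u ∧ w ≠ v ∧ Sees f (fun a => -(g a)) S w u ∧
        Sees f (fun a => -(g a)) S w v) =
        S.filter (fun w => w ≠ u ∧ w ≠ v ∧ Sees f g S w u ∧ Sees f g S w v) := by
      apply Finset.filter_congr
      intro w _
      simp only [sees_neg]
    rwa [heq] at hkey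


lemma main_bound (f g : V → ℝ) (hf : Function.Injective f) (hg : Function.Injective g) :
    ∀ n : ℕ, ∀ S : Finset V, S.card = n → (EP f g S).card ≤ n * n / 4 + n - 2 := by
  intro n
  induction n using Nat.strong_induction_on with
  | _ n IH =>
    intro S hS
    by_cases hn : n ≤ 3
    · have h2 := base_bound f g S
      rw [hS] at h2
      clear IH
      interval_cases n <;> omega
    · push_neg at hn
      have hn4 : 4 ≤ n := hn
      -- find a consecutive pair
      have hSne : S.Nonempty := by rw [← Finset.card_pos, hS]; omega
      obtain ⟨v₀, hv₀S, hv₀max⟩ := Finset.exists_max_image S f hSne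
      have hS₁ne : (S.filter (fun z => f z < f v₀)).Nonempty := by
        obtain ⟨x, hxS, hxne⟩ := Finset.exists_mem_ne (by omega : 1 < S.card) v₀
        exact ⟨x, Finset.mem_filter.2 ⟨hxS,
          lt_of_le_of_ne (hv₀max x hxS) (fun h => hxne (hf h))⟩⟩
      set CP := (S ×ˢ S).filter
        (fun p => f p.1 < f p.2 ∧ ∀ w ∈ S, ¬(f p.1 < f w ∧ f w < f p.2)) with hCPdef
      have hCPne : CP.Nonempty := by
        obtain ⟨u₀, hu₀S₁, hu₀max⟩ := Finset.exists_max_image _ f hS₁ne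
        obtain ⟨hu₀S, hu₀v₀⟩ := Finset.mem_filter.1 hu₀S₁
        refine ⟨(u₀, v₀), Finset.mem_filter.2 ⟨Finset.mem_product.2 ⟨hu₀S, hv₀S⟩, hu₀v₀, ?_⟩⟩
        rintro w hwS ⟨h1, h2⟩
        exact absurd (hu₀max w (Finset.mem_filter.2 ⟨hwS, h2⟩)) (not_le.2 h1)
      obtain ⟨uv, huvCP, huvmax⟩ := Finset.exists_max_image CP (fun p => |g p.2 - g p.1|) hCPne
      have huv' := Finset.mem_filter.1 huvCP
      set u := uv.1 with hudef
      set v := uv.2 with hvdef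
      have hu : u ∈ S := (Finset.mem_product.1 huv'.1).1
      have hv : v ∈ S := (Finset.mem_product.1 huv'.1).2
      have hfuv : f u < f v := huv'.2.1
      have hcons : ∀ w ∈ S, ¬(f u < f w ∧ f w < f v) := huv'.2.2
      have huvne : u ≠ v := fun h => absurd hfuv (by rw [h]; exact lt_irrefl _)
      have hmax : ∀ a ∈ S, ∀ b ∈ S, f a < f b → (∀ w ∈ S, ¬(f a < f w ∧ f w < f b)) →
          |g b - g a| ≤ |g v - g u| := by
        intro a ha b hb hab hc
        exact huvmax (a, b) (Finset.mem_filter.2 ⟨Finset.mem_product.2 ⟨ha, hb⟩, hab, hc⟩)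
      have hkey := key2 f g hf hg S u v hu hv hfuv hcons hmax
      -- the pair (u,v) itself is an edge
      have hseesuv : Sees f g S u v := by
        rintro z hz ⟨hbf, _⟩
        rcases hbf with ⟨h1, h2⟩ | ⟨h1, h2⟩
        · exact hcons z hz ⟨h1, h2⟩
        · linarith
      set S' := S \ {u, v} with hS'def
      have hsubS : S' ⊆ S := Finset.sdiff_subset
      have hS'card : S'.card = n - 2 := by
        rw [hS'def, Finset.card_sdiff_of_subset]
        · rw [hS]
          congr 1
          rw [Finset.card_insert_of_notMem (by simp [huvne]), Finset.card_singleton]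
        · intro x hx
          simp only [Finset.mem_insert, Finset.mem_singleton] at hx
          rcases hx with rfl | rfl
          · exact hu
          · exact hv
      have hmemS' : ∀ x, x ∈ S → x ≠ u → x ≠ v → x ∈ S' := by
        intro x hx h1 h2
        rw [hS'def]
        simp [hx, h1, h2]
      have hS'notu : u ∉ S' := by simp [hS'def]
      have hS'notv : v ∉ S' := by simp [hS'def]
      set A := EP f g S with hAdef
      set A₁ := A.filter (fun p => p.1 ∈ S' ∧ p.2 ∈ S') with hA₁def
      set A₂ := A.filter (fun p => ¬(p.1 ∈ S' ∧ p.2 ∈ S')) with hA₂def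
      have hsplit : A₁.card + A₂.card = A.card :=
        Finset.card_filter_add_card_filter_not _
      have hA₁le : A₁.card ≤ (n-2) * (n-2) / 4 + (n-2) - 2 := by
        have hsub : A₁ ⊆ EP f g S' := by
          intro p hp
          obtain ⟨hpA, hp1, hp2⟩ := Finset.mem_filter.1 hp
          have hpA' := Finset.mem_filter.1 hpA
          exact Finset.mem_filter.2 ⟨Finset.mem_product.2 ⟨hp1, hp2⟩, hpA'.2.1,
            sees_mono hsubS hpA'.2.2⟩
        exact le_trans (Finset.card_le_card hsub) (IH (n-2) (by omega) S' hS'card)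
      -- elements of A₂ touch {u, v}
      have htouch : ∀ p ∈ A₂, (p.1 = u ∨ p.1 = v) ∨ (p.2 = u ∨ p.2 = v) := by
        intro p hp
        obtain ⟨hpA, hpn⟩ := Finset.mem_filter.1 hp
        have hpA' := Finset.mem_filter.1 hpA
        have hp1S : p.1 ∈ S := (Finset.mem_product.1 hpA'.1).1
        have hp2S : p.2 ∈ S := (Finset.mem_product.1 hpA'.1).2
        by_contra hc
        push_neg at hc
        exact hpn ⟨hmemS' _ hp1S hc.1.1 hc.1.2, hmemS' _ hp2S hc.2.1 hc.2.2⟩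
      set NA := S'.filter (fun w => Sees f g S u w) with hNAdef
      set NB := S'.filter (fun w => Sees f g S v w) with hNBdef
      -- facts about membership in A (edges)
      have hedge : ∀ p, p ∈ A → p.1 ∈ S ∧ p.2 ∈ S ∧ f p.1 < f p.2 ∧ Sees f g S p.1 p.2 := by
        intro p hp
        have hp' := Finset.mem_filter.1 hp
        exact ⟨(Finset.mem_product.1 hp'.1).1, (Finset.mem_product.1 hp'.1).2, hp'.2.1, hp'.2.2⟩
      -- split A₂ into edges at u and edges at v
      set A₂a := A₂.filter (fun p => p.1 = u ∨ p.2 = u) with hA₂adef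
      set A₂b := A₂.filter (fun p => p.1 = v ∨ p.2 = v) with hA₂bdef
      have hA₂union : A₂ = A₂a ∪ A₂b := by
        ext p
        simp only [hA₂adef, hA₂bdef, Finset.mem_union, Finset.mem_filter]
        constructor
        · intro hp
          rcases htouch p hp with (h | h) | (h | h) <;> tauto
        · tauto
      have huvA : (u, v) ∈ A := by
        exact Finset.mem_filter.2 ⟨Finset.mem_product.2 ⟨hu, hv⟩, hfuv, hseesuv⟩
      have huvA₂ : (u, v) ∈ A₂a ∩ A₂b := by
        have : (u, v) ∈ A₂ := Finset.mem_filter.2 ⟨huvA, fun hc => hS'notu hc.1⟩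
        refine Finset.mem_inter.2 ⟨Finset.mem_filter.2 ⟨this, Or.inl rfl⟩,
          Finset.mem_filter.2 ⟨this, Or.inr rfl⟩⟩
      -- injections
      have hA₂a : A₂a.card ≤ NA.card + 1 := by
        have : A₂a.card ≤ (insert v NA).card := by
          apply Finset.card_le_card_of_injOn (fun p => if p.1 = u then p.2 else p.1)
          · intro p hp
            obtain ⟨hpA₂, hpu⟩ := Finset.mem_filter.1 hp
            have hpA : p ∈ A := Finset.mem_of_mem_filter _ hpA₂
            obtain ⟨hp1S, hp2S, hplt, hpsees⟩ := hedge p hpA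
            by_cases h1 : p.1 = u
            · simp only [if_pos h1]
              rcases eq_or_ne p.2 v with h2v | h2v
              · rw [h2v]; exact Finset.mem_insert_self _ _
              · have h2u : p.2 ≠ u := fun hh => by
                  rw [h1, hh] at hplt; exact lt_irrefl _ hplt
                refine Finset.mem_insert_of_mem (Finset.mem_filter.2
                  ⟨hmemS' _ hp2S h2u h2v, ?_⟩)
                rw [← h1]; exact hpsees
            · simp only [if_neg h1]
              have h2 : p.2 = u := hpu.resolve_left h1
              have h1v : p.1 ≠ v := fun hh => by
                rw [hh, h2] at hplt
                exact absurd hfuv (not_lt.2 (le_of_lt hplt))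
              refine Finset.mem_insert_of_mem (Finset.mem_filter.2
                ⟨hmemS' _ hp1S h1 h1v, ?_⟩)
              apply sees_comm
              rw [← h2]; exact hpsees
          · intro p hp q hq hpq
            have hp2 : p ∈ A₂a := hp
            have hq2 : q ∈ A₂a := hq
            obtain ⟨hpA₂, hpu⟩ := Finset.mem_filter.1 hp2
            obtain ⟨hqA₂, hqu⟩ := Finset.mem_filter.1 hq2
            have hpA : p ∈ A := Finset.mem_of_mem_filter _ hpA₂
            have hqA : q ∈ A := Finset.mem_of_mem_filter _ hqA₂
            obtain ⟨_, _, hplt, _⟩ := hedge p hpA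
            obtain ⟨_, _, hqlt, _⟩ := hedge q hqA
            simp only at hpq
            by_cases h1 : p.1 = u <;> by_cases h2 : q.1 = u
            · rw [if_pos h1, if_pos h2] at hpq
              exact Prod.ext (h1.trans h2.symm) hpq
            · rw [if_pos h1, if_neg h2] at hpq
              have hq2 : q.2 = u := hqu.resolve_left h2
              exfalso
              rw [h1] at hplt
              rw [hq2] at hqlt
              rw [hpq] at hplt
              exact lt_irrefl _ (lt_trans hplt hqlt)
            · rw [if_neg h1, if_pos h2] at hpq
              have hp2 : p.2 = u := hpu.resolve_left h1
              exfalso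
              rw [hp2] at hplt
              rw [h2] at hqlt
              rw [← hpq] at hqlt
              exact lt_irrefl _ (lt_trans hplt hqlt)
            · rw [if_neg h1, if_neg h2] at hpq
              have hp2 : p.2 = u := hpu.resolve_left h1
              have hq2 : q.2 = u := hqu.resolve_left h2
              exact Prod.ext hpq (hp2.trans hq2.symm)
        calc A₂a.card ≤ (insert v NA).card := this
          _ ≤ NA.card + 1 := Finset.card_insert_le _ _
      have hA₂b : A₂b.card ≤ NB.card + 1 := by
        have : A₂b.card ≤ (insert u NB).card := by
          apply Finset.card_le_card_of_injOn (fun p => if p.1 = v then p.2 else p.1)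
          · intro p hp
            obtain ⟨hpA₂, hpv⟩ := Finset.mem_filter.1 hp
            have hpA : p ∈ A := Finset.mem_of_mem_filter _ hpA₂
            obtain ⟨hp1S, hp2S, hplt, hpsees⟩ := hedge p hpA
            by_cases h1 : p.1 = v
            · simp only [if_pos h1]
              rcases eq_or_ne p.2 u with h2u | h2u
              · rw [h2u]; exact Finset.mem_insert_self _ _
              · have h2v : p.2 ≠ v := fun hh => by
                  rw [h1, hh] at hplt; exact lt_irrefl _ hplt
                refine Finset.mem_insert_of_mem (Finset.mem_filter.2
                  ⟨hmemS' _ hp2S h2u h2v, ?_⟩)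
                rw [← h1]; exact hpsees
            · simp only [if_neg h1]
              have h2 : p.2 = v := hpv.resolve_left h1
              rcases eq_or_ne p.1 u with h1u | h1u
              · rw [h1u]; exact Finset.mem_insert_self _ _
              · refine Finset.mem_insert_of_mem (Finset.mem_filter.2
                  ⟨hmemS' _ hp1S h1u h1, ?_⟩)
                apply sees_comm
                rw [← h2]; exact hpsees
          · intro p hp q hq hpq
            have hp' : p ∈ A₂b := hp
            have hq' : q ∈ A₂b := hq
            obtain ⟨hpA₂, hpv⟩ := Finset.mem_filter.1 hp'
            obtain ⟨hqA₂, hqv⟩ := Finset.mem_filter.1 hq'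
            have hpA : p ∈ A := Finset.mem_of_mem_filter _ hpA₂
            have hqA : q ∈ A := Finset.mem_of_mem_filter _ hqA₂
            obtain ⟨_, _, hplt, _⟩ := hedge p hpA
            obtain ⟨_, _, hqlt, _⟩ := hedge q hqA
            simp only at hpq
            by_cases h1 : p.1 = v <;> by_cases h2 : q.1 = v
            · rw [if_pos h1, if_pos h2] at hpq
              exact Prod.ext (h1.trans h2.symm) hpq
            · rw [if_pos h1, if_neg h2] at hpq
              have hq2 : q.2 = v := hqv.resolve_left h2
              exfalso
              rw [h1] at hplt
              rw [hq2] at hqlt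
              rw [hpq] at hplt
              exact lt_irrefl _ (lt_trans hplt hqlt)
            · rw [if_neg h1, if_pos h2] at hpq
              have hp2 : p.2 = v := hpv.resolve_left h1
              exfalso
              rw [hp2] at hplt
              rw [h2] at hqlt
              rw [← hpq] at hqlt
              exact lt_irrefl _ (lt_trans hplt hqlt)
            · rw [if_neg h1, if_neg h2] at hpq
              have hp2 : p.2 = v := hpv.resolve_left h1
              have hq2 : q.2 = v := hqv.resolve_left h2
              exact Prod.ext hpq (hp2.trans hq2.symm)
        calc A₂b.card ≤ (insert u NB).card := this
          _ ≤ NB.card + 1 := Finset.card_insert_le _ _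
      have hA₂card : A₂.card ≤ NA.card + NB.card + 1 := by
        have h1 : (A₂a ∪ A₂b).card + (A₂a ∩ A₂b).card = A₂a.card + A₂b.card :=
          Finset.card_union_add_card_inter _ _
        have h2 : 0 < (A₂a ∩ A₂b).card := Finset.card_pos.2 ⟨(u, v), huvA₂⟩
        have h3 : A₂.card = (A₂a ∪ A₂b).card := by rw [← hA₂union]
        omega
      have hNABle : NA.card + NB.card ≤ (n - 2) + 2 := by
        have h1 : (NA ∪ NB).card ≤ S'.card := by
          apply Finset.card_le_card
          exact Finset.union_subset (Finset.filter_subset _ _) (Finset.filter_subset _ _)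
        have h2 : (NA ∩ NB).card ≤ 2 := by
          refine le_trans (Finset.card_le_card ?_) hkey
          intro w hw
          obtain ⟨hwNA, hwNB⟩ := Finset.mem_inter.1 hw
          obtain ⟨hwS', hwu⟩ := Finset.mem_filter.1 hwNA
          obtain ⟨_, hwv⟩ := Finset.mem_filter.1 hwNB
          have hwS : w ∈ S := hsubS hwS'
          have hne : w ≠ u ∧ w ≠ v := by
            rw [hS'def] at hwS'
            simp only [Finset.mem_sdiff, Finset.mem_insert, Finset.mem_singleton] at hwS'
            push_neg at hwS'
            exact hwS'.2
          exact Finset.mem_filter.2 ⟨hwS, hne.1, hne.2, sees_comm hwu, sees_comm hwv⟩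
        have h3 : (NA ∪ NB).card + (NA ∩ NB).card = NA.card + NB.card :=
          Finset.card_union_add_card_inter _ _
        rw [hS'card] at h1
        omega
      -- final arithmetic
      have hAcard : A.card ≤ ((n-2) * (n-2) / 4 + (n-2) - 2) + ((n-2) + 2 + 1) := by omega
      obtain ⟨k, rfl⟩ : ∃ k, n = k + 2 := ⟨n - 2, by omega⟩
      have hk2 : k + 2 - 2 = k := by omega
      rw [hk2] at hAcard
      have hsq : (k + 2) * (k + 2) = k * k + 4 * k + 4 := by ring
      show A.card ≤ (k + 2) * (k + 2) / 4 + (k + 2) - 2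
      rw [hsq]
      set m := k * k with hm
      omega


end ERproof

open ERproof

theorem edge_bound_of_doubleReversibleRealizer
    {V : Type*} [Fintype V] (G : SimpleGraph V)
    (hn : 2 ≤ Fintype.card V)
    (h : HasDoubleReversibleRealizer G) :
    G.edgeSet.ncard ≤ Fintype.card V ^ 2 / 4 + Fintype.card V - 2 := by
  classical
  obtain ⟨f, g, hf, hg, hreal⟩ := h
  have hsees : ∀ a b : V, G.Adj a b → Sees f g Finset.univ a b := by
    intro a b hab
    intro z _ hz
    obtain ⟨hbf, hbg⟩ := hz
    rcases eq_or_ne z a with rfl | hza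
    · rcases hbf with ⟨h1, h2⟩ | ⟨h1, h2⟩ <;> linarith
    rcases eq_or_ne z b with rfl | hzb
    · rcases hbf with ⟨h1, h2⟩ | ⟨h1, h2⟩ <;> linarith
    rcases hreal a b hab z hza hzb with ⟨h1, h2⟩ | ⟨h1, h2⟩ | ⟨h1, h2⟩ | ⟨h1, h2⟩
    · rcases hbf with ⟨h3, h4⟩ | ⟨h3, h4⟩ <;> linarith
    · rcases hbg with ⟨h3, h4⟩ | ⟨h3, h4⟩ <;> linarith
    · rcases hbf with ⟨h3, h4⟩ | ⟨h3, h4⟩ <;> linarith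
    · rcases hbg with ⟨h3, h4⟩ | ⟨h3, h4⟩ <;> linarith
  set n := Fintype.card V with hndef
  have hEP := main_bound f g hf hg n Finset.univ (by simp [hndef])
  -- ordered adjacency pairs inject into EP ∪ swap(EP)
  have hsub : (Finset.univ.filter (fun p : V × V => G.Adj p.1 p.2)) ⊆
      EP f g Finset.univ ∪ (EP f g Finset.univ).image Prod.swap := by
    intro p hp
    have hadj : G.Adj p.1 p.2 := (Finset.mem_filter.1 hp).2
    have hne : p.1 ≠ p.2 := G.ne_of_adj hadj
    rcases lt_or_gt_of_ne (fun h : f p.1 = f p.2 => hne (hf h)) with hlt | hgt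
    · apply Finset.mem_union_left
      exact Finset.mem_filter.2 ⟨Finset.mem_product.2 ⟨Finset.mem_univ _, Finset.mem_univ _⟩,
        hlt, hsees p.1 p.2 hadj⟩
    · apply Finset.mem_union_right
      refine Finset.mem_image.2 ⟨(p.2, p.1), ?_, rfl⟩
      exact Finset.mem_filter.2 ⟨Finset.mem_product.2 ⟨Finset.mem_univ _, Finset.mem_univ _⟩,
        hgt, hsees p.2 p.1 hadj.symm⟩
  have h2m := SimpleGraph.two_mul_card_edgeFinset G
  have hcount : 2 * G.edgeFinset.card ≤ 2 * (EP f g Finset.univ).card := by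
    rw [h2m]
    calc (Finset.univ.filter (fun p : V × V => G.Adj p.1 p.2)).card
        ≤ (EP f g Finset.univ ∪ (EP f g Finset.univ).image Prod.swap).card :=
          Finset.card_le_card hsub
      _ ≤ (EP f g Finset.univ).card + ((EP f g Finset.univ).image Prod.swap).card :=
          Finset.card_union_le _ _
      _ ≤ (EP f g Finset.univ).card + (EP f g Finset.univ).card := by
          have := Finset.card_image_le (s := EP f g Finset.univ) (f := Prod.swap)
          omega
      _ = 2 * (EP f g Finset.univ).card := by ring
  have hE : G.edgeSet.ncard = G.edgeFinset.card := by
    rw [← SimpleGraph.coe_edgeFinset, Set.ncard_coe_finset]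
  rw [hE]
  have hpow : n ^ 2 = n * n := sq n
  rw [hpow]
  omega
end

section
/- Every finite simple graph G on n vertices that admits a realizer of the form {π₁, π₂, π₃, π̄₃} has at most n²/4 + 5n edges. -/
open scoped Classical

namespace EdgeBoundAux

open Finset

variable {V : Type*} [Fintype V]

structure Config (V : Type*) where
  G : SimpleGraph V
  a : V → ℝ
  b : V → ℝ
  c : V → ℝ
  ha : Function.Injective a
  hb : Function.Injective b
  hc : Function.Injective c
  key : ∀ u v w, G.Adj u v → c u < c w → c w < c v →
      (a u < a w ∧ a v < a w) ∨ (b u < b w ∧ b v < b w)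

variable (C : Config V)

/-- oriented edges -/
noncomputable def S : Finset (V × V) :=
  Finset.univ.filter (fun p => C.G.Adj p.1 p.2 ∧ C.c p.1 < C.c p.2)

noncomputable def PP : Finset (V × V) :=
  (S C).filter (fun p => C.a p.1 < C.a p.2 ∧ C.b p.1 < C.b p.2)

noncomputable def MM : Finset (V × V) :=
  (S C).filter (fun p => C.a p.2 < C.a p.1 ∧ C.b p.2 < C.b p.1)

noncomputable def HX : Finset (V × V) :=
  (S C).filter (fun p => C.a p.1 < C.a p.2 ∧ C.b p.2 < C.b p.1)

noncomputable def HY : Finset (V × V) :=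
  (S C).filter (fun p => C.a p.2 < C.a p.1 ∧ C.b p.1 < C.b p.2)

noncomputable def HH : Finset (V × V) := HX C ∪ HY C

lemma mem_S {p : V × V} (hp : p ∈ S C) : C.G.Adj p.1 p.2 ∧ C.c p.1 < C.c p.2 :=
  (Finset.mem_filter.1 hp).2

lemma HX_subset_S : HX C ⊆ S C := Finset.filter_subset _ _
lemma HY_subset_S : HY C ⊆ S C := Finset.filter_subset _ _
lemma HH_subset_S : HH C ⊆ S C :=
  Finset.union_subset (HX_subset_S C) (HY_subset_S C)

lemma S_subset : S C ⊆ PP C ∪ MM C ∪ HH C := by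
  intro p hp
  obtain ⟨hadj, _⟩ := mem_S C hp
  have hne : p.1 ≠ p.2 := hadj.ne
  have hA : C.a p.1 ≠ C.a p.2 := fun h => hne (C.ha h)
  have hB : C.b p.1 ≠ C.b p.2 := fun h => hne (C.hb h)
  rcases hA.lt_or_gt with h1 | h1 <;> rcases hB.lt_or_gt with h2 | h2
  · exact Finset.mem_union_left _ (Finset.mem_union_left _
      (Finset.mem_filter.2 ⟨hp, h1, h2⟩))
  · exact Finset.mem_union_right _ (Finset.mem_union_left _
      (Finset.mem_filter.2 ⟨hp, h1, h2⟩))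
  · exact Finset.mem_union_right _ (Finset.mem_union_right _
      (Finset.mem_filter.2 ⟨hp, h1, h2⟩))
  · exact Finset.mem_union_left _ (Finset.mem_union_right _
      (Finset.mem_filter.2 ⟨hp, h1, h2⟩))

lemma card_PP_le : (PP C).card ≤ Fintype.card V := by
  have h2 : ∀ p ∈ PP C, ∀ q ∈ PP C, p.2 = q.2 → C.c p.1 < C.c q.1 → False := by
    intro p hp q hq he hlt
    obtain ⟨hpS, hpa, hpb⟩ := Finset.mem_filter.1 hp
    obtain ⟨hqS, hqa, hqb⟩ := Finset.mem_filter.1 hq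
    obtain ⟨hadj, hpc⟩ := mem_S C hpS
    obtain ⟨_, hqc⟩ := mem_S C hqS
    have h3 : C.c q.1 < C.c p.2 := he ▸ hqc
    rcases C.key p.1 p.2 q.1 hadj hlt h3 with ⟨_, h⟩ | ⟨_, h⟩
    · rw [he] at h; exact absurd hqa (not_lt.2 h.le)
    · rw [he] at h; exact absurd hqb (not_lt.2 h.le)
  calc (PP C).card ≤ (Finset.univ : Finset V).card := by
        apply Finset.card_le_card_of_injOn Prod.snd (fun _ _ => Finset.mem_univ _)
        intro p hp q hq he
        have h1 : p.1 = q.1 := by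
          by_contra hne1
          have hcc : C.c p.1 ≠ C.c q.1 := fun h => hne1 (C.hc h)
          rcases hcc.lt_or_gt with h | h
          · exact h2 p (by simpa using hp) q (by simpa using hq) he h
          · exact h2 q (by simpa using hq) p (by simpa using hp) he.symm h
        exact Prod.ext h1 he
    _ = Fintype.card V := Finset.card_univ

lemma card_MM_le : (MM C).card ≤ Fintype.card V := by
  have h2 : ∀ p ∈ MM C, ∀ q ∈ MM C, p.1 = q.1 → C.c p.2 < C.c q.2 → False := by
    intro p hp q hq he hlt
    obtain ⟨hpS, hpa, hpb⟩ := Finset.mem_filter.1 hp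
    obtain ⟨hqS, hqa, hqb⟩ := Finset.mem_filter.1 hq
    obtain ⟨_, hpc⟩ := mem_S C hpS
    obtain ⟨hadj, hqc⟩ := mem_S C hqS
    have h3 : C.c q.1 < C.c p.2 := he ▸ hpc
    rcases C.key q.1 q.2 p.2 hadj h3 hlt with ⟨h, _⟩ | ⟨h, _⟩
    · rw [← he] at h; exact absurd hpa (not_lt.2 h.le)
    · rw [← he] at h; exact absurd hpb (not_lt.2 h.le)
  calc (MM C).card ≤ (Finset.univ : Finset V).card := by
        apply Finset.card_le_card_of_injOn Prod.fst (fun _ _ => Finset.mem_univ _)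
        intro p hp q hq he
        have h1 : p.2 = q.2 := by
          by_contra hne1
          have hcc : C.c p.2 ≠ C.c q.2 := fun h => hne1 (C.hc h)
          rcases hcc.lt_or_gt with h | h
          · exact h2 p (by simpa using hp) q (by simpa using hq) he h
          · exact h2 q (by simpa using hq) p (by simpa using hp) he.symm h
        exact Prod.ext he h1
    _ = Fintype.card V := Finset.card_univ

/-- symmetrized adjacency of the mixed classes -/
def AdjH (u v : V) : Prop := (u, v) ∈ HH C ∨ (v, u) ∈ HH C

lemma AdjH.symm' {u v : V} (h : AdjH C u v) : AdjH C v u := h.symm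

lemma adjH_comm (u v : V) : AdjH C u v ↔ AdjH C v u := or_comm

lemma AdjH.ne {u v : V} (h : AdjH C u v) : u ≠ v := by
  rcases h with h | h
  · exact (mem_S C (HH_subset_S C h)).1.ne
  · exact ((mem_S C (HH_subset_S C h)).1.ne).symm

lemma AdjH.orient {u v : V} (h : AdjH C u v) (hlt : C.c u < C.c v) : (u, v) ∈ HH C := by
  rcases h with h | h
  · exact h
  · exact absurd (mem_S C (HH_subset_S C h)).2 (not_lt.2 hlt.le)

lemma mem_HH_clt {u v : V} (h : (u, v) ∈ HH C) : C.c u < C.c v :=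
  (mem_S C (HH_subset_S C h)).2

/-- neighborhood in H -/
noncomputable def NH (v : V) : Finset V := Finset.univ.filter (fun u => AdjH C v u)

noncomputable def dH (v : V) : ℕ := (NH C v).card

noncomputable def tH (p : V × V) : ℕ := (NH C p.1 ∩ NH C p.2).card

noncomputable def H2 : Finset (V × V) := Finset.univ.filter (fun p => AdjH C p.1 p.2)

lemma card_H2 : (H2 C).card = 2 * (HH C).card := by
  have hsub : HH C ⊆ H2 C := fun p hp => by
    simpa [H2, AdjH] using Or.inl (by simpa using hp)
  have himg : H2 C = HH C ∪ (HH C).image Prod.swap := by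
    apply Finset.ext
    intro p
    simp only [H2, Finset.mem_union, Finset.mem_filter, Finset.mem_univ, true_and,
      Finset.mem_image]
    simp only [AdjH]
    constructor
    · rintro (h | h)
      · exact Or.inl h
      · exact Or.inr ⟨(p.2, p.1), h, rfl⟩
    · rintro (h | ⟨q, hq, rfl⟩)
      · exact Or.inl h
      · exact Or.inr (by simpa using hq)
  have hdisj : Disjoint (HH C) ((HH C).image Prod.swap) := by
    rw [Finset.disjoint_left]
    rintro p hp hp2
    rcases Finset.mem_image.1 hp2 with ⟨q, hq, rfl⟩
    exact absurd (mem_HH_clt C hq) (not_lt.2 (mem_HH_clt C hp).le)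
  rw [himg, Finset.card_union_of_disjoint hdisj,
    Finset.card_image_of_injective _ Prod.swap_injective, two_mul]

lemma fiber1_card (v : V) : ((H2 C).filter (fun p => p.1 = v)).card = dH C v := by
  apply Finset.card_bij (fun p _ => p.2)
  · intro p hp
    obtain ⟨hp1, hp2⟩ := Finset.mem_filter.1 hp
    simp only [NH, Finset.mem_filter, Finset.mem_univ, true_and]
    have := (Finset.mem_filter.1 hp1).2
    rwa [hp2] at this
  · intro p hp q hq he
    have h1 := (Finset.mem_filter.1 hp).2
    have h2 := (Finset.mem_filter.1 hq).2
    exact Prod.ext (h1.trans h2.symm) he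
  · intro u hu
    refine ⟨(v, u), Finset.mem_filter.2 ⟨Finset.mem_filter.2 ⟨Finset.mem_univ _, ?_⟩, rfl⟩, rfl⟩
    simpa [NH] using hu

lemma fiber2_card (v : V) : ((H2 C).filter (fun p => p.2 = v)).card = dH C v := by
  apply Finset.card_bij (fun p _ => p.1)
  · intro p hp
    obtain ⟨hp1, hp2⟩ := Finset.mem_filter.1 hp
    simp only [NH, Finset.mem_filter, Finset.mem_univ, true_and]
    have := (Finset.mem_filter.1 hp1).2
    rw [hp2] at this
    exact this.symm'
  · intro p hp q hq he
    have h1 := (Finset.mem_filter.1 hp).2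
    have h2 := (Finset.mem_filter.1 hq).2
    exact Prod.ext he (h1.trans h2.symm)
  · intro u hu
    refine ⟨(u, v), Finset.mem_filter.2 ⟨Finset.mem_filter.2 ⟨Finset.mem_univ _, ?_⟩, rfl⟩, rfl⟩
    have : AdjH C v u := by simpa [NH] using hu
    exact this.symm'

lemma sum_dH : ∑ v, dH C v = (H2 C).card := by
  rw [Finset.card_eq_sum_card_fiberwise (f := Prod.fst) (t := Finset.univ)
    (fun _ _ => Finset.mem_univ _)]
  exact Finset.sum_congr rfl (fun v _ => (fiber1_card C v).symm)

lemma sum_fst_dH : ∑ p ∈ H2 C, dH C p.1 = ∑ v, dH C v ^ 2 := by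
  rw [← Finset.sum_fiberwise_of_maps_to (g := Prod.fst) (t := Finset.univ)
    (fun _ _ => Finset.mem_univ _) (fun p => dH C p.1)]
  apply Finset.sum_congr rfl
  intro v _
  have : ∀ p ∈ (H2 C).filter (fun p => p.1 = v), dH C p.1 = dH C v := by
    intro p hp; rw [(Finset.mem_filter.1 hp).2]
  rw [Finset.sum_congr rfl this, Finset.sum_const, fiber1_card, smul_eq_mul, sq]

lemma sum_snd_dH : ∑ p ∈ H2 C, dH C p.2 = ∑ v, dH C v ^ 2 := by
  rw [← Finset.sum_fiberwise_of_maps_to (g := Prod.snd) (t := Finset.univ)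
    (fun _ _ => Finset.mem_univ _) (fun p => dH C p.2)]
  apply Finset.sum_congr rfl
  intro v _
  have : ∀ p ∈ (H2 C).filter (fun p => p.2 = v), dH C p.2 = dH C v := by
    intro p hp; rw [(Finset.mem_filter.1 hp).2]
  rw [Finset.sum_congr rfl this, Finset.sum_const, fiber2_card, smul_eq_mul, sq]

lemma dH_add_dH_le (u v : V) : dH C u + dH C v ≤ Fintype.card V + tH C (u, v) := by
  have h := Finset.card_union_add_card_inter (NH C u) (NH C v)
  have h2 : (NH C u ∪ NH C v).card ≤ Fintype.card V := by
    simpa using Finset.card_le_card (Finset.subset_univ (NH C u ∪ NH C v))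
  calc dH C u + dH C v = (NH C u ∪ NH C v).card + (NH C u ∩ NH C v).card := h.symm
    _ ≤ Fintype.card V + tH C (u, v) := by
        exact Nat.add_le_add_right h2 _

lemma mem_HX {p : V × V} (hp : p ∈ HX C) :
    p ∈ S C ∧ C.a p.1 < C.a p.2 ∧ C.b p.2 < C.b p.1 := Finset.mem_filter.1 hp

lemma mem_HY {p : V × V} (hp : p ∈ HY C) :
    p ∈ S C ∧ C.a p.2 < C.a p.1 ∧ C.b p.1 < C.b p.2 := Finset.mem_filter.1 hp

lemma mem_HH_not_HX {p : V × V} (hp : p ∈ HH C) (hx : p ∉ HX C) : p ∈ HY C := by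
  rcases Finset.mem_union.1 hp with h | h
  · exact absurd h hx
  · exact h

/-- a same-type X path blocks the long pair -/
lemma blockX {u j v : V} (h1 : (u, j) ∈ HX C) (h2 : (j, v) ∈ HX C)
    (h3 : (u, v) ∈ S C) : False := by
  obtain ⟨h1S, h1a, h1b⟩ := mem_HX C h1
  obtain ⟨h2S, h2a, h2b⟩ := mem_HX C h2
  obtain ⟨hadj, _⟩ := mem_S C h3
  rcases C.key u v j hadj (mem_S C h1S).2 (mem_S C h2S).2 with ⟨_, h⟩ | ⟨h, _⟩
  · exact absurd h2a (not_lt.2 h.le)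
  · exact absurd h1b (not_lt.2 h.le)

lemma blockY {u j v : V} (h1 : (u, j) ∈ HY C) (h2 : (j, v) ∈ HY C)
    (h3 : (u, v) ∈ S C) : False := by
  obtain ⟨h1S, h1a, h1b⟩ := mem_HY C h1
  obtain ⟨h2S, h2a, h2b⟩ := mem_HY C h2
  obtain ⟨hadj, _⟩ := mem_S C h3
  rcases C.key u v j hadj (mem_S C h1S).2 (mem_S C h2S).2 with ⟨h, _⟩ | ⟨_, h⟩
  · exact absurd h1a (not_lt.2 h.le)
  · exact absurd h2b (not_lt.2 h.le)

/-- two XY-type middles are impossible -/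
lemma middleXY {u j j' v : V} (h1 : (u, j) ∈ HX C) (h1' : (u, j') ∈ HX C)
    (h2 : (j, v) ∈ HY C) (h2' : (j', v) ∈ HY C) (hlt : C.c j < C.c j') : False := by
  obtain ⟨h1S, h1a, h1b⟩ := mem_HX C h1
  obtain ⟨h1S', h1a', h1b'⟩ := mem_HX C h1'
  obtain ⟨h2S, h2a, h2b⟩ := mem_HY C h2
  obtain ⟨h2S', h2a', h2b'⟩ := mem_HY C h2'
  have ha1 : C.a j' < C.a j := by
    rcases C.key u j' j (mem_S C h1S').1 (mem_S C h1S).2 hlt with ⟨_, h⟩ | ⟨h, _⟩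
    · exact h
    · exact absurd h1b (not_lt.2 h.le)
  have ha2 : C.a j < C.a j' := by
    rcases C.key j v j' (mem_S C h2S).1 hlt (mem_S C h2S').2 with ⟨h, _⟩ | ⟨_, h⟩
    · exact h
    · exact absurd h2b' (not_lt.2 h.le)
  exact absurd ha1 (not_lt.2 ha2.le)

/-- two YX-type middles are impossible -/
lemma middleYX {u j j' v : V} (h1 : (u, j) ∈ HY C) (h1' : (u, j') ∈ HY C)
    (h2 : (j, v) ∈ HX C) (h2' : (j', v) ∈ HX C) (hlt : C.c j < C.c j') : False := by
  obtain ⟨h1S, h1a, h1b⟩ := mem_HY C h1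
  obtain ⟨h1S', h1a', h1b'⟩ := mem_HY C h1'
  obtain ⟨h2S, h2a, h2b⟩ := mem_HX C h2
  obtain ⟨h2S', h2a', h2b'⟩ := mem_HX C h2'
  have hb1 : C.b j' < C.b j := by
    rcases C.key u j' j (mem_S C h1S').1 (mem_S C h1S).2 hlt with ⟨h, _⟩ | ⟨_, h⟩
    · exact absurd h1a (not_lt.2 h.le)
    · exact h
  have hb2 : C.b j < C.b j' := by
    rcases C.key j v j' (mem_S C h2S).1 hlt (mem_S C h2S').2 with ⟨_, h⟩ | ⟨h, _⟩
    · exact absurd h2a' (not_lt.2 h.le)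
    · exact h
  exact absurd hb1 (not_lt.2 hb2.le)

/-- canonical triangles: strictly `c`-increasing triples with all three pairs in `HH` -/
noncomputable def T : Finset (V × V × V) :=
  Finset.univ.filter (fun x =>
    (x.1, x.2.1) ∈ HH C ∧ (x.2.1, x.2.2) ∈ HH C ∧ (x.1, x.2.2) ∈ HH C)

lemma card_T_le : (T C).card ≤ 2 * (HH C).card := by
  have h := Finset.card_le_card_of_injOn
    (f := fun x : V × V × V => (((x.1, x.2.2) : V × V),
      if (x.1, x.2.1) ∈ HX C then true else false))
    (s := T C) (t := (HH C) ×ˢ (Finset.univ : Finset Bool)) ?_ ?_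
  · calc (T C).card ≤ ((HH C) ×ˢ (Finset.univ : Finset Bool)).card := h
      _ = 2 * (HH C).card := by
          rw [Finset.card_product]
          simp [mul_comm]
  · intro x hx
    obtain ⟨_, h1, h2, h3⟩ := Finset.mem_filter.1 hx
    exact Finset.mem_product.2 ⟨h3, Finset.mem_univ _⟩
  · rintro ⟨u, j, v⟩ hx ⟨u', j', v'⟩ hx' he
    obtain ⟨_, h1, h2, h3⟩ := Finset.mem_filter.1 hx
    obtain ⟨_, h1', h2', h3'⟩ := Finset.mem_filter.1 hx'
    simp only [Prod.mk.injEq] at he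
    obtain ⟨⟨heu, hev⟩, htag⟩ := he
    subst heu; subst hev
    suffices hj : j = j' by rw [hj]
    by_contra hne
    have hcne : C.c j ≠ C.c j' := fun h => hne (C.hc h)
    by_cases hxj : (u, j) ∈ HX C
    · have hxj' : (u, j') ∈ HX C := by
        by_contra hxx
        rw [if_pos hxj, if_neg hxx] at htag
        exact Bool.noConfusion htag
      have hyj : (j, v) ∈ HY C := by
        refine mem_HH_not_HX C h2 (fun hc => ?_)
        exact blockX C hxj hc (HH_subset_S C h3)
      have hyj' : (j', v) ∈ HY C := by
        refine mem_HH_not_HX C h2' (fun hc => ?_)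
        exact blockX C hxj' hc (HH_subset_S C h3)
      rcases hcne.lt_or_gt with hlt | hlt
      · exact middleXY C hxj hxj' hyj hyj' hlt
      · exact middleXY C hxj' hxj hyj' hyj hlt
    · have hxj' : (u, j') ∉ HX C := by
        intro hxx
        rw [if_neg hxj, if_pos hxx] at htag
        exact Bool.noConfusion htag
      have hyj : (u, j) ∈ HY C := mem_HH_not_HX C h1 hxj
      have hyj' : (u, j') ∈ HY C := mem_HH_not_HX C h1' hxj'
      have hxv : (j, v) ∈ HX C := by
        by_contra hc
        exact blockY C hyj (mem_HH_not_HX C h2 hc) (HH_subset_S C h3)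
      have hxv' : (j', v) ∈ HX C := by
        by_contra hc
        exact blockY C hyj' (mem_HH_not_HX C h2' hc) (HH_subset_S C h3)
      rcases hcne.lt_or_gt with hlt | hlt
      · exact middleYX C hyj hyj' hxv hxv' hlt
      · exact middleYX C hyj' hyj hxv' hxv hlt

noncomputable def W : Finset ((V × V) × V) :=
  ((HH C) ×ˢ (Finset.univ : Finset V)).filter
    (fun q => AdjH C q.1.1 q.2 ∧ AdjH C q.1.2 q.2)

lemma sum_tH_HH : ∑ p ∈ HH C, tH C p = (W C).card := by
  unfold W
  rw [Finset.card_eq_sum_card_fiberwise (f := Prod.fst) (t := HH C)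
    (fun q hq => (Finset.mem_product.1 (Finset.mem_filter.1 hq).1).1)]
  apply Finset.sum_congr rfl
  intro p hp
  apply Finset.card_bij (fun j _ => ((p, j) : (V × V) × V))
  · intro j hj
    simp only [Finset.mem_inter, NH, Finset.mem_filter, Finset.mem_univ, true_and] at hj
    exact Finset.mem_filter.2 ⟨Finset.mem_filter.2
      ⟨Finset.mem_product.2 ⟨hp, Finset.mem_univ _⟩, hj.1, hj.2⟩, rfl⟩
  · intro j _ j' _ he
    exact congrArg Prod.snd he
  · rintro ⟨q, j⟩ hq
    obtain ⟨hq1, hq2⟩ := Finset.mem_filter.1 hq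
    obtain rfl : q = p := hq2
    obtain ⟨hadj1, hadj2⟩ := (Finset.mem_filter.1 hq1).2
    refine ⟨j, ?_, rfl⟩
    simp only [Finset.mem_inter, NH, Finset.mem_filter, Finset.mem_univ, true_and]
    exact ⟨hadj1, hadj2⟩

set_option maxHeartbeats 1600000 in
lemma card_W_le : (W C).card ≤ 3 * (T C).card := by
  have h := Finset.card_le_card_of_injOn
    (f := fun q : (V × V) × V =>
      if C.c q.2 < C.c q.1.1 then (((q.2, q.1.1, q.1.2) : V × V × V), (0 : ℕ))
      else if C.c q.2 < C.c q.1.2 then ((q.1.1, q.2, q.1.2), 1)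
      else ((q.1.1, q.1.2, q.2), 2))
    (s := W C) (t := (T C) ×ˢ (Finset.range 3)) ?_ ?_
  · calc (W C).card ≤ ((T C) ×ˢ (Finset.range 3)).card := h
      _ = 3 * (T C).card := by rw [Finset.card_product, Finset.card_range, mul_comm]
  · rintro ⟨⟨u, v⟩, j⟩ hq
    obtain ⟨hq1, hju, hjv⟩ := Finset.mem_filter.1 hq
    have huv : (u, v) ∈ HH C := (Finset.mem_product.1 hq1).1
    have hcuv : C.c u < C.c v := mem_HH_clt C huv
    have hju' : AdjH C u j := hju
    have hjv' : AdjH C v j := hjv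
    have hnu : C.c j ≠ C.c u := fun h => AdjH.ne C hju' (C.hc h).symm
    have hnv : C.c j ≠ C.c v := fun h => AdjH.ne C hjv' (C.hc h).symm
    dsimp only
    split_ifs with h1 h2
    · refine Finset.mem_product.2 ⟨Finset.mem_filter.2 ⟨Finset.mem_univ _, ?_, ?_, ?_⟩,
        by simp⟩
      · exact AdjH.orient C (AdjH.symm' C hju') h1
      · exact huv
      · exact AdjH.orient C (AdjH.symm' C hjv') (h1.trans hcuv)
    · have h1' : C.c u < C.c j := hnu.symm.lt_of_le (not_lt.1 h1)
      refine Finset.mem_product.2 ⟨Finset.mem_filter.2 ⟨Finset.mem_univ _, ?_, ?_, ?_⟩,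
        by simp⟩
      · exact AdjH.orient C hju' h1'
      · exact AdjH.orient C (AdjH.symm' C hjv') h2
      · exact huv
    · have h2' : C.c v < C.c j := hnv.symm.lt_of_le (not_lt.1 h2)
      refine Finset.mem_product.2 ⟨Finset.mem_filter.2 ⟨Finset.mem_univ _, ?_, ?_, ?_⟩,
        by simp⟩
      · exact huv
      · exact AdjH.orient C hjv' h2'
      · exact AdjH.orient C hju' (hcuv.trans h2')
  · rintro ⟨⟨u, v⟩, j⟩ hq ⟨⟨u', v'⟩, j'⟩ hq' he
    dsimp only at he
    split_ifs at he with h1 h2 h3 h4 h5 h6 h7 h8 <;>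
      simp only [Prod.mk.injEq] at he <;>
      first
        | (obtain ⟨⟨e1, e2, e3⟩, -⟩ := he; subst e1; subst e2; subst e3; rfl)
        | (exact absurd he.2 (by norm_num))

lemma H2_eq : H2 C = HH C ∪ (HH C).image Prod.swap := by
  apply Finset.ext
  intro p
  simp only [H2, Finset.mem_union, Finset.mem_filter, Finset.mem_univ, true_and,
    Finset.mem_image]
  simp only [AdjH]
  constructor
  · rintro (h | h)
    · exact Or.inl h
    · exact Or.inr ⟨(p.2, p.1), h, rfl⟩
  · rintro (h | ⟨q, hq, rfl⟩)
    · exact Or.inl h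
    · exact Or.inr (by simpa using hq)

lemma H2_disj : Disjoint (HH C) ((HH C).image Prod.swap) := by
  rw [Finset.disjoint_left]
  rintro p hp hp2
  rcases Finset.mem_image.1 hp2 with ⟨q, hq, rfl⟩
  exact absurd (mem_HH_clt C hq) (not_lt.2 (mem_HH_clt C hp).le)

lemma sum_tH_H2 : ∑ p ∈ H2 C, tH C p = 2 * ∑ p ∈ HH C, tH C p := by
  rw [H2_eq, Finset.sum_union (H2_disj C), Finset.sum_image
    (fun x _ y _ h => Prod.swap_injective h)]
  have : ∀ p ∈ HH C, tH C p.swap = tH C p := by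
    intro p _
    unfold tH
    rw [Finset.inter_comm]
    rfl
  rw [Finset.sum_congr rfl this, two_mul]

lemma sum_sq_le : ∑ v, dH C v ^ 2 ≤ (HH C).card * (Fintype.card V + 6) := by
  have h4 : ∑ p ∈ H2 C, tH C p ≤ 12 * (HH C).card := by
    rw [sum_tH_H2, sum_tH_HH]
    calc 2 * (W C).card ≤ 2 * (3 * (T C).card) :=
          Nat.mul_le_mul_left _ (card_W_le C)
      _ ≤ 2 * (3 * (2 * (HH C).card)) :=
          Nat.mul_le_mul_left _ (Nat.mul_le_mul_left _ (card_T_le C))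
      _ = 12 * (HH C).card := by ring
  have hmain : 2 * ∑ v, dH C v ^ 2 ≤ 2 * ((HH C).card * (Fintype.card V + 6)) := by
    calc 2 * ∑ v, dH C v ^ 2 = ∑ p ∈ H2 C, (dH C p.1 + dH C p.2) := by
          rw [Finset.sum_add_distrib, sum_fst_dH, sum_snd_dH, two_mul]
      _ ≤ ∑ p ∈ H2 C, (Fintype.card V + tH C p) :=
          Finset.sum_le_sum (fun p _ => dH_add_dH_le C p.1 p.2)
      _ = (H2 C).card * Fintype.card V + ∑ p ∈ H2 C, tH C p := by
          rw [Finset.sum_add_distrib, Finset.sum_const, smul_eq_mul]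
      _ ≤ (H2 C).card * Fintype.card V + 12 * (HH C).card :=
          Nat.add_le_add_left h4 _
      _ = 2 * (HH C).card * Fintype.card V + 12 * (HH C).card := by rw [card_H2]
      _ = 2 * ((HH C).card * (Fintype.card V + 6)) := by ring
  exact Nat.le_of_mul_le_mul_left hmain (by norm_num)

lemma card_HH_real :
    4 * (((HH C).card : ℝ)) ^ 2 ≤
      ((HH C).card : ℝ) * ((Fintype.card V : ℝ) * ((Fintype.card V : ℝ) + 6)) := by
  have hcs := sq_sum_le_card_mul_sum_sq (s := (Finset.univ : Finset V))
    (f := fun v => (dH C v : ℝ))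
  have h1 : (∑ v, (dH C v : ℝ)) = 2 * ((HH C).card : ℝ) := by
    have : ∑ v, dH C v = 2 * (HH C).card := by rw [sum_dH, card_H2]
    calc (∑ v, (dH C v : ℝ)) = ((∑ v, dH C v : ℕ) : ℝ) := by push_cast; rfl
      _ = 2 * ((HH C).card : ℝ) := by rw [this]; push_cast; ring
  have h2 : ∑ v, (dH C v : ℝ) ^ 2 ≤ ((HH C).card : ℝ) * ((Fintype.card V : ℝ) + 6) := by
    calc ∑ v, (dH C v : ℝ) ^ 2 = ((∑ v, dH C v ^ 2 : ℕ) : ℝ) := by push_cast; rfl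
      _ ≤ (((HH C).card * (Fintype.card V + 6) : ℕ) : ℝ) := Nat.cast_le.2 (sum_sq_le C)
      _ = ((HH C).card : ℝ) * ((Fintype.card V : ℝ) + 6) := by push_cast; ring
  rw [h1, Finset.card_univ] at hcs
  have hn : (0 : ℝ) ≤ (Fintype.card V : ℝ) := Nat.cast_nonneg _
  calc 4 * (((HH C).card : ℝ)) ^ 2 = (2 * ((HH C).card : ℝ)) ^ 2 := by ring
    _ ≤ (Fintype.card V : ℝ) * ∑ v, (dH C v : ℝ) ^ 2 := hcs
    _ ≤ (Fintype.card V : ℝ) * (((HH C).card : ℝ) * ((Fintype.card V : ℝ) + 6)) :=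
        mul_le_mul_of_nonneg_left h2 hn
    _ = ((HH C).card : ℝ) * ((Fintype.card V : ℝ) * ((Fintype.card V : ℝ) + 6)) := by ring

lemma card_S_le : (S C).card ≤ 2 * Fintype.card V + (HH C).card := by
  calc (S C).card ≤ (PP C ∪ MM C ∪ HH C).card := Finset.card_le_card (S_subset C)
    _ ≤ (PP C ∪ MM C).card + (HH C).card := Finset.card_union_le _ _
    _ ≤ (PP C).card + (MM C).card + (HH C).card :=
        Nat.add_le_add_right (Finset.card_union_le _ _) _
    _ ≤ Fintype.card V + Fintype.card V + (HH C).card :=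
        Nat.add_le_add_right (Nat.add_le_add (card_PP_le C) (card_MM_le C)) _
    _ = 2 * Fintype.card V + (HH C).card := by ring

lemma card_S_eq : (S C).card = C.G.edgeFinset.card := by
  refine Finset.card_bij (s := S C) (t := C.G.edgeFinset)
    (fun (p : V × V) _ => s(p.1, p.2)) ?_ ?_ ?_
  · intro p hp
    rw [SimpleGraph.mem_edgeFinset, SimpleGraph.mem_edgeSet]
    exact (mem_S C hp).1
  · intro p hp q hq he
    rw [Sym2.eq_iff] at he
    rcases he with ⟨h1, h2⟩ | ⟨h1, h2⟩
    · exact Prod.ext h1 h2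
    · exfalso
      have hp' := (mem_S C hp).2
      have hq' := (mem_S C hq).2
      rw [h1, h2] at hp'
      exact absurd hq' (not_lt.2 hp'.le)
  · intro e he
    induction e with
    | _ u v =>
      have hadj : C.G.Adj u v := by
        rw [SimpleGraph.mem_edgeFinset, SimpleGraph.mem_edgeSet] at he
        exact he
      have hne : C.c u ≠ C.c v := fun h => hadj.ne (C.hc h)
      rcases hne.lt_or_gt with hlt | hlt
      · exact ⟨(u, v), Finset.mem_filter.2 ⟨Finset.mem_univ _, hadj, hlt⟩, rfl⟩
      · exact ⟨(v, u), Finset.mem_filter.2 ⟨Finset.mem_univ _, hadj.symm, hlt⟩,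
          Sym2.eq_swap⟩

end EdgeBoundAux

/-- `G` has a realizer of the form `{π₁, π₂, π₃, π̄₃}`: three linear orders on the
vertices (encoded by injective real-valued functions) such that for every edge
`{u,v}` and every other vertex `w`, `w` lies above both `u` and `v` in one of the
four orders `π₁, π₂, π₃, π̄₃`. -/
def HasSingleReversibleRealizer {V : Type*} (G : SimpleGraph V) : Prop :=
  ∃ π₁ π₂ π₃ : V → ℝ,
    Function.Injective π₁ ∧ Function.Injective π₂ ∧ Function.Injective π₃ ∧
    ∀ u v, G.Adj u v → ∀ w, w ≠ u → w ≠ v →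
      (π₁ u < π₁ w ∧ π₁ v < π₁ w) ∨ (π₂ u < π₂ w ∧ π₂ v < π₂ w) ∨
      (π₃ u < π₃ w ∧ π₃ v < π₃ w) ∨ (π₃ w < π₃ u ∧ π₃ w < π₃ v)

theorem edge_bound_of_singleReversibleRealizer
    {V : Type*} [Fintype V] (G : SimpleGraph V)
    (h : HasSingleReversibleRealizer G) :
    (G.edgeSet.ncard : ℝ) ≤ (Fintype.card V : ℝ) ^ 2 / 4 + 5 * Fintype.card V := by
  classical
  obtain ⟨a, b, c, ha, hb, hc, hreal⟩ := h
  have key : ∀ u v w, G.Adj u v → c u < c w → c w < c v →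
      (a u < a w ∧ a v < a w) ∨ (b u < b w ∧ b v < b w) := by
    intro u v w huv h1 h2
    have hwu : w ≠ u := by rintro rfl; exact absurd h1 (lt_irrefl _)
    have hwv : w ≠ v := by rintro rfl; exact absurd h2 (lt_irrefl _)
    rcases hreal u v huv w hwu hwv with h' | h' | h' | h'
    · exact Or.inl h'
    · exact Or.inr h'
    · exact absurd h'.2 (not_lt.2 h2.le)
    · exact absurd h'.1 (not_lt.2 h1.le)
  let C : EdgeBoundAux.Config V := ⟨G, a, b, c, ha, hb, hc, key⟩
  have hedge : G.edgeSet.ncard = (EdgeBoundAux.S C).card := by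
    rw [EdgeBoundAux.card_S_eq C]
    rw [Set.ncard_eq_toFinset_card']
    exact congrArg Finset.card (Set.toFinset_congr rfl)
  have hS := EdgeBoundAux.card_S_le C
  have hHH := EdgeBoundAux.card_HH_real C
  set n : ℝ := (Fintype.card V : ℝ) with hn
  set m : ℝ := ((EdgeBoundAux.HH C).card : ℝ) with hm
  have hm0 : 0 ≤ m := Nat.cast_nonneg _
  have hn0 : 0 ≤ n := Nat.cast_nonneg _
  have hSR : (G.edgeSet.ncard : ℝ) ≤ 2 * n + m := by
    rw [hedge]
    calc ((EdgeBoundAux.S C).card : ℝ)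
        ≤ ((2 * Fintype.card V + (EdgeBoundAux.HH C).card : ℕ) : ℝ) := Nat.cast_le.2 hS
      _ = 2 * n + m := by push_cast; ring
  have hmb : m ≤ n * (n + 6) / 4 := by
    rcases eq_or_lt_of_le hm0 with hz | hpos
    · nlinarith
    · nlinarith [hHH, hpos]
  calc (G.edgeSet.ncard : ℝ) ≤ 2 * n + m := hSR
    _ ≤ 2 * n + n * (n + 6) / 4 := by linarith
    _ ≤ n ^ 2 / 4 + 5 * n := by nlinarith
end

section
/- Box graphs contain no 17-clique: for every generic finite set Y ⊂ ℝ³ there is no 17-element subset A ⊆ Y such that every pair of distinct points of A spans an empty box. -/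
open scoped Classical

/-- Auxiliary predicate: `p` has a predecessor in `A` of signature `(s, t)`. -/
def PredProp (A : Finset (Fin 3 → ℝ)) (p : Fin 3 → ℝ) (s t : Bool) : Prop :=
  ∃ r ∈ A, r 0 < p 0 ∧ (if s then r 1 < p 1 else p 1 < r 1) ∧
    (if t then r 2 < p 2 else p 2 < r 2)

/-- Signature map into a 16-element set. -/
noncomputable def gAux (A : Finset (Fin 3 → ℝ)) (p : Fin 3 → ℝ) : Bool × Bool → Bool :=
  fun st => decide (PredProp A p st.1 st.2)

theorem boxGraph_no_K17 (Y : Finset (Fin 3 → ℝ)) (hgen : Generic3 Y) :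
    ¬ ∃ A ⊆ Y, A.card = 17 ∧
      ∀ p ∈ A, ∀ q ∈ A, p ≠ q → SpansEmptyBox Y p q := by
  rintro ⟨A, hAY, hcard, hclique⟩
  classical
  -- Key: there is no monotone (in every coordinate) chain of 3 points of `A`.
  have key : ∀ r ∈ A, ∀ p ∈ A, ∀ q ∈ A,
      (∀ i, (r i < p i ∧ p i < q i) ∨ (q i < p i ∧ p i < r i)) → False := by
    intro r hr p hp q hq h
    have hrq : r ≠ q := by
      rcases h 0 with ⟨h1, h2⟩ | ⟨h1, h2⟩
      · exact fun e => ne_of_lt (h1.trans h2) (congrFun e 0)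
      · exact fun e => ne_of_gt (h1.trans h2) (congrFun e 0)
    refine hclique r hr q hq hrq p (hAY hp) ?_
    intro i
    rcases h i with ⟨h1, h2⟩ | ⟨h1, h2⟩
    · exact ⟨lt_of_le_of_lt (min_le_left _ _) h1, lt_of_lt_of_le h2 (le_max_right _ _)⟩
    · exact ⟨lt_of_le_of_lt (min_le_right _ _) h1, lt_of_lt_of_le h2 (le_max_left _ _)⟩
  -- Two points with the same signature and increasing first coordinate give a chain.
  have main : ∀ p ∈ A, ∀ q ∈ A, p 0 < q 0 → gAux A p = gAux A q → False := by
    intro p hp q hq h0 hg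
    have hpq : p ≠ q := fun e => ne_of_lt h0 (congrFun e 0)
    have h1 := hgen p (hAY hp) q (hAY hq) hpq 1
    have h2 := hgen p (hAY hp) q (hAY hq) hpq 2
    obtain ⟨s, hs⟩ : ∃ s : Bool, if s then p 1 < q 1 else q 1 < p 1 := by
      rcases h1.lt_or_gt with hlt | hlt
      · exact ⟨true, hlt⟩
      · exact ⟨false, hlt⟩
    obtain ⟨t, ht⟩ : ∃ t : Bool, if t then p 2 < q 2 else q 2 < p 2 := by
      rcases h2.lt_or_gt with hlt | hlt
      · exact ⟨true, hlt⟩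
      · exact ⟨false, hlt⟩
    have hPq : PredProp A q s t := ⟨p, hp, h0, hs, ht⟩
    have hgeq : gAux A p (s, t) = gAux A q (s, t) := congrFun hg (s, t)
    have hPp : PredProp A p s t := by
      have : decide (PredProp A p s t) = true := by
        show gAux A p (s, t) = true
        rw [hgeq]
        exact decide_eq_true hPq
      exact of_decide_eq_true this
    obtain ⟨r, hrA, hr0, hrs, hrt⟩ := hPp
    refine key r hrA p hp q hq ?_
    intro i
    fin_cases i
    · exact Or.inl ⟨hr0, h0⟩
    · cases s with
      | true => exact Or.inl ⟨hrs, hs⟩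
      | false => exact Or.inr ⟨hs, hrs⟩
    · cases t with
      | true => exact Or.inl ⟨hrt, ht⟩
      | false => exact Or.inr ⟨ht, hrt⟩
  -- Pigeonhole: 17 points, only 16 signatures.
  obtain ⟨p, hp, q, hq, hpq, hg⟩ :=
    Finset.exists_ne_map_eq_of_card_lt_of_maps_to
      (s := A) (t := (Finset.univ : Finset (Bool × Bool → Bool)))
      (by rw [hcard, Finset.card_univ]; decide)
      (fun a _ => Finset.mem_univ (gAux A a))
  have h0 := hgen p (hAY hp) q (hAY hq) hpq 0
  rcases h0.lt_or_gt with hlt | hlt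
  · exact main p hp q hq hlt hg
  · exact main q hq p hp hlt hg.symm
end

section
/- Every complete 8-partite graph is a subgraph of some box graph: for all natural numbers n₁, …, n₈ there exist a generic finite set Y ⊂ ℝ³ and pairwise disjoint subsets X₁, …, X₈ with Y = X₁ ∪ … ∪ X₈ and |Xᵢ| = nᵢ such that any two points lying in different sets Xᵢ, Xⱼ (i ≠ j) span an empty box. -/
open scoped Classical

namespace Box8Aux

/-- Centers of the 8 clusters: each column is a permutation of {0,…,7}, and the
8 centers form a complete box graph. -/
def Mt : Fin 8 → Fin 3 → ℤ :=
  ![![0,1,3], ![1,0,2], ![2,3,1], ![3,7,6], ![4,2,0], ![5,6,7], ![6,4,5], ![7,5,4]]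

/-- Direction (sign vector) of the line on which cluster `i` lies. -/
def Tt : Fin 8 → Fin 3 → ℤ :=
  ![![1,-1,1], ![1,-1,1], ![1,-1,1], ![1,1,-1], ![1,-1,1], ![1,1,-1], ![1,-1,1], ![1,-1,1]]

lemma factA : ∀ c : Fin 3, ∀ i j : Fin 8, i ≠ j → Mt i c ≠ Mt j c := by decide

lemma factB : ∀ i j k : Fin 8, i ≠ j → k ≠ i → k ≠ j →
    ∃ c, (Mt k c < Mt i c ∧ Mt k c < Mt j c) ∨ (Mt i c < Mt k c ∧ Mt j c < Mt k c) := by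
  decide

lemma factC1 : ∀ i j : Fin 8, i ≠ j →
    ∃ c, (Mt i c < Mt j c ∧ Tt i c = -1) ∨ (Mt j c < Mt i c ∧ Tt i c = 1) := by decide

lemma factC2 : ∀ i j : Fin 8, i ≠ j →
    ∃ c, (Mt i c < Mt j c ∧ Tt i c = 1) ∨ (Mt j c < Mt i c ∧ Tt i c = -1) := by decide

lemma factD : ∀ i : Fin 8, ∀ c : Fin 3, Tt i c = 1 ∨ Tt i c = -1 := by decide

/-- The point with index `t` in cluster `i` (with `N` the total number of points). -/
noncomputable def pt (N : ℕ) (i : Fin 8) (t : ℕ) : Fin 3 → ℝ :=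
  fun c => (Mt i c : ℝ) + (Tt i c : ℝ) * (((t : ℝ) + 1) / (2 * (N : ℝ) + 2))

variable {N : ℕ}

lemma denom_pos : (0 : ℝ) < 2 * (N : ℝ) + 2 := by positivity

lemma frac_pos {t : ℕ} : 0 < ((t : ℝ) + 1) / (2 * (N : ℝ) + 2) := by positivity

lemma frac_lt_half {t : ℕ} (ht : t < N) : ((t : ℝ) + 1) / (2 * (N : ℝ) + 2) < 1 / 2 := by
  rw [div_lt_iff₀ (by positivity)]
  have : (t : ℝ) + 1 ≤ (N : ℝ) := by exact_mod_cast Nat.succ_le_of_lt ht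
  linarith

lemma frac_mono {t u : ℕ} (h : t < u) :
    ((t : ℝ) + 1) / (2 * (N : ℝ) + 2) < ((u : ℝ) + 1) / (2 * (N : ℝ) + 2) := by
  have h' : (t : ℝ) < (u : ℝ) := by exact_mod_cast h
  have hD : (0 : ℝ) < 2 * (N : ℝ) + 2 := by positivity
  rw [div_lt_div_iff₀ hD hD]
  nlinarith

lemma pt_near {i : Fin 8} {c : Fin 3} {t : ℕ} (ht : t < N) :
    (Mt i c : ℝ) - 1 / 2 < pt N i t c ∧ pt N i t c < (Mt i c : ℝ) + 1 / 2 := by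
  have h1 : 0 < ((t : ℝ) + 1) / (2 * (N : ℝ) + 2) := frac_pos
  have h2 : ((t : ℝ) + 1) / (2 * (N : ℝ) + 2) < 1 / 2 := frac_lt_half ht
  rcases factD i c with h | h <;> simp only [pt, h] <;> push_cast <;>
    constructor <;> linarith

lemma int_gap {a b : ℤ} (h : a < b) : (a : ℝ) + 1 ≤ (b : ℝ) := by
  exact_mod_cast Int.add_one_le_iff.mpr h

lemma pt_pos_form {i : Fin 8} {c : Fin 3} {t : ℕ} (h : Tt i c = 1) :
    pt N i t c = (Mt i c : ℝ) + ((t : ℝ) + 1) / (2 * (N : ℝ) + 2) := by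
  simp [pt, h]

lemma pt_neg_form {i : Fin 8} {c : Fin 3} {t : ℕ} (h : Tt i c = -1) :
    pt N i t c = (Mt i c : ℝ) - ((t : ℝ) + 1) / (2 * (N : ℝ) + 2) := by
  simp [pt, h]; ring

/-- Distinct valid points differ in every coordinate. -/
lemma pt_coord_ne {i j : Fin 8} {t u : ℕ} (ht : t < N) (hu : u < N)
    (h : i ≠ j ∨ t ≠ u) (c : Fin 3) : pt N i t c ≠ pt N j u c := by
  rcases eq_or_ne i j with rfl | hij
  · have htu : t ≠ u := h.resolve_left (by simp)
    rcases factD i c with hT | hT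
    · rw [pt_pos_form hT, pt_pos_form hT]
      rcases lt_or_gt_of_ne htu with h' | h'
      · exact ne_of_lt (by have := frac_mono (N := N) h'; linarith)
      · exact ne_of_gt (by have := frac_mono (N := N) h'; linarith)
    · rw [pt_neg_form hT, pt_neg_form hT]
      rcases lt_or_gt_of_ne htu with h' | h'
      · exact ne_of_gt (by have := frac_mono (N := N) h'; linarith)
      · exact ne_of_lt (by have := frac_mono (N := N) h'; linarith)
  · have hM := factA c i j hij
    have hi := pt_near (i := i) (c := c) ht
    have hj := pt_near (i := j) (c := c) hu
    rcases lt_or_gt_of_ne hM with h' | h'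
    · exact ne_of_lt (by have := int_gap h'; linarith [hi.2, hj.1])
    · exact ne_of_gt (by have := int_gap h'; linarith [hi.1, hj.2])

/-- A point from a third cluster never blocks. -/
lemma not_block_other {i j k : Fin 8} (hij : i ≠ j) (hki : k ≠ i) (hkj : k ≠ j)
    {t u v : ℕ} (ht : t < N) (hu : u < N) (hv : v < N) :
    ¬ ∀ c, min (pt N i t c) (pt N j u c) < pt N k v c ∧
        pt N k v c < max (pt N i t c) (pt N j u c) := by
  obtain ⟨c, hc⟩ := factB i j k hij hki hkj
  intro h
  have hc' := h c
  have hi := pt_near (i := i) (c := c) ht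
  have hj := pt_near (i := j) (c := c) hu
  have hk := pt_near (i := k) (c := c) hv
  rcases hc with ⟨h1, h2⟩ | ⟨h1, h2⟩
  · have e1 := int_gap h1
    have e2 := int_gap h2
    have : pt N k v c < min (pt N i t c) (pt N j u c) :=
      lt_min (by linarith [hi.1, hk.2]) (by linarith [hj.1, hk.2])
    linarith [hc'.1]
  · have e1 := int_gap h1
    have e2 := int_gap h2
    have : max (pt N i t c) (pt N j u c) < pt N k v c :=
      max_lt (by linarith [hi.2, hk.1]) (by linarith [hj.2, hk.1])
    linarith [hc'.2]

/-- A point from cluster `i` itself never blocks a pair `(p,q)` with `p` in cluster `i`,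
`q` in cluster `j ≠ i`. -/
lemma not_block_self {i j : Fin 8} (hij : i ≠ j)
    {t u v : ℕ} (ht : t < N) (hu : u < N) (hv : v < N) :
    ¬ ∀ c, min (pt N i t c) (pt N j u c) < pt N i v c ∧
        pt N i v c < max (pt N i t c) (pt N j u c) := by
  rcases eq_or_ne v t with rfl | hvt
  · intro h
    have hc := h 0
    rcases le_or_gt (pt N i v 0) (pt N j u 0) with h' | h'
    · rw [min_eq_left h'] at hc; exact lt_irrefl _ hc.1
    · rw [max_eq_left h'.le] at hc; exact lt_irrefl _ hc.2
  intro h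
  rcases lt_or_gt_of_ne hvt with hlt | hgt
  · -- v < t : use factC2
    obtain ⟨c, hc⟩ := factC2 i j hij
    have hc' := h c
    have hj' := pt_near (i := j) (c := c) hu
    have hf := frac_mono (N := N) hlt
    have hfp : 0 < ((v : ℝ) + 1) / (2 * (N : ℝ) + 2) := frac_pos
    have hfh : ((t : ℝ) + 1) / (2 * (N : ℝ) + 2) < 1 / 2 := frac_lt_half ht
    have hfhv : ((v : ℝ) + 1) / (2 * (N : ℝ) + 2) < 1 / 2 := frac_lt_half hv
    rcases hc with ⟨hM, hT⟩ | ⟨hM, hT⟩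
    · have e := int_gap hM
      have ep : pt N i t c = (Mt i c : ℝ) + ((t : ℝ) + 1) / (2 * (N : ℝ) + 2) :=
        pt_pos_form hT
      have ez : pt N i v c = (Mt i c : ℝ) + ((v : ℝ) + 1) / (2 * (N : ℝ) + 2) :=
        pt_pos_form hT
      have hz : pt N i v c < min (pt N i t c) (pt N j u c) :=
        lt_min (by linarith) (by linarith [hj'.1])
      linarith [hc'.1]
    · have e := int_gap hM
      have ep : pt N i t c = (Mt i c : ℝ) - ((t : ℝ) + 1) / (2 * (N : ℝ) + 2) :=
        pt_neg_form hT
      have ez : pt N i v c = (Mt i c : ℝ) - ((v : ℝ) + 1) / (2 * (N : ℝ) + 2) :=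
        pt_neg_form hT
      have hz : max (pt N i t c) (pt N j u c) < pt N i v c :=
        max_lt (by linarith) (by linarith [hj'.2])
      linarith [hc'.2]
  · -- v > t : use factC1
    obtain ⟨c, hc⟩ := factC1 i j hij
    have hc' := h c
    have hj' := pt_near (i := j) (c := c) hu
    have hf := frac_mono (N := N) hgt
    have hfp : 0 < ((t : ℝ) + 1) / (2 * (N : ℝ) + 2) := frac_pos
    have hfh : ((v : ℝ) + 1) / (2 * (N : ℝ) + 2) < 1 / 2 := frac_lt_half hv
    have hfht : ((t : ℝ) + 1) / (2 * (N : ℝ) + 2) < 1 / 2 := frac_lt_half ht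
    rcases hc with ⟨hM, hT⟩ | ⟨hM, hT⟩
    · have e := int_gap hM
      have ep : pt N i t c = (Mt i c : ℝ) - ((t : ℝ) + 1) / (2 * (N : ℝ) + 2) :=
        pt_neg_form hT
      have ez : pt N i v c = (Mt i c : ℝ) - ((v : ℝ) + 1) / (2 * (N : ℝ) + 2) :=
        pt_neg_form hT
      have hz : pt N i v c < min (pt N i t c) (pt N j u c) :=
        lt_min (by linarith) (by linarith [hj'.1])
      linarith [hc'.1]
    · have e := int_gap hM
      have ep : pt N i t c = (Mt i c : ℝ) + ((t : ℝ) + 1) / (2 * (N : ℝ) + 2) :=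
        pt_pos_form hT
      have ez : pt N i v c = (Mt i c : ℝ) + ((v : ℝ) + 1) / (2 * (N : ℝ) + 2) :=
        pt_pos_form hT
      have hz : max (pt N i t c) (pt N j u c) < pt N i v c :=
        max_lt (by linarith) (by linarith [hj'.2])
      linarith [hc'.2]

end Box8Aux

theorem complete_8partite_subgraph_of_boxGraph (n : Fin 8 → ℕ) :
    ∃ (Y : Finset (Fin 3 → ℝ)) (X : Fin 8 → Finset (Fin 3 → ℝ)),
      Generic3 Y ∧
      (∀ i j, i ≠ j → Disjoint (X i) (X j)) ∧
      Y = Finset.univ.biUnion X ∧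
      (∀ i, (X i).card = n i) ∧
      ∀ i j, i ≠ j → ∀ p ∈ X i, ∀ q ∈ X j, SpansEmptyBox Y p q := by
  classical
  set N : ℕ := ∑ i, n i with hN
  have hle : ∀ i, n i ≤ N := by
    intro i
    exact Finset.single_le_sum (fun j _ => Nat.zero_le (n j)) (Finset.mem_univ i)
  set X : Fin 8 → Finset (Fin 3 → ℝ) :=
    fun i => (Finset.range (n i)).image (Box8Aux.pt N i) with hX
  set Y : Finset (Fin 3 → ℝ) := Finset.univ.biUnion X with hY
  have memY : ∀ y ∈ Y, ∃ k, ∃ v < n k, y = Box8Aux.pt N k v := by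
    intro y hy
    rw [hY, Finset.mem_biUnion] at hy
    obtain ⟨k, -, hk⟩ := hy
    rw [hX] at hk
    obtain ⟨v, hv, hv'⟩ := Finset.mem_image.mp hk
    exact ⟨k, v, Finset.mem_range.mp hv, hv'.symm⟩
  have bound : ∀ {k : Fin 8} {v : ℕ}, v < n k → v < N :=
    fun {k v} h => lt_of_lt_of_le h (hle k)
  have ptne : ∀ {i j : Fin 8} {t u : ℕ}, t < n i → u < n j → (i ≠ j ∨ t ≠ u) →
      Box8Aux.pt N i t ≠ Box8Aux.pt N j u := by
    intro i j t u ht hu h heq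
    exact Box8Aux.pt_coord_ne (bound ht) (bound hu) h 0 (congrFun heq 0)
  refine ⟨Y, X, ?_, ?_, rfl, ?_, ?_⟩
  · -- Generic3
    intro p hp q hq hpq c
    obtain ⟨i, t, ht, rfl⟩ := memY p hp
    obtain ⟨j, u, hu, rfl⟩ := memY q hq
    have h : i ≠ j ∨ t ≠ u := by
      by_contra hcon
      push_neg at hcon
      exact hpq (by rw [hcon.1, hcon.2])
    exact Box8Aux.pt_coord_ne (bound ht) (bound hu) h c
  · -- disjoint
    intro i j hij
    rw [Finset.disjoint_left]
    intro a hai haj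
    rw [hX] at hai haj
    obtain ⟨t, ht, rfl⟩ := Finset.mem_image.mp hai
    obtain ⟨u, hu, hu'⟩ := Finset.mem_image.mp haj
    exact ptne (Finset.mem_range.mp hu) (Finset.mem_range.mp ht) (Or.inl hij.symm) hu'
  · -- cards
    intro i
    rw [hX]
    rw [Finset.card_image_of_injOn, Finset.card_range]
    intro t ht u hu heq
    by_contra htu
    exact ptne (Finset.mem_range.mp ht) (Finset.mem_range.mp hu) (Or.inr htu) heq
  · -- empty boxes
    intro i j hij p hp q hq
    rw [hX] at hp hq
    obtain ⟨t, ht, rfl⟩ := Finset.mem_image.mp hp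
    obtain ⟨u, hu, rfl⟩ := Finset.mem_image.mp hq
    have ht := Finset.mem_range.mp ht
    have hu := Finset.mem_range.mp hu
    intro z hz
    obtain ⟨k, v, hv, rfl⟩ := memY z hz
    by_cases hki : k = i
    · subst hki
      exact Box8Aux.not_block_self hij (bound ht) (bound hu) (bound hv)
    · by_cases hkj : k = j
      · subst hkj
        intro h
        refine Box8Aux.not_block_self hij.symm (bound hu) (bound ht) (bound hv) ?_
        intro c
        rw [min_comm, max_comm]
        exact h c
      · exact Box8Aux.not_block_other hij hki hkj (bound ht) (bound hu) (bound hv)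
end
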